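/- arXiv:2508.13988 — 3 statements merged into one kernel-verified Lean document; each statement's English description precedes it below -/
import Mathlib

section
/- In a d-complete poset, two distinct elements of the same diagonal are never adjacent; that is, neither covers the other. -/
variable {P : Type*} [PartialOrder P]

/-- A subset `S` of a poset is convex if it contains every element lying
between two of its elements. -/
def IsConvexSet (S : Set P) : Prop :=
  ∀ a ∈ S, ∀ b ∈ S, ∀ x, a ≤ x → x ≤ b → x ∈ S

/-- `S` has the structure of (an order ideal of) `d_k(1)` with side elements `w`, `z`:
`w` and `z` are incomparable, every other element of `S` lies below both or above
both of them, the elements below them (the tail) form a chain of `k - 2` elements,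
and the elements above them (the neck) form a chain. -/
def DkStruct (k : ℕ) (S : Set P) (w z : P) : Prop :=
  3 ≤ k ∧ w ∈ S ∧ z ∈ S ∧ ¬ w ≤ z ∧ ¬ z ≤ w ∧
  (∀ x ∈ S, x = w ∨ x = z ∨ (x ≤ w ∧ x ≤ z) ∨ (w ≤ x ∧ z ≤ x)) ∧
  IsChain (· ≤ ·) {x ∈ S | x ≤ w ∧ x ≤ z} ∧
  IsChain (· ≤ ·) {x ∈ S | w ≤ x ∧ z ≤ x} ∧
  {x ∈ S | x ≤ w ∧ x ≤ z}.ncard = k - 2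

/-- The interval `[a, b]` is a `d_k`-interval (isomorphic to `d_k(1)`)
with side elements `w` and `z`. -/
def IsDkIntervalWith (k : ℕ) (a b w z : P) : Prop :=
  a ≤ b ∧ DkStruct k (Set.Icc a b) w z ∧
    {x ∈ Set.Icc a b | w ≤ x ∧ z ≤ x}.ncard = k - 2

/-- The interval `[a, b]` is a `d_k`-interval. -/
def IsDkInterval (k : ℕ) (a b : P) : Prop := ∃ w z, IsDkIntervalWith k a b w z

/-- The interval `[a, b]` is a `d`-interval. -/
def IsDInterval (a b : P) : Prop := ∃ k, IsDkInterval k a b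

/-- The interval `[a, b]` is a `d`-interval with side elements `w` and `z`. -/
def IsDIntervalWith (a b w z : P) : Prop := ∃ k, IsDkIntervalWith k a b w z

/-- `p` is a neck element of the `d`-interval `[a, b]`. -/
def IsNeckOf (p a b : P) : Prop :=
  ∃ k w z, IsDkIntervalWith k a b w z ∧ p ∈ Set.Icc a b ∧ w ≤ p ∧ z ≤ p

/-- `p` is a tail element of the `d`-interval `[a, b]`. -/
def IsTailOf (p a b : P) : Prop :=
  ∃ k w z, IsDkIntervalWith k a b w z ∧ p ∈ Set.Icc a b ∧ p ≤ w ∧ p ≤ z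

/-- `S` is a `d_k^-`-convex set: a convex subset isomorphic to `d_k(1)` minus
its maximum (so the neck has `k - 3` elements). -/
def IsDkMinusConvex (k : ℕ) (S : Set P) : Prop :=
  IsConvexSet S ∧ ∃ w z, DkStruct k S w z ∧
    {x ∈ S | w ≤ x ∧ z ≤ x}.ncard = k - 3

/-- Proctor's axioms for a d-complete poset:
(1) every `d_k^-`-convex set can be completed above to a `d_k`-interval;
(2) the maximum of any `d`-interval covers no element outside the interval;
(3) no two `d^-`-convex sets differ only in their minimal elements. -/
def IsDComplete (P : Type*) [PartialOrder P] : Prop :=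
  (∀ (k : ℕ) (S : Set P), IsDkMinusConvex k S →
      ∃ z, z ∉ S ∧ ∃ a, IsDkInterval k a z ∧ Set.Icc a z = insert z S) ∧
  (∀ a b : P, IsDInterval a b → ∀ x, x ⋖ b → x ∈ Set.Icc a b) ∧
  (∀ (k k' : ℕ) (S T : Set P), IsDkMinusConvex k S → IsDkMinusConvex k' T →
      ∀ s ∈ S, ∀ t ∈ T, (∀ x ∈ S, s ≤ x) → (∀ x ∈ T, t ≤ x) →
        S \ {s} = T \ {t} → S = T)

/-- Two elements are in the same diagonal: the equivalence relation generated by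
`p ∼ q` whenever `[p, q]` is a `d`-interval. -/
def DiagRel {P : Type*} [PartialOrder P] (a b : P) : Prop :=
  Relation.EqvGen (fun x y => IsDInterval x y) a b

/-- The setoid on `P` whose classes are the diagonals. -/
def diagSetoid (P : Type*) [PartialOrder P] : Setoid P :=
  ⟨DiagRel, Relation.EqvGen.is_equivalence _⟩

/-- `h` is the hook-vector function of the d-complete poset `P`, indexed by
diagonals (the quotient of `P` by `DiagRel`): if `p` is not a neck element of any
`d`-interval then `h p D` counts the elements of the diagonal `D` weakly below `p`;
and if `[p', p]` is a `d`-interval with side elements `w`, `z`, then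
`h p = h w + h z - h p'`. -/
def IsHookVector {P : Type*} [PartialOrder P]
    (h : P → Quotient (diagSetoid P) → ℤ) : Prop :=
  (∀ p : P, (¬ ∃ a b : P, IsNeckOf p a b) → ∀ D,
      h p D = ({r : P | Quotient.mk (diagSetoid P) r = D ∧ r ≤ p}).ncard) ∧
  (∀ p' p w z : P, IsDIntervalWith p' p w z → ∀ D,
      h p D = h w D + h z D - h p' D)

/-- A linear extension of `P`, as an enumeration `e 0 > e 1 > ⋯` refining the
partial order: each initial segment is an upper set. -/
def IsLinExt {P : Type*} [PartialOrder P] [Fintype P]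
    (e : Fin (Fintype.card P) ≃ P) : Prop :=
  ∀ i j, e i < e j → j < i

open scoped Classical in
/-- length of longest cover-chain going up from `p` -/
noncomputable def dN {P : Type*} [PartialOrder P] [Fintype P] (p : P) : ℕ :=
  (Finset.univ.filter fun q => p ⋖ q).attach.sup
    (fun q => dN q.1 + 1)
termination_by (Finset.univ.filter fun x => p < x).card
decreasing_by
  · refine Finset.card_lt_card ⟨fun x hx => ?_, fun hsub => ?_⟩
    · simp only [Finset.mem_filter, Finset.mem_univ, true_and] at hx ⊢
      have hcov : p ⋖ q.1 := by
        have := q.2; simp only [Finset.mem_filter, Finset.mem_univ, true_and] at this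
        exact this
      exact hcov.lt.trans hx
    · have hcov : p ⋖ q.1 := by
        have := q.2; simp only [Finset.mem_filter, Finset.mem_univ, true_and] at this
        exact this
      have h1 : q.1 ∈ Finset.univ.filter fun x => p < x := by
        simp [hcov.lt]
      have h2 := hsub h1
      simp at h2

section Graded
variable [Fintype P]

open scoped Classical in
lemma dN_eq (p : P) :
    dN p = (Finset.univ.filter fun q => p ⋖ q).attach.sup (fun q => dN q.1 + 1) := by
  rw [dN]

open scoped Classical in
/-- If all upper covers of `p` have the same `dN`, then `dN p = dN q + 1` for any
upper cover `q`. -/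
lemma dN_cover_of_eq {p q : P}
    (hA : ∀ s t : P, p ⋖ s → p ⋖ t → dN s = dN t) (hq : p ⋖ q) :
    dN p = dN q + 1 := by
  rw [dN_eq]
  apply le_antisymm
  · apply Finset.sup_le
    intro c _
    have hc : p ⋖ c.1 := by
      have := c.2; simp only [Finset.mem_filter, Finset.mem_univ, true_and] at this
      exact this
    rw [hA c.1 q hc hq]
  · have hqmem : q ∈ Finset.univ.filter fun r => p ⋖ r := by simp [hq]
    exact Finset.le_sup (f := fun c : {c // c ∈ Finset.univ.filter fun r => p ⋖ r} =>
      dN c.1 + 1) (b := ⟨q, hqmem⟩) (Finset.mem_attach _ _)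

/-- The upward diamond lemma in a d-complete poset. -/
lemma diamond (hP : IsDComplete P) {x w z : P} (hw : x ⋖ w) (hz : x ⋖ z)
    (hne : w ≠ z) : ∃ y : P, w ⋖ y ∧ z ⋖ y := by
  have hwz : ¬ w ≤ z := by
    intro h
    exact hz.2 hw.lt (lt_of_le_of_ne h hne)
  have hzw : ¬ z ≤ w := by
    intro h
    exact hw.2 hz.lt (lt_of_le_of_ne h (Ne.symm hne))
  set S : Set P := {x, w, z} with hS
  have hxS : x ∈ S := Set.mem_insert _ _
  have hwS : w ∈ S := by simp [hS]
  have hzS : z ∈ S := by simp [hS]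
  have hmem : ∀ t : P, t ∈ S ↔ t = x ∨ t = w ∨ t = z := by
    intro t; simp [hS]
  have hconv : IsConvexSet S := by
    intro u hu v hv t hut htv
    rw [hmem] at hu hv ⊢
    rcases hu with h | h | h <;> rcases hv with h' | h' | h' <;>
      rw [h] at hut <;> rw [h'] at htv
    · exact Or.inl (le_antisymm htv hut)
    · rcases eq_or_lt_of_le hut with h1 | h1
      · exact Or.inl h1.symm
      · rcases eq_or_lt_of_le htv with h2 | h2
        · exact Or.inr (Or.inl h2)
        · exact absurd h2 (hw.2 h1)
    · rcases eq_or_lt_of_le hut with h1 | h1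
      · exact Or.inl h1.symm
      · rcases eq_or_lt_of_le htv with h2 | h2
        · exact Or.inr (Or.inr h2)
        · exact absurd h2 (hz.2 h1)
    · exact absurd (hut.trans htv) (not_le_of_gt hw.lt)
    · exact Or.inr (Or.inl (le_antisymm htv hut))
    · exact absurd (hut.trans htv) hwz
    · exact absurd (hut.trans htv) (not_le_of_gt hz.lt)
    · exact absurd (hut.trans htv) hzw
    · exact Or.inr (Or.inr (le_antisymm htv hut))
  have htail : {t ∈ S | t ≤ w ∧ t ≤ z} = {x} := by
    ext t
    simp only [Set.mem_setOf_eq, Set.mem_singleton_iff]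
    constructor
    · rintro ⟨ht, h1, h2⟩
      rcases (hmem t).1 ht with h | h | h
      · exact h
      · rw [h] at h2; exact absurd h2 hwz
      · rw [h] at h1; exact absurd h1 hzw
    · rintro rfl
      exact ⟨hxS, hw.le, hz.le⟩
  have hneck : {t ∈ S | w ≤ t ∧ z ≤ t} = (∅ : Set P) := by
    ext t
    simp only [Set.mem_setOf_eq, Set.mem_empty_iff_false, iff_false]
    rintro ⟨ht, h1, h2⟩
    rcases (hmem t).1 ht with h | h | h
    · rw [h] at h1; exact absurd h1 (not_le_of_gt hw.lt)
    · rw [h] at h2; exact hzw h2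
    · rw [h] at h1; exact hwz h1
  have hDk : DkStruct 3 S w z := by
    refine ⟨le_refl 3, hwS, hzS, hwz, hzw, ?_, ?_, ?_, ?_⟩
    · intro t ht
      rcases (hmem t).1 ht with h | h | h
      · rw [h]; exact Or.inr (Or.inr (Or.inl ⟨hw.le, hz.le⟩))
      · exact Or.inl h
      · exact Or.inr (Or.inl h)
    · rw [htail]; exact Set.subsingleton_singleton.isChain
    · rw [hneck]; exact Set.subsingleton_empty.isChain
    · rw [htail]; simp
  have hminus : IsDkMinusConvex 3 S := by
    refine ⟨hconv, w, z, hDk, ?_⟩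
    rw [hneck]; simp
  obtain ⟨y, hyS, a, ⟨w', z', hInt⟩, hIcc⟩ := hP.1 3 S hminus
  have hay : a ≤ y := hInt.1
  have hcov : ∀ u : P, u ∈ S → x ⋖ u → u ⋖ y := by
    intro u huS hxu
    have huIcc : u ∈ Set.Icc a y := by rw [hIcc]; exact Set.mem_insert_of_mem _ huS
    have huy : u < y := lt_of_le_of_ne huIcc.2 (by rintro rfl; exact hyS huS)
    refine ⟨huy, ?_⟩
    intro t hut hty
    have htIcc : t ∈ Set.Icc a y := ⟨huIcc.1.trans hut.le, hty.le⟩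
    rw [hIcc] at htIcc
    rcases htIcc with h | ht
    · exact absurd h (ne_of_lt hty)
    · rcases (hmem t).1 ht with h | h | h
      · rw [h] at hut; exact absurd (hxu.lt.trans hut) (lt_irrefl _)
      · rw [h] at hut
        rcases (hmem u).1 huS with h' | h' | h'
        · rw [h'] at hxu; exact lt_irrefl x hxu.lt
        · rw [h'] at hut; exact lt_irrefl _ hut
        · rw [h'] at hut; exact hzw hut.le
      · rw [h] at hut
        rcases (hmem u).1 huS with h' | h' | h'
        · rw [h'] at hxu; exact lt_irrefl x hxu.lt
        · rw [h'] at hut; exact hwz hut.le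
        · rw [h'] at hut; exact lt_irrefl _ hut
  exact ⟨y, hcov w hwS hw, hcov z hzS hz⟩

open scoped Classical in
lemma upset_card_lt {p q : P} (h : p ⋖ q) :
    (Finset.univ.filter fun x => q < x).card < (Finset.univ.filter fun x => p < x).card := by
  refine Finset.card_lt_card ⟨fun x hx => ?_, fun hsub => ?_⟩
  · simp only [Finset.mem_filter, Finset.mem_univ, true_and] at hx ⊢
    exact h.lt.trans hx
  · have h1 : q ∈ Finset.univ.filter fun x => p < x := by simp [h.lt]
    have h2 := hsub h1
    simp at h2

open scoped Classical in
lemma dN_covers_eq (hP : IsDComplete P) :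
    ∀ n : ℕ, ∀ p : P, (Finset.univ.filter fun x => p < x).card ≤ n →
      ∀ q r : P, p ⋖ q → p ⋖ r → dN q = dN r := by
  intro n
  induction n using Nat.strong_induction_on with
  | _ n ih =>
    intro p hp q r hq hr
    rcases eq_or_ne q r with rfl | hne
    · rfl
    obtain ⟨y, hqy, hry⟩ := diamond hP hq hr hne
    have hAq : ∀ s t : P, q ⋖ s → q ⋖ t → dN s = dN t := by
      intro s t
      exact ih _ (lt_of_lt_of_le (upset_card_lt hq) hp) q le_rfl s t
    have hAr : ∀ s t : P, r ⋖ s → r ⋖ t → dN s = dN t := by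
      intro s t
      exact ih _ (lt_of_lt_of_le (upset_card_lt hr) hp) r le_rfl s t
    rw [dN_cover_of_eq hAq hqy, dN_cover_of_eq hAr hry]

/-- In a d-complete poset, `dN` drops by exactly one along covers. -/
lemma dN_cover (hP : IsDComplete P) {p q : P} (h : p ⋖ q) : dN p = dN q + 1 :=
  dN_cover_of_eq (fun s t => dN_covers_eq hP _ p le_rfl s t) h

/-- If `[x,y]` is a chain with `n` elements then `dN x = dN y + (n-1)`. -/
lemma dN_chain_icc (hP : IsDComplete P) :
    ∀ n : ℕ, ∀ x y : P, x ≤ y → IsChain (· ≤ ·) (Set.Icc x y) →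
      (Set.Icc x y).ncard = n → dN x = dN y + (n - 1) := by
  intro n
  induction n using Nat.strong_induction_on with
  | _ n ih =>
    intro x y hxy hchain hcard
    rcases eq_or_ne x y with rfl | hne
    · have h1 : (Set.Icc x x).ncard = 1 := by
        rw [Set.Icc_self]; exact Set.ncard_singleton x
      rw [h1] at hcard
      subst hcard
      simp
    · classical
      set S' : Set P := Set.Icc x y \ {x} with hS'
      have hS'fin : S'.Finite := Set.toFinite _
      have hyS' : y ∈ S' := ⟨⟨hxy, le_refl y⟩, by simp [Ne.symm hne]⟩
      have hyF : y ∈ hS'fin.toFinset := hS'fin.mem_toFinset.2 hyS'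
      have hne' : hS'fin.toFinset.Nonempty := ⟨y, hyF⟩
      obtain ⟨c, hcmem, hcmin⟩ := hS'fin.toFinset.exists_minimal hne'
      rw [hS'fin.mem_toFinset] at hcmem
      have hcIcc : c ∈ Set.Icc x y := hcmem.1
      have hcx : x < c := lt_of_le_of_ne hcIcc.1 (by
        rintro rfl; exact hcmem.2 rfl)
      have hcle : ∀ t ∈ S', c ≤ t := by
        intro t ht
        rcases hchain.total (Set.mem_of_mem_diff ht) hcIcc with h | h
        · have : ¬ t < c := fun hlt => not_le_of_gt hlt (hcmin (hS'fin.mem_toFinset.2 ht) hlt.le)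
          rcases eq_or_lt_of_le h with h' | hlt
          · exact le_of_eq h'.symm
          · exact absurd hlt this
        · exact h
      have hcov : x ⋖ c := by
        refine ⟨hcx, ?_⟩
        intro t hxt htc
        have htS' : t ∈ S' := ⟨⟨hxt.le, htc.le.trans hcIcc.2⟩, ne_of_gt hxt⟩
        exact absurd htc (not_lt_of_ge (hcle t htS'))
      have hIccEq : Set.Icc c y = S' := by
        ext t
        constructor
        · intro ht
          exact ⟨⟨hcIcc.1.trans ht.1, ht.2⟩, by
            rintro rfl; exact absurd ht.1 (not_le_of_gt hcx)⟩
        · intro ht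
          exact ⟨hcle t ht, ht.1.2⟩
      have hcard' : (Set.Icc c y).ncard = n - 1 := by
        rw [hIccEq, hS', Set.ncard_diff_singleton_of_mem (show x ∈ Set.Icc x y from ⟨le_refl x, hxy⟩), hcard]
      have hn1 : 1 ≤ n - 1 := by
        have hnon : (Set.Icc c y).Nonempty := ⟨y, hcIcc.2, le_refl y⟩
        have := (Set.ncard_pos (Set.toFinite _)).2 hnon
        omega
      have hrec := ih (n - 1) (by omega) c y hcIcc.2
        (IsChain.mono (Set.Icc_subset_Icc_left hcIcc.1) hchain) hcard'
      rw [dN_cover hP hcov, hrec]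
      omega

/-- The key parity fact: across a `d_k`-interval, `dN` changes by `2(k-2)`. -/
lemma dN_dkinterval (hP : IsDComplete P) {k : ℕ} {a b w z : P}
    (h : IsDkIntervalWith k a b w z) : dN a = dN b + 2 * (k - 2) := by
  obtain ⟨hab, ⟨hk3, hwS, hzS, hwz, hzw, hclass, htailchain, hneckchain, htailcard⟩,
    hneckcard⟩ := h
  have haw : a ≤ w := hwS.1
  have hwb : w ≤ b := hwS.2
  have hwT : w ∉ {t ∈ Set.Icc a b | t ≤ w ∧ t ≤ z} := fun hw => hwz hw.2.2
  have hwN : w ∉ {t ∈ Set.Icc a b | w ≤ t ∧ z ≤ t} := fun hw => hzw hw.2.2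
  have hIccaw : Set.Icc a w = insert w {t ∈ Set.Icc a b | t ≤ w ∧ t ≤ z} := by
    ext t
    constructor
    · rintro ⟨hat, htw⟩
      have htI : t ∈ Set.Icc a b := ⟨hat, htw.trans hwb⟩
      rcases hclass t htI with h | h | ⟨h1, h2⟩ | ⟨h1, h2⟩
      · rw [h]; exact Set.mem_insert _ _
      · rw [h] at htw; exact absurd htw hzw
      · exact Set.mem_insert_of_mem _ ⟨htI, h1, h2⟩
      · exact absurd (h2.trans htw) hzw
    · rintro (h | ht)
      · rw [h]; exact ⟨haw, le_refl w⟩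
      · exact ⟨ht.1.1, ht.2.1⟩
  have hIccwb : Set.Icc w b = insert w {t ∈ Set.Icc a b | w ≤ t ∧ z ≤ t} := by
    ext t
    constructor
    · rintro ⟨hwt, htb⟩
      have htI : t ∈ Set.Icc a b := ⟨haw.trans hwt, htb⟩
      rcases hclass t htI with h | h | ⟨h1, h2⟩ | ⟨h1, h2⟩
      · rw [h]; exact Set.mem_insert _ _
      · rw [h] at hwt; exact absurd hwt hwz
      · exact absurd (hwt.trans h2) hwz
      · exact Set.mem_insert_of_mem _ ⟨htI, h1, h2⟩
    · rintro (h | ht)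
      · rw [h]; exact ⟨le_refl w, hwb⟩
      · exact ⟨ht.2.1, ht.1.2⟩
  have hchainaw : IsChain (· ≤ ·) (Set.Icc a w) := by
    rw [hIccaw]
    exact htailchain.insert (fun t ht _ => Or.inr ht.2.1)
  have hchainwb : IsChain (· ≤ ·) (Set.Icc w b) := by
    rw [hIccwb]
    exact hneckchain.insert (fun t ht _ => Or.inl ht.2.1)
  have hcardaw : (Set.Icc a w).ncard = k - 1 := by
    rw [hIccaw, Set.ncard_insert_of_notMem hwT (Set.toFinite _), htailcard]
    omega
  have hcardwb : (Set.Icc w b).ncard = k - 1 := by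
    rw [hIccwb, Set.ncard_insert_of_notMem hwN (Set.toFinite _), hneckcard]
    omega
  have h1 := dN_chain_icc hP (k - 1) a w haw hchainaw hcardaw
  have h2 := dN_chain_icc hP (k - 1) w b hwb hchainwb hcardwb
  rw [h1, h2]
  omega

/-- `dN` parity is constant on diagonals. -/
lemma dN_parity_diag (hP : IsDComplete P) {a b : P} (hab : DiagRel a b) :
    (dN a : ZMod 2) = (dN b : ZMod 2) := by
  induction hab with
  | rel x y h =>
    obtain ⟨k, w, z, hk⟩ := h
    rw [dN_dkinterval hP hk]
    push_cast
    have h2 : (2 : ZMod 2) = 0 := by decide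
    rw [h2]
    ring
  | refl x => rfl
  | symm x y _ ih => exact ih.symm
  | trans x y z _ _ ih1 ih2 => exact ih1.trans ih2

end Graded

/-- In a d-complete poset, two distinct elements of the same diagonal are never
adjacent: neither covers the other. -/
theorem diagonal_not_adjacent {P : Type*} [PartialOrder P] [Fintype P]
    (hP : IsDComplete P) (a b : P) (hab : DiagRel a b) (hne : a ≠ b) :
    ¬ a ⋖ b ∧ ¬ b ⋖ a := by
  have hpar := dN_parity_diag hP hab
  constructor
  · intro hcov
    rw [dN_cover hP hcov] at hpar
    push_cast at hpar
    exact one_ne_zero (α := ZMod 2) (by linear_combination hpar)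
  · intro hcov
    rw [dN_cover hP hcov] at hpar
    push_cast at hpar
    exact one_ne_zero (α := ZMod 2) (by linear_combination - hpar)
end

section
/- Let P' be an upper set of a d-complete poset P. Then two elements of P' lie in the same diagonal of P' if and only if they lie in the same diagonal of P. -/
variable {P : Type*} [PartialOrder P]

namespace DProof
open Set
set_option linter.unusedSectionVars false

section Fin
variable [Fintype P]

lemma Finite.exists_maximal_wrt {α β : Type*} [PartialOrder β] (f : α → β) (s : Set α)
    (h : s.Finite) (hs : s.Nonempty) : ∃ a ∈ s, ∀ a' ∈ s, f a ≤ f a' → f a = f a' := by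
  obtain ⟨a, ha, hm⟩ := Set.Finite.exists_maximalFor f s h hs
  exact ⟨a, ha, fun a' ha' h' => le_antisymm h' (hm ha' h')⟩

lemma Finite.exists_minimal_wrt {α β : Type*} [PartialOrder β] (f : α → β) (s : Set α)
    (h : s.Finite) (hs : s.Nonempty) : ∃ a ∈ s, ∀ a' ∈ s, f a' ≤ f a → f a = f a' := by
  obtain ⟨a, ha, hm⟩ := Set.Finite.exists_minimalFor f s h hs
  exact ⟨a, ha, fun a' ha' h' => le_antisymm (hm ha' h') h'⟩

lemma exists_le_covby {x b : P} (h : x < b) : ∃ c, x ≤ c ∧ c ⋖ b := by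
  obtain ⟨c, hc, hmax⟩ := Finite.exists_maximal_wrt id {c | x ≤ c ∧ c < b}
    (Set.toFinite _) ⟨x, le_refl x, h⟩
  refine ⟨c, hc.1, hc.2, fun d hcd hdb => ?_⟩
  exact absurd (hmax d ⟨hc.1.trans hcd.le, hdb⟩ hcd.le) hcd.ne

lemma chain_max {C : Set P} (hC : IsChain (· ≤ ·) C) (hne : C.Nonempty) :
    ∃ m ∈ C, ∀ x ∈ C, x ≤ m := by
  obtain ⟨m, hm, hmax⟩ := Finite.exists_maximal_wrt id C (Set.toFinite _) hne
  refine ⟨m, hm, fun x hx => ?_⟩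
  rcases eq_or_ne x m with rfl | hne'
  · exact le_rfl
  · rcases hC hx hm hne' with h | h
    · exact h
    · exact (hmax x hx h).ge

lemma chain_min {C : Set P} (hC : IsChain (· ≤ ·) C) (hne : C.Nonempty) :
    ∃ m ∈ C, ∀ x ∈ C, m ≤ x := by
  obtain ⟨m, hm, hmin⟩ := Finite.exists_minimal_wrt id C (Set.toFinite _) hne
  refine ⟨m, hm, fun x hx => ?_⟩
  rcases eq_or_ne x m with rfl | hne'
  · exact le_rfl
  · rcases hC hx hm hne' with h | h
    · exact (hmin x hx h).le
    · exact h

end Fin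

lemma covby_not_le {x c c' : P} (h : x ⋖ c) (h' : x ⋖ c') (hne : c ≠ c') : ¬ c ≤ c' := by
  intro hle
  exact h'.2 h.1 (lt_of_le_of_ne hle hne)

-- tail and neck sets
def dTail (a b w z : P) : Set P := {x ∈ Set.Icc a b | x ≤ w ∧ x ≤ z}
def dNeck (a b w z : P) : Set P := {x ∈ Set.Icc a b | w ≤ x ∧ z ≤ x}

section Anatomy
variable {k : ℕ} {a b w z : P} (H : IsDkIntervalWith k a b w z)
include H

lemma hk3 : 3 ≤ k := H.2.1.1
lemma hle : a ≤ b := H.1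
lemma wIcc : w ∈ Set.Icc a b := H.2.1.2.1
lemma zIcc : z ∈ Set.Icc a b := H.2.1.2.2.1
lemma wnz : ¬ w ≤ z := H.2.1.2.2.2.1
lemma znw : ¬ z ≤ w := H.2.1.2.2.2.2.1
lemma wzne : w ≠ z := fun h => (H.2.1.2.2.2.1) h.le
lemma classify : ∀ x ∈ Set.Icc a b, x ∈ dTail a b w z ∨ x ∈ dNeck a b w z ∨ x = w ∨ x = z := by
  intro x hx
  rcases H.2.1.2.2.2.2.2.1 x hx with h | h | h | h
  · exact Or.inr (Or.inr (Or.inl h))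
  · exact Or.inr (Or.inr (Or.inr h))
  · exact Or.inl ⟨hx, h⟩
  · exact Or.inr (Or.inl ⟨hx, h⟩)

lemma tail_chain : IsChain (· ≤ ·) (dTail a b w z) := H.2.1.2.2.2.2.2.2.1
lemma neck_chain : IsChain (· ≤ ·) (dNeck a b w z) := H.2.1.2.2.2.2.2.2.2.1
lemma tail_ncard : (dTail a b w z).ncard = k - 2 := H.2.1.2.2.2.2.2.2.2.2
lemma neck_ncard : (dNeck a b w z).ncard = k - 2 := H.2.2

lemma a_mem_tail : a ∈ dTail a b w z :=
  ⟨⟨le_refl a, H.1⟩, (H.2.1.2.1).1, (H.2.1.2.2.1).1⟩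
lemma b_mem_neck : b ∈ dNeck a b w z :=
  ⟨⟨H.1, le_refl b⟩, (H.2.1.2.1).2, (H.2.1.2.2.1).2⟩

lemma w_notmem_tail : w ∉ dTail a b w z := fun h => H.2.1.2.2.2.1 h.2.2
lemma w_notmem_neck : w ∉ dNeck a b w z := fun h => H.2.1.2.2.2.2.1 h.2.2
lemma z_notmem_tail : z ∉ dTail a b w z := fun h => H.2.1.2.2.2.2.1 h.2.1
lemma z_notmem_neck : z ∉ dNeck a b w z := fun h => H.2.1.2.2.2.1 h.2.1

lemma tail_lt_neck {x y : P} (hx : x ∈ dTail a b w z) (hy : y ∈ dNeck a b w z) : x < y := by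
  refine lt_of_le_of_ne (hx.2.1.trans hy.2.1) ?_
  rintro rfl
  exact H.2.1.2.2.2.1 (hy.2.1.trans hx.2.2)

lemma tail_lt_w {x : P} (hx : x ∈ dTail a b w z) : x < w := by
  refine lt_of_le_of_ne hx.2.1 ?_
  rintro rfl
  exact H.2.1.2.2.2.1 hx.2.2

lemma tail_lt_z {x : P} (hx : x ∈ dTail a b w z) : x < z := by
  refine lt_of_le_of_ne hx.2.2 ?_
  rintro rfl
  exact H.2.1.2.2.2.2.1 hx.2.1

lemma w_lt_neck {y : P} (hy : y ∈ dNeck a b w z) : w < y := by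
  refine lt_of_le_of_ne hy.2.1 ?_
  rintro rfl
  exact H.2.1.2.2.2.2.1 hy.2.2

lemma z_lt_neck {y : P} (hy : y ∈ dNeck a b w z) : z < y := by
  refine lt_of_le_of_ne hy.2.2 ?_
  rintro rfl
  exact H.2.1.2.2.2.1 hy.2.1

lemma a_lt_w : a < w := tail_lt_w H (a_mem_tail H)
lemma a_lt_z : a < z := tail_lt_z H (a_mem_tail H)
lemma w_lt_b : w < b := w_lt_neck H (b_mem_neck H)
lemma z_lt_b : z < b := z_lt_neck H (b_mem_neck H)
lemma a_lt_b : a < b := (a_lt_w H).trans (w_lt_b H)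

lemma above_w {x : P} (hx : w ≤ x) (hxb : x ≤ b) : x = w ∨ x ∈ dNeck a b w z := by
  have hxIcc : x ∈ Set.Icc a b := ⟨(wIcc H).1.trans hx, hxb⟩
  rcases classify H x hxIcc with h | h | h | h
  · exact Or.inl (le_antisymm h.2.1 hx)
  · exact Or.inr h
  · exact Or.inl h
  · subst h; exact ((wnz H) hx).elim

lemma above_z {x : P} (hx : z ≤ x) (hxb : x ≤ b) : x = z ∨ x ∈ dNeck a b w z := by
  have hxIcc : x ∈ Set.Icc a b := ⟨(zIcc H).1.trans hx, hxb⟩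
  rcases classify H x hxIcc with h | h | h | h
  · exact Or.inl (le_antisymm h.2.2 hx)
  · exact Or.inr h
  · subst h; exact ((znw H) hx).elim
  · exact Or.inl h

end Anatomy

lemma sep_and_comm (S : Set P) (p q : P → Prop) :
    {x ∈ S | p x ∧ q x} = {x ∈ S | q x ∧ p x} := by
  ext x; simp only [Set.mem_setOf_eq, Set.mem_sep_iff]; tauto

lemma DkStruct_swap {k : ℕ} {S : Set P} {w z : P} (h : DkStruct k S w z) :
    DkStruct k S z w := by
  obtain ⟨h1, h2, h3, h4, h5, h6, h7, h8, h9⟩ := h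
  refine ⟨h1, h3, h2, h5, h4, fun x hx => ?_, ?_, ?_, ?_⟩
  · rcases h6 x hx with h | h | h | h
    · exact Or.inr (Or.inl h)
    · exact Or.inl h
    · exact Or.inr (Or.inr (Or.inl ⟨h.2, h.1⟩))
    · exact Or.inr (Or.inr (Or.inr ⟨h.2, h.1⟩))
  · rw [show {x ∈ S | x ≤ z ∧ x ≤ w} = {x ∈ S | x ≤ w ∧ x ≤ z} from sep_and_comm S _ _]
    exact h7
  · rw [show {x ∈ S | z ≤ x ∧ w ≤ x} = {x ∈ S | w ≤ x ∧ z ≤ x} from sep_and_comm S _ _]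
    exact h8
  · rw [show {x ∈ S | x ≤ z ∧ x ≤ w} = {x ∈ S | x ≤ w ∧ x ≤ z} from sep_and_comm S _ _]
    exact h9

lemma swap_sides {k : ℕ} {a b w z : P} (H : IsDkIntervalWith k a b w z) :
    IsDkIntervalWith k a b z w := by
  obtain ⟨h1, h2, h3⟩ := H
  refine ⟨h1, DkStruct_swap h2, ?_⟩
  rw [show {x ∈ Set.Icc a b | z ≤ x ∧ w ≤ x} = {x ∈ Set.Icc a b | w ≤ x ∧ z ≤ x} from
    sep_and_comm _ _ _]
  exact h3

section Anatomy2
variable [Fintype P] {k : ℕ} {a b w z : P} (H : IsDkIntervalWith k a b w z)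
include H

lemma toptail : ∃ tt ∈ dTail a b w z, (∀ x ∈ dTail a b w z, x ≤ tt) ∧ tt ⋖ w ∧ tt ⋖ z := by
  obtain ⟨tt, htt, hmax⟩ := chain_max (tail_chain H) ⟨a, a_mem_tail H⟩
  refine ⟨tt, htt, hmax, ⟨tail_lt_w H htt, fun c hc hcw => ?_⟩,
    ⟨tail_lt_z H htt, fun c hc hcz => ?_⟩⟩
  · have hcIcc : c ∈ Set.Icc a b := ⟨htt.1.1.trans hc.le, hcw.le.trans (wIcc H).2⟩
    rcases classify H c hcIcc with h | h | h | h
    · exact absurd (hmax c h) (not_le_of_gt hc)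
    · exact absurd (w_lt_neck H h) (asymm hcw)
    · exact hcw.ne h
    · subst h; exact znw H hcw.le
  · have hcIcc : c ∈ Set.Icc a b := ⟨htt.1.1.trans hc.le, hcz.le.trans (zIcc H).2⟩
    rcases classify H c hcIcc with h | h | h | h
    · exact absurd (hmax c h) (not_le_of_gt hc)
    · exact absurd (z_lt_neck H h) (asymm hcz)
    · subst h; exact wnz H hcz.le
    · exact hcz.ne h

lemma neckmin : ∃ nm ∈ dNeck a b w z, (∀ x ∈ dNeck a b w z, nm ≤ x) ∧ w ⋖ nm ∧ z ⋖ nm := by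
  obtain ⟨nm, hnm, hmin⟩ := chain_min (neck_chain H) ⟨b, b_mem_neck H⟩
  refine ⟨nm, hnm, hmin, ⟨w_lt_neck H hnm, fun c hc hcn => ?_⟩,
    ⟨z_lt_neck H hnm, fun c hc hcn => ?_⟩⟩
  · rcases above_w H hc.le (hcn.le.trans hnm.1.2) with h | h
    · exact hc.ne' h
    · exact absurd (hmin c h) (not_le_of_gt hcn)
  · rcases above_z H hc.le (hcn.le.trans hnm.1.2) with h | h
    · exact hc.ne' h
    · exact absurd (hmin c h) (not_le_of_gt hcn)

lemma tail_mem_ge_a {x : P} (hx : x ∈ dTail a b w z) : a ≤ x := hx.1.1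

lemma secondtail (hk4 : 4 ≤ k) :
    ∃ t ∈ dTail a b w z, a ⋖ t ∧ (∀ x ∈ dTail a b w z, x ≠ a → t ≤ x) ∧
      (∀ c, a ⋖ c → c ≤ b → c = t) := by
  have hne : (dTail a b w z \ {a}).Nonempty := by
    apply Set.nonempty_of_ncard_ne_zero
    rw [Set.ncard_diff_singleton_of_mem (a_mem_tail H), tail_ncard H]
    omega
  obtain ⟨t, ht, hmin⟩ := chain_min ((tail_chain H).mono Set.diff_subset) hne
  have htT : t ∈ dTail a b w z := ht.1
  have hta : t ≠ a := by simpa using ht.2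
  have halt : a < t := lt_of_le_of_ne htT.1.1 (Ne.symm hta)
  have hcov : a ⋖ t := by
    refine ⟨halt, fun c hc hct => ?_⟩
    have hcIcc : c ∈ Set.Icc a b := ⟨hc.le, hct.le.trans (htT.2.1.trans (wIcc H).2)⟩
    rcases classify H c hcIcc with h | h | h | h
    · exact absurd (hmin c ⟨h, by simpa using hc.ne'⟩) (not_le_of_gt hct)
    · exact absurd ((w_lt_neck H h).trans_le (hct.le.trans htT.2.1)) (lt_irrefl w)
    · subst h; exact absurd (hct.trans_le htT.2.1) (lt_irrefl c)
    · subst h; exact absurd (hct.trans_le htT.2.2) (lt_irrefl c)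
  refine ⟨t, htT, hcov, fun x hx hxa => hmin x ⟨hx, by simpa using hxa⟩, fun c hc hcb => ?_⟩
  have hcIcc : c ∈ Set.Icc a b := ⟨hc.le, hcb⟩
  rcases classify H c hcIcc with h | h | h | h
  · have h1 : t ≤ c := hmin c ⟨h, by simpa using hc.ne'⟩
    by_contra hne
    exact hc.2 halt (lt_of_le_of_ne h1 (Ne.symm hne))
  · exact absurd (w_lt_neck H h) (hc.2 (a_lt_w H))
  · subst h; exact absurd (tail_lt_w H htT) (hc.2 halt)
  · subst h; exact absurd (tail_lt_z H htT) (hc.2 halt)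

lemma tail_eq_k3 (hk : k = 3) : dTail a b w z = {a} := by
  have h1 : (dTail a b w z).ncard = 1 := by rw [tail_ncard H, hk]
  obtain ⟨x, hx⟩ := Set.ncard_eq_one.mp h1
  rw [hx]
  have := a_mem_tail H
  rw [hx] at this
  simp_all

lemma neck_eq_k3 (hk : k = 3) : dNeck a b w z = {b} := by
  have h1 : (dNeck a b w z).ncard = 1 := by rw [neck_ncard H, hk]
  obtain ⟨x, hx⟩ := Set.ncard_eq_one.mp h1
  rw [hx]
  have := b_mem_neck H
  rw [hx] at this
  simp_all

lemma Icc_eq_k3 (hk : k = 3) : Set.Icc a b = {a, w, z, b} := by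
  ext x
  constructor
  · intro hx
    rcases classify H x hx with h | h | h | h
    · rw [tail_eq_k3 H hk] at h; simp_all
    · rw [neck_eq_k3 H hk] at h; simp_all
    · simp [h]
    · simp [h]
  · intro hx
    rcases hx with rfl | rfl | rfl | rfl
    · exact ⟨le_refl _, hle H⟩
    · exact wIcc H
    · exact zIcc H
    · exact ⟨hle H, le_refl _⟩

lemma covers_k3 (hk : k = 3) : ∀ c, a ⋖ c → c ≤ b → c = w ∨ c = z := by
  intro c hc hcb
  rcases classify H c ⟨hc.le, hcb⟩ with h | h | h | h
  · rw [tail_eq_k3 H hk] at h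
    exact absurd (Set.mem_singleton_iff.mp h) hc.ne'
  · rw [neck_eq_k3 H hk] at h
    rw [Set.mem_singleton_iff.mp h] at hc
    exact absurd (w_lt_b H) (hc.2 (a_lt_w H))
  · exact Or.inl h
  · exact Or.inr h

lemma subinterval (hk4 : 4 ≤ k) :
    ∃ t n, a ⋖ t ∧ n < b ∧ IsDkIntervalWith (k-1) t n w z ∧
      Set.Icc t n = Set.Icc a b \ {a, b} ∧ (∀ x ∈ dNeck a b w z, x ≠ b → x ≤ n) ∧
      (∀ c, a ⋖ c → c ≤ b → c = t) := by
  obtain ⟨t, htT, hcov, htmin, htuniq⟩ := secondtail H hk4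
  have hneN : (dNeck a b w z \ {b}).Nonempty := by
    apply Set.nonempty_of_ncard_ne_zero
    rw [Set.ncard_diff_singleton_of_mem (b_mem_neck H), neck_ncard H]
    omega
  obtain ⟨n, hn, hnmax⟩ := chain_max ((neck_chain H).mono Set.diff_subset) hneN
  have hnN : n ∈ dNeck a b w z := hn.1
  have hnb : n ≠ b := by simpa using hn.2
  have hnltb : n < b := lt_of_le_of_ne hnN.1.2 hnb
  have hwn : w ≤ n := hnN.2.1
  have hzn : z ≤ n := hnN.2.2
  have hIcc : Set.Icc t n = Set.Icc a b \ {a, b} := by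
    ext x
    constructor
    · intro hx
      refine ⟨⟨htT.1.1.trans hx.1, hx.2.trans hnN.1.2⟩, ?_⟩
      simp only [Set.mem_insert_iff, Set.mem_singleton_iff]
      push_neg
      constructor
      · rintro rfl; exact absurd (hcov.1.trans_le hx.1) (lt_irrefl _)
      · rintro rfl; exact absurd (hx.2.trans_lt hnltb) (lt_irrefl _)
    · intro ⟨hx, hne⟩
      simp only [Set.mem_insert_iff, Set.mem_singleton_iff] at hne
      push_neg at hne
      rcases classify H x hx with h | h | h | h
      · exact ⟨htmin x h hne.1, h.2.1.trans hwn⟩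
      · exact ⟨htT.2.1.trans h.2.1, hnmax x ⟨h, by simpa using hne.2⟩⟩
      · subst h; exact ⟨htT.2.1, hwn⟩
      · subst h; exact ⟨htT.2.2, hzn⟩
  have hwmem : w ∈ Set.Icc t n := by
    rw [hIcc]
    exact ⟨wIcc H, by simp [(a_lt_w H).ne', (w_lt_b H).ne]⟩
  have hzmem : z ∈ Set.Icc t n := by
    rw [hIcc]
    exact ⟨zIcc H, by simp [(a_lt_z H).ne', (z_lt_b H).ne]⟩
  have htailEq : dTail t n w z = dTail a b w z \ {a} := by
    ext x
    constructor
    · intro hx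
      have hx' : x ∈ Set.Icc a b \ {a, b} := hIcc ▸ hx.1
      refine ⟨⟨hx'.1, hx.2⟩, ?_⟩
      have : x ≠ a := by intro h; exact hx'.2 (by simp [h])
      simp [this]
    · intro ⟨hx, hxa⟩
      have hxa' : x ≠ a := by simpa using hxa
      refine ⟨?_, hx.2⟩
      rw [hIcc]
      refine ⟨hx.1, ?_⟩
      simp only [Set.mem_insert_iff, Set.mem_singleton_iff]
      push_neg
      exact ⟨hxa', (tail_lt_w H hx |>.trans (w_lt_b H)).ne⟩
  have hneckEq : dNeck t n w z = dNeck a b w z \ {b} := by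
    ext x
    constructor
    · intro hx
      have hx' : x ∈ Set.Icc a b \ {a, b} := hIcc ▸ hx.1
      refine ⟨⟨hx'.1, hx.2⟩, ?_⟩
      have : x ≠ b := by intro h; exact hx'.2 (by simp [h])
      simp [this]
    · intro ⟨hx, hxb⟩
      have hxb' : x ≠ b := by simpa using hxb
      refine ⟨?_, hx.2⟩
      rw [hIcc]
      refine ⟨hx.1, ?_⟩
      simp only [Set.mem_insert_iff, Set.mem_singleton_iff]
      push_neg
      exact ⟨((a_lt_w H).trans (w_lt_neck H hx)).ne', hxb'⟩
  refine ⟨t, n, hcov, hnltb, ⟨htT.2.1.trans hwn, ⟨by omega, hwmem, hzmem, wnz H, znw H,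
    fun x hx => ?_, ?_, ?_, ?_⟩, ?_⟩, hIcc, fun x hx hxb => hnmax x ⟨hx, by simpa using hxb⟩,
    htuniq⟩
  · have : x ∈ Set.Icc a b := (hIcc ▸ hx).1
    exact H.2.1.2.2.2.2.2.1 x this
  · show IsChain _ (dTail t n w z)
    rw [htailEq]; exact (tail_chain H).mono Set.diff_subset
  · show IsChain _ (dNeck t n w z)
    rw [hneckEq]; exact (neck_chain H).mono Set.diff_subset
  · show (dTail t n w z).ncard = k - 1 - 2
    rw [htailEq, Set.ncard_diff_singleton_of_mem (a_mem_tail H), tail_ncard H]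
    omega
  · show (dNeck t n w z).ncard = k - 1 - 2
    rw [hneckEq, Set.ncard_diff_singleton_of_mem (b_mem_neck H), neck_ncard H]
    omega

end Anatomy2

section Anatomy3
variable [Fintype P] {k k' : ℕ} {a b w z : P} (H : IsDkIntervalWith k a b w z)
include H

lemma tailneck_comp {x y : P} (hx : x ∈ dTail a b w z ∨ x ∈ dNeck a b w z)
    (hy : y ∈ dTail a b w z ∨ y ∈ dNeck a b w z) : x ≤ y ∨ y ≤ x := by
  rcases hx with hx | hx <;> rcases hy with hy | hy
  · rcases eq_or_ne x y with rfl | hne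
    · exact Or.inl le_rfl
    · exact (tail_chain H) hx hy hne
  · exact Or.inl (tail_lt_neck H hx hy).le
  · exact Or.inr (tail_lt_neck H hy hx).le
  · rcases eq_or_ne x y with rfl | hne
    · exact Or.inl le_rfl
    · exact (neck_chain H) hx hy hne

lemma side_pair_unique {w' z' : P} (H' : IsDkIntervalWith k' a b w' z') :
    (w' = w ∧ z' = z) ∨ (w' = z ∧ z' = w) := by
  have hw' := classify H w' (wIcc H')
  have hz' := classify H z' (zIcc H')
  have hcomp : ¬ (w' ≤ z') ∧ ¬ (z' ≤ w') := ⟨wnz H', znw H'⟩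
  rcases hw' with h1 | h1 | h1 | h1
  · rcases hz' with h2 | h2 | h2 | h2
    · exact absurd (tailneck_comp H (Or.inl h1) (Or.inl h2)) (by tauto)
    · exact absurd (tailneck_comp H (Or.inl h1) (Or.inr h2)) (by tauto)
    · subst h2; exact absurd h1.2.1 hcomp.1
    · subst h2; exact absurd h1.2.2 hcomp.1
  · rcases hz' with h2 | h2 | h2 | h2
    · exact absurd (tailneck_comp H (Or.inr h1) (Or.inl h2)) (by tauto)
    · exact absurd (tailneck_comp H (Or.inr h1) (Or.inr h2)) (by tauto)
    · subst h2; exact absurd h1.2.1 hcomp.2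
    · subst h2; exact absurd h1.2.2 hcomp.2
  · subst h1
    rcases hz' with h2 | h2 | h2 | h2
    · exact absurd h2.2.1 hcomp.2
    · exact absurd h2.2.1 hcomp.1
    · subst h2; exact absurd le_rfl hcomp.1
    · subst h2; exact Or.inl ⟨rfl, rfl⟩
  · subst h1
    rcases hz' with h2 | h2 | h2 | h2
    · exact absurd h2.2.2 hcomp.2
    · exact absurd h2.2.2 hcomp.1
    · subst h2; exact Or.inr ⟨rfl, rfl⟩
    · subst h2; exact absurd le_rfl hcomp.1

end Anatomy3

lemma covby_between {x c e : P} (h : x ⋖ c) (h1 : x ≤ e) (h2 : e ≤ c) : e = x ∨ e = c := by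
  rcases eq_or_ne e x with he | he
  · exact Or.inl he
  · rcases eq_or_ne e c with he2 | he2
    · exact Or.inr he2
    · exact absurd (lt_of_le_of_ne h2 he2) (h.2 (lt_of_le_of_ne h1 (Ne.symm he)))

section DC
variable [Fintype P] (hP : IsDComplete P)
include hP

lemma below_top {k : ℕ} {a b w z x : P} (H : IsDkIntervalWith k a b w z) (hx : x < b) :
    ∃ c ∈ Set.Icc a b, c ≠ b ∧ x ≤ c := by
  obtain ⟨c, hxc, hcb⟩ := exists_le_covby hx
  exact ⟨c, hP.2.1 a b ⟨k, w, z, H⟩ c hcb, hcb.ne, hxc⟩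

lemma diamond {x c c' : P} (h : x ⋖ c) (h' : x ⋖ c') (hne : c ≠ c') :
    ∃ u, IsDkIntervalWith 3 x u c c' ∧ Set.Icc x u = {x, c, c', u} ∧
      u ∉ ({x, c, c'} : Set P) ∧ c ⋖ u ∧ c' ⋖ u ∧ (∀ d, d < u → d ≤ c ∨ d ≤ c') := by
  have hcc' : ¬ c ≤ c' := covby_not_le h h' hne
  have hc'c : ¬ c' ≤ c := covby_not_le h' h hne.symm
  set S : Set P := {x, c, c'} with hS
  have hSconv : IsConvexSet S := by
    intro p hp q hq e hpe heq
    have hxq : ∀ r, r ∈ S → x ≤ r := by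
      rintro r (rfl | rfl | rfl)
      exacts [le_rfl, h.1.le, h'.1.le]
    rcases hp with rfl | rfl | rfl
    · rcases hq with rfl | rfl | rfl
      · exact le_antisymm heq hpe ▸ Or.inl rfl
      · rcases covby_between h hpe heq with he | he
        · exact he ▸ Or.inl rfl
        · exact he ▸ Or.inr (Or.inl rfl)
      · rcases covby_between h' hpe heq with he | he
        · exact he ▸ Or.inl rfl
        · exact he ▸ Or.inr (Or.inr rfl)
    · rcases hq with rfl | rfl | rfl
      · exact absurd (hpe.trans heq) h.1.not_ge
      · exact Or.inr (Or.inl (le_antisymm heq hpe))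
      · exact absurd (hpe.trans heq) hcc'
    · rcases hq with rfl | rfl | rfl
      · exact absurd (hpe.trans heq) h'.1.not_ge
      · exact absurd (hpe.trans heq) hc'c
      · exact Or.inr (Or.inr (le_antisymm heq hpe))
  have htailS : {e ∈ S | e ≤ c ∧ e ≤ c'} = {x} := by
    ext e
    simp only [Set.mem_sep_iff, Set.mem_singleton_iff]
    constructor
    · rintro ⟨rfl | rfl | rfl, he1, he2⟩
      · rfl
      · exact absurd he2 hcc'
      · exact absurd he1 hc'c
    · rintro rfl
      exact ⟨Or.inl rfl, h.1.le, h'.1.le⟩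
  have hneckS : {e ∈ S | c ≤ e ∧ c' ≤ e} = ∅ := by
    ext e
    simp only [Set.mem_sep_iff, Set.mem_empty_iff_false, iff_false]
    rintro ⟨rfl | rfl | rfl, he1, he2⟩
    · exact h.1.not_ge he1
    · exact hc'c he2
    · exact hcc' he1
  have hminus : IsDkMinusConvex 3 S := by
    refine ⟨hSconv, c, c', ⟨le_refl 3, Or.inr (Or.inl rfl), Or.inr (Or.inr rfl), hcc', hc'c,
      ?_, ?_, ?_, ?_⟩, ?_⟩
    · rintro e (rfl | rfl | rfl)
      · exact Or.inr (Or.inr (Or.inl ⟨h.1.le, h'.1.le⟩))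
      · exact Or.inl rfl
      · exact Or.inr (Or.inl rfl)
    · rw [htailS]; exact Set.Subsingleton.isChain (by simp)
    · rw [hneckS]; exact Set.Subsingleton.isChain (by simp)
    · rw [htailS]; simp
    · rw [hneckS]; simp
  obtain ⟨u, huS, a0, hIkd, hIcc⟩ := hP.1 3 S hminus
  have ha0 : a0 = x := by
    have hle1 : ∀ r ∈ S, a0 ≤ r := by
      intro r hr
      have : r ∈ Set.Icc a0 u := by rw [hIcc]; exact Set.mem_insert_iff.mpr (Or.inr hr)
      exact this.1
    have ha0mem : a0 ∈ insert u S := by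
      rw [← hIcc]
      obtain ⟨w0, z0, hw0⟩ := hIkd
      exact ⟨le_refl _, hw0.1⟩
    rcases ha0mem with heq | hmem
    · exfalso
      have hx2 : x ∈ Set.Icc a0 u := by
        rw [hIcc]; exact Set.mem_insert_iff.mpr (Or.inr (Or.inl rfl))
      have hxu' : x = u := le_antisymm hx2.2 (heq ▸ hx2.1)
      exact huS (hxu' ▸ (Or.inl rfl : x ∈ S))
    · rcases hmem with rfl | rfl | rfl
      · rfl
      · exact absurd (hle1 x (Or.inl rfl)) h.1.not_ge
      · exact absurd (hle1 x (Or.inl rfl)) h'.1.not_ge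
  rw [ha0] at hIcc
  have hIcc4 : Set.Icc x u = {x, c, c', u} := by
    rw [hIcc, hS]
    ext e
    simp only [Set.mem_insert_iff, Set.mem_singleton_iff]
    tauto
  have hcu : c ≤ u := by
    have : c ∈ Set.Icc x u := by rw [hIcc4]; simp
    exact this.2
  have hc'u : c' ≤ u := by
    have : c' ∈ Set.Icc x u := by rw [hIcc4]; simp
    exact this.2
  have hunex : u ≠ x := fun he => huS (he ▸ Or.inl rfl)
  have hunec : u ≠ c := fun he => huS (he ▸ Or.inr (Or.inl rfl))
  have hunec' : u ≠ c' := fun he => huS (he ▸ Or.inr (Or.inr rfl))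
  have hxu : x ≤ u := h.1.le.trans hcu
  have HDI : IsDkIntervalWith 3 x u c c' := by
    refine ⟨hxu, ⟨le_refl 3, ?_, ?_, hcc', hc'c, ?_, ?_, ?_, ?_⟩, ?_⟩
    · rw [hIcc4]; simp
    · rw [hIcc4]; simp
    · intro e he
      rw [hIcc4] at he
      rcases he with rfl | rfl | rfl | rfl
      · exact Or.inr (Or.inr (Or.inl ⟨h.1.le, h'.1.le⟩))
      · exact Or.inl rfl
      · exact Or.inr (Or.inl rfl)
      · exact Or.inr (Or.inr (Or.inr ⟨hcu, hc'u⟩))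
    · have : {e ∈ Set.Icc x u | e ≤ c ∧ e ≤ c'} = {x} := by
        rw [hIcc4]
        ext e
        simp only [Set.mem_sep_iff, Set.mem_insert_iff, Set.mem_singleton_iff]
        constructor
        · rintro ⟨rfl | rfl | rfl | rfl, he1, he2⟩
          · rfl
          · exact absurd he2 hcc'
          · exact absurd he1 hc'c
          · exact absurd (le_antisymm he1 hcu) hunec
        · rintro rfl
          exact ⟨Or.inl rfl, h.1.le, h'.1.le⟩
      rw [this]; exact Set.Subsingleton.isChain (by simp)
    · have : {e ∈ Set.Icc x u | c ≤ e ∧ c' ≤ e} = {u} := by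
        rw [hIcc4]
        ext e
        simp only [Set.mem_sep_iff, Set.mem_insert_iff, Set.mem_singleton_iff]
        constructor
        · rintro ⟨rfl | rfl | rfl | rfl, he1, he2⟩
          · exact absurd he1 h.1.not_ge
          · exact absurd he2 hc'c
          · exact absurd he1 hcc'
          · rfl
        · rintro rfl
          exact ⟨Or.inr (Or.inr (Or.inr rfl)), hcu, hc'u⟩
      rw [this]; exact Set.Subsingleton.isChain (by simp)
    · have : {e ∈ Set.Icc x u | e ≤ c ∧ e ≤ c'} = {x} := by
        rw [hIcc4]
        ext e
        simp only [Set.mem_sep_iff, Set.mem_insert_iff, Set.mem_singleton_iff]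
        constructor
        · rintro ⟨rfl | rfl | rfl | rfl, he1, he2⟩
          · rfl
          · exact absurd he2 hcc'
          · exact absurd he1 hc'c
          · exact absurd (le_antisymm he1 hcu) hunec
        · rintro rfl
          exact ⟨Or.inl rfl, h.1.le, h'.1.le⟩
      rw [this]; simp
    · have : {e ∈ Set.Icc x u | c ≤ e ∧ c' ≤ e} = {u} := by
        rw [hIcc4]
        ext e
        simp only [Set.mem_sep_iff, Set.mem_insert_iff, Set.mem_singleton_iff]
        constructor
        · rintro ⟨rfl | rfl | rfl | rfl, he1, he2⟩
          · exact absurd he1 h.1.not_ge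
          · exact absurd he2 hc'c
          · exact absurd he1 hcc'
          · rfl
        · rintro rfl
          exact ⟨Or.inr (Or.inr (Or.inr rfl)), hcu, hc'u⟩
      rw [this]; simp
  have hcovu : ∀ d, d ⋖ u → d = c ∨ d = c' := by
    intro d hd
    have hdIcc : d ∈ Set.Icc x u := hP.2.1 x u ⟨3, c, c', HDI⟩ d hd
    rw [hIcc4] at hdIcc
    rcases hdIcc with rfl | rfl | rfl | rfl
    · exact absurd (lt_of_le_of_ne hcu hunec.symm) (hd.2 h.1)
    · exact Or.inl rfl
    · exact Or.inr rfl
    · exact absurd rfl hd.lt.ne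
  have hltu : ∀ d, d < u → d ≤ c ∨ d ≤ c' := by
    intro d hd
    obtain ⟨e, hde, heu⟩ := exists_le_covby hd
    rcases hcovu e heu with rfl | rfl
    · exact Or.inl hde
    · exact Or.inr hde
  have hcltu : c ⋖ u := by
    refine ⟨lt_of_le_of_ne hcu hunec.symm, fun d hcd hdu => ?_⟩
    rcases hltu d hdu with hle | hle
    · exact absurd (hcd.trans_le hle) (lt_irrefl c)
    · exact hcc' (hcd.le.trans hle)
  have hc'ltu : c' ⋖ u := by
    refine ⟨lt_of_le_of_ne hc'u hunec'.symm, fun d hcd hdu => ?_⟩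
    rcases hltu d hdu with hle | hle
    · exact hc'c (hcd.le.trans hle)
    · exact absurd (hcd.trans_le hle) (lt_irrefl c')
  exact ⟨u, HDI, hIcc4, huS, hcltu, hc'ltu, hltu⟩

/-- A triple of pairwise incomparable elements, each pair having a common
covered element. -/
def Bad (t : P × P × P) : Prop :=
  (¬ t.1 ≤ t.2.1 ∧ ¬ t.2.1 ≤ t.1) ∧ (¬ t.1 ≤ t.2.2 ∧ ¬ t.2.2 ≤ t.1) ∧
  (¬ t.2.1 ≤ t.2.2 ∧ ¬ t.2.2 ≤ t.2.1) ∧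
  (∃ p, p ⋖ t.1 ∧ p ⋖ t.2.1) ∧ (∃ q, q ⋖ t.2.1 ∧ q ⋖ t.2.2) ∧ (∃ r, r ⋖ t.1 ∧ r ⋖ t.2.2)

lemma bad_step {t : P × P × P} (ht : Bad t) :
    ∃ t' : P × P × P, Bad t' ∧ t.2.1 < t'.1 ∧ t.1 < t'.2.1 := by
  obtain ⟨a, b, c⟩ := t
  obtain ⟨⟨hab, hba⟩, ⟨hac, hca⟩, ⟨hbc, hcb⟩, ⟨p, hpa, hpb⟩, ⟨q, hqb, hqc⟩, ⟨r, hra, hrc⟩⟩ := ht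
  have hne_ab : a ≠ b := fun h => hab h.le
  have hne_ac : a ≠ c := fun h => hac h.le
  have hne_bc : b ≠ c := fun h => hbc h.le
  obtain ⟨a', _, _, _, hba', hca', hlta'⟩ := diamond hP hqb hqc hne_bc
  obtain ⟨b', _, _, _, hab', hcb', hltb'⟩ := diamond hP hra hrc hne_ac
  obtain ⟨c', _, _, _, hac', hbc', hltc'⟩ := diamond hP hpa hpb hne_ab
  have key : ∀ (u1 e1 f1 u2 g : P), (∀ d, d < u1 → d ≤ e1 ∨ d ≤ f1) →
      g ⋖ u2 → ¬ g ≤ e1 → ¬ g ≤ f1 → ¬ u2 ≤ u1 := by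
    intro u1 e1 f1 u2 g hlt hg h1 h2 hle
    rcases hlt g (hg.1.trans_le hle) with h | h
    · exact h1 h
    · exact h2 h
  refine ⟨(a', b', c'), ⟨⟨?_, ?_⟩, ⟨?_, ?_⟩, ⟨?_, ?_⟩, ⟨c, hca', hcb'⟩, ⟨a, hab', hac'⟩,
      ⟨b, hba', hbc'⟩⟩, hba'.1, hab'.1⟩
  · exact key b' a c a' b hltb' hba' hba hbc
  · exact key a' b c b' a hlta' hab' hab hac
  · exact key c' a b a' c hltc' hca' hca hcb
  · exact key a' b c c' a hlta' hac' hab hac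
  · exact key c' a b b' c hltc' hcb' hca hcb
  · exact key b' a c c' b hltb' hbc' hba hbc

lemma no_bad : ¬ ∃ t : P × P × P, Bad t := by
  rintro ⟨t0, ht0⟩
  have step : ∀ t : {t : P × P × P // Bad t},
      ∃ t' : {t : P × P × P // Bad t}, t.1.2.1 < t'.1.1 ∧ t.1.1 < t'.1.2.1 := by
    intro t
    obtain ⟨t', ht', h1, h2⟩ := bad_step hP t.2
    exact ⟨⟨t', ht'⟩, h1, h2⟩
  choose f hf1 hf2 using step
  let T : ℕ → {t : P × P × P // Bad t} := fun n => Nat.rec ⟨t0, ht0⟩ (fun _ prev => f prev) n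
  have hT : ∀ n, T (n+1) = f (T n) := fun n => rfl
  let g : ℕ → P := fun n => if n % 2 = 0 then (T n).1.1 else (T n).1.2.1
  have hmono : StrictMono g := by
    apply strictMono_nat_of_lt_succ
    intro n
    rcases Nat.even_or_odd n with he | ho
    · have h1 : n % 2 = 0 := Nat.even_iff.mp he
      have h2 : (n+1) % 2 ≠ 0 := by omega
      simp only [g, h1, h2, if_true, if_false, if_pos, if_neg, hT]
      simpa [h1, h2] using hf2 (T n)
    · have h1 : n % 2 ≠ 0 := by
        have := Nat.odd_iff.mp ho; omega
      have h2 : (n+1) % 2 = 0 := by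
        have := Nat.odd_iff.mp ho; omega
      simpa [g, h1, h2, hT] using hf1 (T n)
  obtain ⟨i, j, hij, hmap⟩ := Finite.exists_ne_map_eq_of_infinite g
  exact hij (hmono.injective hmap)

lemma no_three_covers {x c1 c2 c3 : P} (h1 : x ⋖ c1) (h2 : x ⋖ c2) (h3 : x ⋖ c3)
    (h12 : c1 ≠ c2) (h13 : c1 ≠ c3) (h23 : c2 ≠ c3) : False := by
  apply no_bad hP
  exact ⟨(c1, c2, c3), ⟨covby_not_le h1 h2 h12, covby_not_le h2 h1 h12.symm⟩,
    ⟨covby_not_le h1 h3 h13, covby_not_le h3 h1 h13.symm⟩,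
    ⟨covby_not_le h2 h3 h23, covby_not_le h3 h2 h23.symm⟩,
    ⟨x, h1, h2⟩, ⟨x, h2, h3⟩, ⟨x, h1, h3⟩⟩

lemma top_unique {k : ℕ} {m y y' w z : P} (H : IsDkIntervalWith k m y w z)
    (H' : IsDkIntervalWith k m y' w z)
    (hE : Set.Icc m y \ {y} = Set.Icc m y' \ {y'}) : y = y' := by
  by_contra hne
  -- y and y' are incomparable
  have hyy' : ¬ y ≤ y' := by
    intro hle2
    have : y ∈ Set.Icc m y' \ {y'} := ⟨⟨H.1, hle2⟩, by simpa using hne⟩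
    rw [← hE] at this
    simp at this
  have hy'y : ¬ y' ≤ y := by
    intro hle2
    have : y' ∈ Set.Icc m y \ {y} := ⟨⟨H'.1, hle2⟩, by simpa using Ne.symm hne⟩
    rw [hE] at this
    simp at this
  -- the necks minus tops agree
  have hNN' : dNeck m y w z \ {y} = dNeck m y' w z \ {y'} := by
    have e1 : dNeck m y w z \ {y} = {x ∈ Set.Icc m y \ {y} | w ≤ x ∧ z ≤ x} := by
      ext x; constructor
      · intro ⟨hx, hxy⟩; exact ⟨⟨hx.1, hxy⟩, hx.2⟩
      · intro ⟨⟨hx1, hx2⟩, hx3⟩; exact ⟨⟨hx1, hx3⟩, hx2⟩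
    have e2 : dNeck m y' w z \ {y'} = {x ∈ Set.Icc m y' \ {y'} | w ≤ x ∧ z ≤ x} := by
      ext x; constructor
      · intro ⟨hx, hxy⟩; exact ⟨⟨hx.1, hxy⟩, hx.2⟩
      · intro ⟨⟨hx1, hx2⟩, hx3⟩; exact ⟨⟨hx1, hx3⟩, hx2⟩
    rw [e1, e2, hE]
  rcases eq_or_lt_of_le (hk3 H) with hk3' | hk4
  -- ===================== case k = 3 =====================
  · have hk : k = 3 := hk3'.symm
    have hIy := Icc_eq_k3 H hk
    have hIy' := Icc_eq_k3 H' hk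
    -- w ⋖ y etc.
    have hwy : w ⋖ y := by
      obtain ⟨nm, hnm, _, hw, hz⟩ := neckmin H
      rw [neck_eq_k3 H hk] at hnm
      exact (Set.mem_singleton_iff.mp hnm) ▸ hw
    have hzy : z ⋖ y := by
      obtain ⟨nm, hnm, _, hw2, hz2⟩ := neckmin H
      rw [neck_eq_k3 H hk] at hnm
      exact (Set.mem_singleton_iff.mp hnm) ▸ hz2
    have hwy' : w ⋖ y' := by
      obtain ⟨nm, hnm, _, hw, hz⟩ := neckmin H'
      rw [neck_eq_k3 H' hk] at hnm
      exact (Set.mem_singleton_iff.mp hnm) ▸ hw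
    have hzy' : z ⋖ y' := by
      obtain ⟨nm, hnm, _, hw2, hz2⟩ := neckmin H'
      rw [neck_eq_k3 H' hk] at hnm
      exact (Set.mem_singleton_iff.mp hnm) ▸ hz2
    have hSw : IsDkMinusConvex 3 ({w, y, y'} : Set P) := by
      refine ⟨?_, y, y', ⟨le_refl 3, by simp, by simp, hyy', hy'y, ?_, ?_, ?_, ?_⟩, ?_⟩
      · intro a ha b hb e hae heb
        rcases ha with rfl | rfl | rfl
        · rcases hb with rfl | rfl | rfl
          · exact Or.inl (le_antisymm heb hae)
          · rcases covby_between hwy hae heb with h | h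
            · exact Or.inl h
            · exact Or.inr (Or.inl h)
          · rcases covby_between hwy' hae heb with h | h
            · exact Or.inl h
            · exact Or.inr (Or.inr h)
        · rcases hb with rfl | rfl | rfl
          · exact absurd (hae.trans heb) hwy.1.not_ge
          · exact Or.inr (Or.inl (le_antisymm heb hae))
          · exact absurd (hae.trans heb) hyy'
        · rcases hb with rfl | rfl | rfl
          · exact absurd (hae.trans heb) hwy'.1.not_ge
          · exact absurd (hae.trans heb) hy'y
          · exact Or.inr (Or.inr (le_antisymm heb hae))
      · rintro e (rfl | rfl | rfl)
        · exact Or.inr (Or.inr (Or.inl ⟨hwy.1.le, hwy'.1.le⟩))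
        · exact Or.inl rfl
        · exact Or.inr (Or.inl rfl)
      · have : {e ∈ ({w, y, y'} : Set P) | e ≤ y ∧ e ≤ y'} = {w} := by
          ext e
          simp only [Set.mem_sep_iff, Set.mem_insert_iff, Set.mem_singleton_iff]
          constructor
          · rintro ⟨rfl | rfl | rfl, h1, h2⟩
            · rfl
            · exact absurd h2 hyy'
            · exact absurd h1 hy'y
          · rintro rfl; exact ⟨Or.inl rfl, hwy.1.le, hwy'.1.le⟩
        rw [this]; exact Set.Subsingleton.isChain (by simp)
      · have : {e ∈ ({w, y, y'} : Set P) | y ≤ e ∧ y' ≤ e} = ∅ := by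
          ext e
          simp only [Set.mem_sep_iff, Set.mem_insert_iff, Set.mem_singleton_iff,
            Set.mem_empty_iff_false, iff_false]
          rintro ⟨rfl | rfl | rfl, h1, h2⟩
          · exact hwy.1.not_ge h1
          · exact hy'y h2
          · exact hyy' h1
        rw [this]; exact Set.Subsingleton.isChain (by simp)
      · have : {e ∈ ({w, y, y'} : Set P) | e ≤ y ∧ e ≤ y'} = {w} := by
          ext e
          simp only [Set.mem_sep_iff, Set.mem_insert_iff, Set.mem_singleton_iff]
          constructor
          · rintro ⟨rfl | rfl | rfl, h1, h2⟩
            · rfl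
            · exact absurd h2 hyy'
            · exact absurd h1 hy'y
          · rintro rfl; exact ⟨Or.inl rfl, hwy.1.le, hwy'.1.le⟩
        rw [this]; simp
      · have : {e ∈ ({w, y, y'} : Set P) | y ≤ e ∧ y' ≤ e} = ∅ := by
          ext e
          simp only [Set.mem_sep_iff, Set.mem_insert_iff, Set.mem_singleton_iff,
            Set.mem_empty_iff_false, iff_false]
          rintro ⟨rfl | rfl | rfl, h1, h2⟩
          · exact hwy.1.not_ge h1
          · exact hy'y h2
          · exact hyy' h1
        rw [this]; simp
    have hSz : IsDkMinusConvex 3 ({z, y, y'} : Set P) := by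
      refine ⟨?_, y, y', ⟨le_refl 3, by simp, by simp, hyy', hy'y, ?_, ?_, ?_, ?_⟩, ?_⟩
      · intro a ha b hb e hae heb
        rcases ha with rfl | rfl | rfl
        · rcases hb with rfl | rfl | rfl
          · exact Or.inl (le_antisymm heb hae)
          · rcases covby_between hzy hae heb with h | h
            · exact Or.inl h
            · exact Or.inr (Or.inl h)
          · rcases covby_between hzy' hae heb with h | h
            · exact Or.inl h
            · exact Or.inr (Or.inr h)
        · rcases hb with rfl | rfl | rfl
          · exact absurd (hae.trans heb) hzy.1.not_ge
          · exact Or.inr (Or.inl (le_antisymm heb hae))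
          · exact absurd (hae.trans heb) hyy'
        · rcases hb with rfl | rfl | rfl
          · exact absurd (hae.trans heb) hzy'.1.not_ge
          · exact absurd (hae.trans heb) hy'y
          · exact Or.inr (Or.inr (le_antisymm heb hae))
      · rintro e (rfl | rfl | rfl)
        · exact Or.inr (Or.inr (Or.inl ⟨hzy.1.le, hzy'.1.le⟩))
        · exact Or.inl rfl
        · exact Or.inr (Or.inl rfl)
      · have : {e ∈ ({z, y, y'} : Set P) | e ≤ y ∧ e ≤ y'} = {z} := by
          ext e
          simp only [Set.mem_sep_iff, Set.mem_insert_iff, Set.mem_singleton_iff]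
          constructor
          · rintro ⟨rfl | rfl | rfl, h1, h2⟩
            · rfl
            · exact absurd h2 hyy'
            · exact absurd h1 hy'y
          · rintro rfl; exact ⟨Or.inl rfl, hzy.1.le, hzy'.1.le⟩
        rw [this]; exact Set.Subsingleton.isChain (by simp)
      · have : {e ∈ ({z, y, y'} : Set P) | y ≤ e ∧ y' ≤ e} = ∅ := by
          ext e
          simp only [Set.mem_sep_iff, Set.mem_insert_iff, Set.mem_singleton_iff,
            Set.mem_empty_iff_false, iff_false]
          rintro ⟨rfl | rfl | rfl, h1, h2⟩
          · exact hzy.1.not_ge h1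
          · exact hy'y h2
          · exact hyy' h1
        rw [this]; exact Set.Subsingleton.isChain (by simp)
      · have : {e ∈ ({z, y, y'} : Set P) | e ≤ y ∧ e ≤ y'} = {z} := by
          ext e
          simp only [Set.mem_sep_iff, Set.mem_insert_iff, Set.mem_singleton_iff]
          constructor
          · rintro ⟨rfl | rfl | rfl, h1, h2⟩
            · rfl
            · exact absurd h2 hyy'
            · exact absurd h1 hy'y
          · rintro rfl; exact ⟨Or.inl rfl, hzy.1.le, hzy'.1.le⟩
        rw [this]; simp
      · have : {e ∈ ({z, y, y'} : Set P) | y ≤ e ∧ y' ≤ e} = ∅ := by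
          ext e
          simp only [Set.mem_sep_iff, Set.mem_insert_iff, Set.mem_singleton_iff,
            Set.mem_empty_iff_false, iff_false]
          rintro ⟨rfl | rfl | rfl, h1, h2⟩
          · exact hzy.1.not_ge h1
          · exact hy'y h2
          · exact hyy' h1
        rw [this]; simp
    have heq := hP.2.2 3 3 _ _ hSw hSz w (by simp) z (by simp)
      (by rintro e (rfl | rfl | rfl); exacts [le_rfl, hwy.1.le, hwy'.1.le])
      (by rintro e (rfl | rfl | rfl); exacts [le_rfl, hzy.1.le, hzy'.1.le])
      (by
        have h1 : ({w, y, y'} : Set P) \ {w} = {y, y'} := by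
          ext e
          simp only [Set.mem_diff, Set.mem_insert_iff, Set.mem_singleton_iff]
          constructor
          · rintro ⟨rfl | rfl | rfl, hne2⟩
            · exact absurd rfl hne2
            · exact Or.inl rfl
            · exact Or.inr rfl
          · rintro (rfl | rfl)
            · exact ⟨Or.inr (Or.inl rfl), hwy.1.ne'⟩
            · exact ⟨Or.inr (Or.inr rfl), hwy'.1.ne'⟩
        have h2 : ({z, y, y'} : Set P) \ {z} = {y, y'} := by
          ext e
          simp only [Set.mem_diff, Set.mem_insert_iff, Set.mem_singleton_iff]
          constructor
          · rintro ⟨rfl | rfl | rfl, hne2⟩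
            · exact absurd rfl hne2
            · exact Or.inl rfl
            · exact Or.inr rfl
          · rintro (rfl | rfl)
            · exact ⟨Or.inr (Or.inl rfl), hzy.1.ne'⟩
            · exact ⟨Or.inr (Or.inr rfl), hzy'.1.ne'⟩
        rw [h1, h2])
    have : w ∈ ({z, y, y'} : Set P) := heq ▸ (Or.inl rfl : w ∈ ({w, y, y'} : Set P))
    rcases this with h | h | h
    · exact wzne H h
    · exact absurd (h ▸ hwy.1) (lt_irrefl _)
    · exact absurd (h ▸ hwy'.1) (lt_irrefl _)
  -- ===================== case k ≥ 4 =====================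
  · have hk4' : 4 ≤ k := hk4
    set NE := dNeck m y w z \ {y} with hNEdef
    have hNEchain : IsChain (· ≤ ·) NE := (neck_chain H).mono Set.diff_subset
    have hNEcard : NE.ncard = k - 3 := by
      rw [hNEdef, Set.ncard_diff_singleton_of_mem (b_mem_neck H), neck_ncard H]
      omega
    have hNE' : NE = dNeck m y' w z \ {y'} := hNN'
    -- basic membership facts
    have hfacts : ∀ p ∈ NE, m ≤ p ∧ w ≤ p ∧ z ≤ p ∧ p ≤ y ∧ p ≠ y ∧ p ≤ y' ∧ p ≠ y' := by
      intro p hp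
      have hp2 : p ∈ dNeck m y' w z \ {y'} := hNE' ▸ hp
      exact ⟨hp.1.1.1, hp.1.2.1, hp.1.2.2, hp.1.1.2, by simpa using hp.2,
        hp2.1.1.2, by simpa using hp2.2⟩
    have DESC : ∀ (j : ℕ), ∀ p ∈ NE, ({x ∈ NE | p < x}).ncard = j →
        ∃ V, IsDkIntervalWith (j + 3) p V y y' ∧
          (∀ x, x ≤ V → x ≤ y ∨ x ≤ y' ∨ y ≤ x) := by
      intro j
      induction j with
      | zero =>
        intro p hp hcard
        obtain ⟨hmp, hwp, hzp, hpley, hpney, hpley', hpney'⟩ := hfacts p hp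
        have hQempty : {x ∈ NE | p < x} = ∅ := (Set.ncard_eq_zero (Set.toFinite _)).mp hcard
        have hmax : ∀ x ∈ NE, x ≤ p := by
          intro x hx
          rcases eq_or_ne x p with rfl | hxp
          · exact le_rfl
          · rcases hNEchain hx hp hxp with h | h
            · exact h
            · exact absurd (⟨hx, lt_of_le_of_ne h (Ne.symm hxp)⟩ :
                x ∈ {x ∈ NE | p < x}) (fun hm => Set.notMem_empty x (hQempty.subset hm))
        have hpy : p ⋖ y := by
          refine ⟨lt_of_le_of_ne hpley hpney, fun c hpc hcy => ?_⟩
          have hcNE : c ∈ NE :=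
            ⟨⟨⟨hmp.trans hpc.le, hcy.le⟩, hwp.trans hpc.le, hzp.trans hpc.le⟩, by simp [hcy.ne]⟩
          exact absurd (hmax c hcNE) (not_le_of_gt hpc)
        have hpy' : p ⋖ y' := by
          refine ⟨lt_of_le_of_ne hpley' hpney', fun c hpc hcy => ?_⟩
          have hcNE : c ∈ NE := by
            rw [hNE']
            exact ⟨⟨⟨hmp.trans hpc.le, hcy.le⟩, hwp.trans hpc.le, hzp.trans hpc.le⟩,
              by simp [hcy.ne]⟩
          exact absurd (hmax c hcNE) (not_le_of_gt hpc)
        obtain ⟨V, HDI, hIcc4, hVno, hyV, hy'V, hlt⟩ := diamond hP hpy hpy' hne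
        refine ⟨V, HDI, fun x hx => ?_⟩
        rcases lt_or_eq_of_le hx with h | h
        · rcases hlt x h with h2 | h2
          · exact Or.inl h2
          · exact Or.inr (Or.inl h2)
        · exact Or.inr (Or.inr (h ▸ hyV.1.le : y ≤ x))
      | succ j ih =>
        intro p hp hcard
        obtain ⟨hmp, hwp, hzp, hpley, hpney, hpley', hpney'⟩ := hfacts p hp
        have hQne : {x ∈ NE | p < x}.Nonempty :=
          Set.nonempty_of_ncard_ne_zero (by rw [hcard]; omega)
        obtain ⟨q, hqQ, hqmin⟩ := chain_min (hNEchain.mono (Set.sep_subset _ _)) hQne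
        have hqNE : q ∈ NE := hqQ.1
        obtain ⟨hmq, hwq, hzq, hqley, hqney, hqley', hqney'⟩ := hfacts q hqNE
        have hpq : p < q := hqQ.2
        have hcard' : {x ∈ NE | q < x}.ncard = j := by
          have he : {x ∈ NE | q < x} = {x ∈ NE | p < x} \ {q} := by
            ext x
            constructor
            · intro ⟨hx, hqx⟩
              exact ⟨⟨hx, hpq.trans hqx⟩, by simp [hqx.ne']⟩
            · intro ⟨⟨hx, hpx⟩, hxq⟩
              exact ⟨hx, lt_of_le_of_ne (hqmin x ⟨hx, hpx⟩) (by simpa [eq_comm] using hxq)⟩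
          rw [he, Set.ncard_diff_singleton_of_mem hqQ, hcard]
          omega
        obtain ⟨V, HV, hinv⟩ := ih q hqNE hcard'
        have hqV : q ≤ V := HV.1
        have hyIcc : y ∈ Set.Icc q V := wIcc HV
        have hy'Icc : y' ∈ Set.Icc q V := zIcc HV
        have hyV : y ≤ V := hyIcc.2
        have hy'V : y' ≤ V := hy'Icc.2
        have hpnotin : p ∉ Set.Icc q V := fun hmem => absurd hmem.1 (not_le_of_gt hpq)
        have hple : ∀ x ∈ Set.Icc q V, p ≤ x := fun x hx => hpq.le.trans hx.1
        have hmemS' : ∀ e, p ≤ e → e ≤ V → e ∈ insert p (Set.Icc q V) := by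
          intro e hpe heV
          rcases hinv e heV with h | h | h
          · rcases eq_or_ne e p with rfl | hep
            · exact Set.mem_insert_iff.mpr (Or.inl rfl)
            · have heN : e ∈ dNeck m y w z :=
                ⟨⟨hmp.trans hpe, h⟩, hwp.trans hpe, hzp.trans hpe⟩
              rcases eq_or_ne e y with rfl | hey
              · exact Set.mem_insert_iff.mpr (Or.inr ⟨hqley, hyV⟩)
              · have heQ : e ∈ {x ∈ NE | p < x} :=
                  ⟨⟨heN, by simp [hey]⟩, lt_of_le_of_ne hpe (Ne.symm hep)⟩
                exact Set.mem_insert_iff.mpr (Or.inr ⟨hqmin e heQ, h.trans hyV⟩)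
          · rcases eq_or_ne e p with rfl | hep
            · exact Set.mem_insert_iff.mpr (Or.inl rfl)
            · have heN : e ∈ dNeck m y' w z :=
                ⟨⟨hmp.trans hpe, h⟩, hwp.trans hpe, hzp.trans hpe⟩
              rcases eq_or_ne e y' with rfl | hey
              · exact Set.mem_insert_iff.mpr (Or.inr ⟨hqley', hy'V⟩)
              · have heQ : e ∈ {x ∈ NE | p < x} :=
                  ⟨by rw [hNE']; exact ⟨heN, by simp [hey]⟩, lt_of_le_of_ne hpe (Ne.symm hep)⟩
                exact Set.mem_insert_iff.mpr (Or.inr ⟨hqmin e heQ, h.trans hy'V⟩)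
          · exact Set.mem_insert_iff.mpr (Or.inr ⟨hqley.trans h, heV⟩)
        have hconv : IsConvexSet (insert p (Set.Icc q V)) := by
          intro a ha b hb e hae heb
          rcases Set.mem_insert_iff.mp ha with hap | ha
          · rcases Set.mem_insert_iff.mp hb with hbp | hb
            · exact Set.mem_insert_iff.mpr (Or.inl (le_antisymm (hbp ▸ heb) (hap ▸ hae)))
            · exact hmemS' e (hap ▸ hae) (heb.trans hb.2)
          · rcases Set.mem_insert_iff.mp hb with hbp | hb
            · exact absurd (ha.1.trans (hae.trans (hbp ▸ heb))) (not_le_of_gt hpq)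
            · exact Set.mem_insert_iff.mpr (Or.inr ⟨ha.1.trans hae, heb.trans hb.2⟩)
        have htailS' : {x ∈ insert p (Set.Icc q V) | x ≤ y ∧ x ≤ y'} =
            insert p (dTail q V y y') := by
          ext x
          simp only [Set.mem_sep_iff, Set.mem_insert_iff]
          constructor
          · rintro ⟨rfl | hx, h1, h2⟩
            · exact Or.inl rfl
            · exact Or.inr ⟨hx, h1, h2⟩
          · rintro (rfl | hx)
            · exact ⟨Or.inl rfl, hpley, hpley'⟩
            · exact ⟨Or.inr hx.1, hx.2⟩
        have hneckS' : {x ∈ insert p (Set.Icc q V) | y ≤ x ∧ y' ≤ x} = dNeck q V y y' := by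
          ext x
          simp only [Set.mem_sep_iff, Set.mem_insert_iff]
          constructor
          · rintro ⟨rfl | hx, h1, h2⟩
            · exact absurd (le_antisymm h1 hpley).symm hpney
            · exact ⟨hx, h1, h2⟩
          · intro hx
            exact ⟨Or.inr hx.1, hx.2⟩
        have hminus : IsDkMinusConvex (j + 4) (insert p (Set.Icc q V)) := by
          refine ⟨hconv, y, y', ⟨by omega, Set.mem_insert_iff.mpr (Or.inr hyIcc),
            Set.mem_insert_iff.mpr (Or.inr hy'Icc), hyy', hy'y, ?_, ?_, ?_, ?_⟩, ?_⟩
          · intro x hx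
            rcases Set.mem_insert_iff.mp hx with rfl | hx
            · exact Or.inr (Or.inr (Or.inl ⟨hpley, hpley'⟩))
            · exact HV.2.1.2.2.2.2.2.1 x hx
          · rw [htailS']
            exact (tail_chain HV).insert (fun x hx _ => Or.inl (hple x hx.1))
          · rw [hneckS']
            exact neck_chain HV
          · rw [htailS', Set.ncard_insert_of_notMem (fun hmem => hpnotin hmem.1),
              tail_ncard HV]
            omega
          · rw [hneckS', neck_ncard HV]
            omega
        obtain ⟨V', hV'S, a1, hIkd1, hIcc1⟩ := hP.1 (j + 4) _ hminus
        have hyS' : y ∈ insert p (Set.Icc q V) := Set.mem_insert_iff.mpr (Or.inr hyIcc)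
        have ha1 : a1 = p := by
          have hle1 : ∀ r ∈ insert p (Set.Icc q V), a1 ≤ r := by
            intro r hr
            have : r ∈ Set.Icc a1 V' := by
              rw [hIcc1]; exact Set.mem_insert_iff.mpr (Or.inr hr)
            exact this.1
          have ha1mem : a1 ∈ insert V' (insert p (Set.Icc q V)) := by
            rw [← hIcc1]
            obtain ⟨w0, z0, hw0⟩ := hIkd1
            exact ⟨le_refl _, hw0.1⟩
          rcases Set.mem_insert_iff.mp ha1mem with heq | hmem
          · exfalso
            have hyIcc1 : y ∈ Set.Icc a1 V' := by
              rw [hIcc1]; exact Set.mem_insert_iff.mpr (Or.inr hyS')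
            have : y = V' := le_antisymm hyIcc1.2 (heq ▸ hyIcc1.1)
            exact hV'S (this ▸ hyS')
          · rcases Set.mem_insert_iff.mp hmem with rfl | hIccqV
            · rfl
            · exact absurd ((hle1 p (Set.mem_insert_iff.mpr (Or.inl rfl))).trans' hIccqV.1)
                (not_le_of_gt hpq)
        rw [ha1] at hIcc1
        have hyIccV' : y ∈ Set.Icc p V' := by
          rw [hIcc1]; exact Set.mem_insert_iff.mpr (Or.inr hyS')
        have hy'IccV' : y' ∈ Set.Icc p V' := by
          rw [hIcc1]
          exact Set.mem_insert_iff.mpr (Or.inr (Set.mem_insert_iff.mpr (Or.inr hy'Icc)))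
        have hyleV' : y ≤ V' := hyIccV'.2
        have hy'leV' : y' ≤ V' := hy'IccV'.2
        have hV'ne : V' ∉ insert p (Set.Icc q V) := hV'S
        have hV'ney : ¬ V' ≤ y := by
          intro hle2
          exact hV'ne (hyleV'.antisymm hle2 ▸ hyS')
        have hV'ney' : ¬ V' ≤ y' := by
          intro hle2
          exact hV'ne (hy'leV'.antisymm hle2 ▸
            (Set.mem_insert_iff.mpr (Or.inr hy'Icc) : y' ∈ insert p (Set.Icc q V)))
        have htailV' : {x ∈ Set.Icc p V' | x ≤ y ∧ x ≤ y'} = insert p (dTail q V y y') := by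
          rw [← htailS']
          ext x
          simp only [Set.mem_sep_iff]
          constructor
          · intro ⟨hx, h1, h2⟩
            rw [hIcc1] at hx
            rcases Set.mem_insert_iff.mp hx with rfl | hx
            · exact absurd h1 hV'ney
            · exact ⟨hx, h1, h2⟩
          · intro ⟨hx, h1, h2⟩
            refine ⟨?_, h1, h2⟩
            rw [hIcc1]
            exact Set.mem_insert_iff.mpr (Or.inr hx)
        have hneckV' : {x ∈ Set.Icc p V' | y ≤ x ∧ y' ≤ x} = insert V' (dNeck q V y y') := by
          ext x
          simp only [Set.mem_sep_iff, Set.mem_insert_iff]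
          constructor
          · intro ⟨hx, h1, h2⟩
            rw [hIcc1] at hx
            rcases Set.mem_insert_iff.mp hx with rfl | hx
            · exact Or.inl rfl
            · rcases Set.mem_insert_iff.mp hx with rfl | hx
              · exact absurd (le_antisymm h1 hpley).symm hpney
              · exact Or.inr ⟨hx, h1, h2⟩
          · rintro (rfl | hx)
            · refine ⟨?_, hyleV', hy'leV'⟩
              rw [hIcc1]
              exact Set.mem_insert_iff.mpr (Or.inl rfl)
            · refine ⟨?_, hx.2⟩
              rw [hIcc1]
              exact Set.mem_insert_iff.mpr (Or.inr (Set.mem_insert_iff.mpr (Or.inr hx.1)))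
        have HDI' : IsDkIntervalWith (j + 1 + 3) p V' y y' := by
          refine ⟨hyIccV'.1.trans hyleV', ⟨by omega, hyIccV', hy'IccV', hyy', hy'y,
            ?_, ?_, ?_, ?_⟩, ?_⟩
          · intro x hx
            rw [hIcc1] at hx
            rcases Set.mem_insert_iff.mp hx with rfl | hx
            · exact Or.inr (Or.inr (Or.inr ⟨hyleV', hy'leV'⟩))
            · rcases Set.mem_insert_iff.mp hx with rfl | hx
              · exact Or.inr (Or.inr (Or.inl ⟨hpley, hpley'⟩))
              · exact HV.2.1.2.2.2.2.2.1 x hx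
          · rw [htailV']
            exact (tail_chain HV).insert (fun x hx _ => Or.inl (hple x hx.1))
          · rw [hneckV']
            refine (neck_chain HV).insert (fun x hx _ => Or.inr ?_)
            have : x ∈ Set.Icc p V' := by
              rw [hIcc1]
              exact Set.mem_insert_iff.mpr (Or.inr (Set.mem_insert_iff.mpr (Or.inr hx.1)))
            exact this.2
          · rw [htailV', Set.ncard_insert_of_notMem (fun hmem => hpnotin hmem.1),
              tail_ncard HV]
            omega
          · rw [hneckV', Set.ncard_insert_of_notMem
              (fun hmem => hV'ne (Set.mem_insert_iff.mpr (Or.inr hmem.1))), neck_ncard HV]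
            omega
        refine ⟨V', HDI', fun x hx => ?_⟩
        rcases lt_or_eq_of_le hx with hlt | heq
        · obtain ⟨c, hcIcc, hcne, hxc⟩ := below_top hP HDI' hlt
          rw [hIcc1] at hcIcc
          rcases Set.mem_insert_iff.mp hcIcc with rfl | hc
          · exact absurd rfl hcne
          · rcases Set.mem_insert_iff.mp hc with rfl | hc
            · exact Or.inl (hxc.trans hpley)
            · exact hinv x (hxc.trans hc.2)
        · exact Or.inr (Or.inr (heq ▸ hyleV' : y ≤ x))
    -- ======== finale for k ≥ 4 ========
    have hNEne : NE.Nonempty := Set.nonempty_of_ncard_ne_zero (by rw [hNEcard]; omega)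
    obtain ⟨p1, hp1, hp1min⟩ := chain_min hNEchain hNEne
    obtain ⟨hmp1, hwp1, hzp1, hp1ley, hp1ney, hp1ley', hp1ney'⟩ := hfacts p1 hp1
    have hcard1 : {x ∈ NE | p1 < x}.ncard = k - 4 := by
      have he : {x ∈ NE | p1 < x} = NE \ {p1} := by
        ext x
        constructor
        · intro ⟨hx, hpx⟩
          exact ⟨hx, by simp [hpx.ne']⟩
        · intro ⟨hx, hxp⟩
          exact ⟨hx, lt_of_le_of_ne (hp1min x hx) (by simpa [eq_comm] using hxp)⟩
      rw [he, Set.ncard_diff_singleton_of_mem hp1, hNEcard]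
      omega
    obtain ⟨V, HV, hinv⟩ := DESC (k - 4) p1 hp1 hcard1
    have hkk : k - 4 + 3 = k - 1 := by omega
    rw [hkk] at HV
    have hyIcc : y ∈ Set.Icc p1 V := wIcc HV
    have hy'Icc : y' ∈ Set.Icc p1 V := zIcc HV
    have hyV : y ≤ V := hyIcc.2
    have hy'V : y' ≤ V := hy'Icc.2
    have hwnotin : w ∉ Set.Icc p1 V := fun hmem => znw H (hzp1.trans hmem.1)
    have hznotin : z ∉ Set.Icc p1 V := fun hmem => wnz H (hwp1.trans hmem.1)
    have hwley : w ≤ y := (wIcc H).2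
    have hzley : z ≤ y := (zIcc H).2
    have hwley' : w ≤ y' := (wIcc H').2
    have hzley' : z ≤ y' := (zIcc H').2
    have hS'mem : ∀ (s : P), s = w ∨ s = z → ∀ e, s ≤ e → e ≤ V →
        e ∈ insert s (Set.Icc p1 V) := by
      rintro s hs e hse heV
      rcases hinv e heV with h | h | h
      · have : e = s ∨ e ∈ dNeck m y w z := by
          rcases hs with rfl | rfl
          · exact above_w H hse h
          · exact above_z H hse h
        rcases this with rfl | heN
        · exact Set.mem_insert_iff.mpr (Or.inl rfl)
        · rcases eq_or_ne e y with rfl | hey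
          · exact Set.mem_insert_iff.mpr (Or.inr hyIcc)
          · have : e ∈ NE := ⟨heN, by simp [hey]⟩
            exact Set.mem_insert_iff.mpr (Or.inr ⟨hp1min e this, h.trans hyV⟩)
      · have : e = s ∨ e ∈ dNeck m y' w z := by
          rcases hs with rfl | rfl
          · exact above_w H' hse h
          · exact above_z H' hse h
        rcases this with rfl | heN
        · exact Set.mem_insert_iff.mpr (Or.inl rfl)
        · rcases eq_or_ne e y' with rfl | hey
          · exact Set.mem_insert_iff.mpr (Or.inr hy'Icc)
          · have : e ∈ NE := by rw [hNE']; exact ⟨heN, by simp [hey]⟩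
            exact Set.mem_insert_iff.mpr (Or.inr ⟨hp1min e this, h.trans hy'V⟩)
      · exact Set.mem_insert_iff.mpr (Or.inr ⟨hp1ley.trans h, heV⟩)
    have hSminus : ∀ (s : P), s = w ∨ s = z → s ≤ p1 → s ∉ Set.Icc p1 V →
        IsDkMinusConvex k (insert s (Set.Icc p1 V)) := by
      intro s hs hsp1 hsnotin
      have hsley : s ≤ y := hsp1.trans hp1ley
      have hsley' : s ≤ y' := hsp1.trans hp1ley'
      have hsple : ∀ x ∈ Set.Icc p1 V, s ≤ x := fun x hx => hsp1.trans hx.1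
      have hconv : IsConvexSet (insert s (Set.Icc p1 V)) := by
        intro a ha b hb e hae heb
        rcases Set.mem_insert_iff.mp ha with hap | ha
        · rcases Set.mem_insert_iff.mp hb with hbp | hb
          · exact Set.mem_insert_iff.mpr (Or.inl (le_antisymm (hbp ▸ heb) (hap ▸ hae)))
          · exact hS'mem s hs e (hap ▸ hae) (heb.trans hb.2)
        · rcases Set.mem_insert_iff.mp hb with hbp | hb
          · exfalso
            have hps : p1 ≤ s := ha.1.trans (hae.trans (hbp ▸ heb))
            rcases hs with rfl | rfl
            · exact znw H (hzp1.trans hps)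
            · exact wnz H (hwp1.trans hps)
          · exact Set.mem_insert_iff.mpr (Or.inr ⟨ha.1.trans hae, heb.trans hb.2⟩)
      have htailS : {x ∈ insert s (Set.Icc p1 V) | x ≤ y ∧ x ≤ y'} =
          insert s (dTail p1 V y y') := by
        ext x
        simp only [Set.mem_sep_iff, Set.mem_insert_iff]
        constructor
        · rintro ⟨rfl | hx, h1, h2⟩
          · exact Or.inl rfl
          · exact Or.inr ⟨hx, h1, h2⟩
        · rintro (rfl | hx)
          · exact ⟨Or.inl rfl, hsley, hsley'⟩
          · exact ⟨Or.inr hx.1, hx.2⟩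
      have hneckS : {x ∈ insert s (Set.Icc p1 V) | y ≤ x ∧ y' ≤ x} = dNeck p1 V y y' := by
        ext x
        simp only [Set.mem_sep_iff, Set.mem_insert_iff]
        constructor
        · rintro ⟨rfl | hx, h1, h2⟩
          · exfalso
            rcases hs with rfl | rfl
            · exact (w_lt_b H).not_ge h1
            · exact (z_lt_b H).not_ge h1
          · exact ⟨hx, h1, h2⟩
        · intro hx
          exact ⟨Or.inr hx.1, hx.2⟩
      refine ⟨hconv, y, y', ⟨hk3 H, Set.mem_insert_iff.mpr (Or.inr hyIcc),
        Set.mem_insert_iff.mpr (Or.inr hy'Icc), hyy', hy'y, ?_, ?_, ?_, ?_⟩, ?_⟩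
      · intro x hx
        rcases Set.mem_insert_iff.mp hx with rfl | hx
        · exact Or.inr (Or.inr (Or.inl ⟨hsley, hsley'⟩))
        · exact HV.2.1.2.2.2.2.2.1 x hx
      · rw [htailS]
        exact (tail_chain HV).insert (fun x hx _ => Or.inl (hsple x hx.1))
      · rw [hneckS]
        exact neck_chain HV
      · rw [htailS, Set.ncard_insert_of_notMem (fun hmem => hsnotin hmem.1), tail_ncard HV]
        omega
      · rw [hneckS, neck_ncard HV]
        omega
    have hSw := hSminus w (Or.inl rfl) hwp1 hwnotin
    have hSz := hSminus z (Or.inr rfl) hzp1 hznotin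
    have hdiffeq : insert w (Set.Icc p1 V) \ {w} = insert z (Set.Icc p1 V) \ {z} := by
      have e1 : insert w (Set.Icc p1 V) \ {w} = Set.Icc p1 V := by
        ext x
        constructor
        · intro ⟨hx, hxw⟩
          rcases Set.mem_insert_iff.mp hx with hxw2 | hx2
          · exact absurd hxw2 (by simpa using hxw)
          · exact hx2
        · intro hx
          exact ⟨Set.mem_insert_iff.mpr (Or.inr hx), fun he => hwnotin ((Set.mem_singleton_iff.mp he) ▸ hx)⟩
      have e2 : insert z (Set.Icc p1 V) \ {z} = Set.Icc p1 V := by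
        ext x
        constructor
        · intro ⟨hx, hxz⟩
          rcases Set.mem_insert_iff.mp hx with hxz2 | hx2
          · exact absurd hxz2 (by simpa using hxz)
          · exact hx2
        · intro hx
          exact ⟨Set.mem_insert_iff.mpr (Or.inr hx), fun he => hznotin ((Set.mem_singleton_iff.mp he) ▸ hx)⟩
      rw [e1, e2]
    have heq := hP.2.2 k k _ _ hSw hSz w (Set.mem_insert_iff.mpr (Or.inl rfl))
      z (Set.mem_insert_iff.mpr (Or.inl rfl))
      (by
        intro x hx
        rcases Set.mem_insert_iff.mp hx with rfl | hx
        · exact le_rfl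
        · exact hwp1.trans hx.1)
      (by
        intro x hx
        rcases Set.mem_insert_iff.mp hx with rfl | hx
        · exact le_rfl
        · exact hzp1.trans hx.1)
      hdiffeq
    have : w ∈ insert z (Set.Icc p1 V) := heq ▸ Set.mem_insert_iff.mpr (Or.inl rfl)
    rcases Set.mem_insert_iff.mp this with he | he
    · exact wzne H he
    · exact hwnotin he

omit hP in
lemma up_lt {m t : P} (h : m < t) :
    {x | t < x}.ncard < {x | m < x}.ncard := by
  exact Set.ncard_lt_ncard
    ((Set.ssubset_iff_of_subset (fun x hx => h.trans hx)).mpr ⟨t, h, lt_irrefl t⟩)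
    (Set.toFinite _)

lemma bottom_unique_aux : ∀ (n : ℕ) (m : P), {x | m < x}.ncard ≤ n →
    ∀ {k k' : ℕ} {y y' w z w' z' : P}, IsDkIntervalWith k m y w z →
      IsDkIntervalWith k' m y' w' z' → y = y' ∧ k = k' := by
  intro n
  induction n with
  | zero =>
    intro m hm k k' y y' w z w' z' Hy Hy'
    exfalso
    have h1 : {x | m < x} = ∅ := (Set.ncard_eq_zero (Set.toFinite _)).mp (Nat.le_zero.mp hm)
    exact absurd (h1 ▸ (a_lt_b Hy : m < y)) (Set.notMem_empty y)
  | succ n ih =>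
    intro m hm k k' y y' w z w' z' Hy Hy'
    have IH : ∀ t, m < t → ∀ {k k' : ℕ} {y y' w z w' z' : P}, IsDkIntervalWith k t y w z →
        IsDkIntervalWith k' t y' w' z' → y = y' ∧ k = k' := by
      intro t ht
      have hcard : {x | t < x}.ncard ≤ n := by
        have := up_lt ht
        omega
      exact fun {k k' y y' w z w' z'} H1 H2 => ih t hcard H1 H2
    -- ============ the mixed-case contradiction ============
    have hB : ∀ {kb : ℕ} {yb yb' wb zb wb' zb' : P}, IsDkIntervalWith 3 m yb wb zb →
        IsDkIntervalWith kb m yb' wb' zb' → 4 ≤ kb → False := by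
      intro kb yb yb' wb zb wb' zb' I3 I' hkb4
      -- m is covered by wb and zb
      obtain ⟨tt0, htt0T, _, htt0w, htt0z⟩ := toptail I3
      have htt0m : tt0 = m := by
        have := htt0T
        rw [tail_eq_k3 I3 rfl] at this
        simpa using this
      rw [htt0m] at htt0w htt0z
      -- second tail element of I'
      obtain ⟨t', htT', hmt', htmin', htuniq'⟩ := secondtail I' hkb4
      have ht'wz : t' = wb ∨ t' = zb := by
        by_contra hcon
        push_neg at hcon
        exact no_three_covers hP htt0w htt0z hmt' (wzne I3) (Ne.symm hcon.1) (Ne.symm hcon.2)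
      -- wlog t' = wb, by swapping the sides of I3
      have hcore : ∀ (wc zc : P), IsDkIntervalWith 3 m yb wc zc → t' = wc → False := by
        intro wc zc I3c ht'w
        subst ht'w
        have hzny' : ¬ zc ≤ yb' := by
          intro hle
          exact Ne.symm (wzne I3c) (htuniq' zc (by
            obtain ⟨tt1, htt1T, _, htt1w, htt1z⟩ := toptail I3c
            have htt1m : tt1 = m := by
              have := htt1T
              rw [tail_eq_k3 I3c rfl] at this
              simpa using this
            exact htt1m ▸ htt1z) hle)
        have hyny' : ¬ yb ≤ yb' := fun hle => hzny' ((zIcc I3c).2.trans hle)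
        -- wc = t' is covered by yb
        have hwy : t' ⋖ yb := by
          obtain ⟨nm, hnmN, _, hw2, hz2⟩ := neckmin I3c
          rw [neck_eq_k3 I3c rfl] at hnmN
          exact (Set.mem_singleton_iff.mp hnmN) ▸ hw2
        have ht'lew' : t' ≤ wb' := htT'.2.1
        have hw'ley' : wb' ≤ yb' := (wIcc I').2
        rcases eq_or_lt_of_le hkb4 with hkb4e | hkb5
        · -- kb = 4 : tail of I' is {m, t'}
          have htset : dTail m yb' wb' zb' = {m, t'} := by
            refine (Set.eq_of_subset_of_ncard_le ?_ ?_ (Set.toFinite _)).symm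
            · rintro x (rfl | rfl)
              · exact a_mem_tail I'
              · exact htT'
            · rw [tail_ncard I', ← hkb4e, Set.ncard_pair (hmt'.1.ne)]
          obtain ⟨tt, httT, httmax, httw', httz'⟩ := toptail I'
          have htt : tt = t' := by
            rw [htset] at httT
            rcases httT with h | h
            · exfalso
              exact hmt'.1.not_ge (h ▸ httmax t' htT')
            · exact h
          rw [htt] at httw' httz'
          exact no_three_covers hP httw' httz' hwy (wzne I')
            (fun he => hyny' (he ▸ hw'ley')) (fun he => hyny' (he ▸ (zIcc I').2))
        · -- kb ≥ 5
          obtain ⟨t1, n1, hcovt1, hn1lt, I'', hIccsub, hnmax1, huniq1⟩ :=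
            subinterval I' (by omega)
          have ht1 : t1 = t' := (huniq1 t' hmt' (ht'lew'.trans hw'ley')).symm
          rw [ht1] at I'' hIccsub hcovt1
          obtain ⟨t3, ht3T, hwcovt3, ht3min, ht3uniq⟩ := secondtail I'' (by omega)
          have ht3ley' : t3 ≤ yb' := ht3T.2.1.trans ((wIcc I'').2.trans hn1lt.le)
          have hynet3 : yb ≠ t3 := fun he => hyny' (he ▸ ht3ley')
          obtain ⟨u, HDu, _, _, hyu, ht3u, _⟩ := diamond hP hwy hwcovt3 hynet3
          have hunley' : ¬ u ≤ yb' := fun hle => hyny' (hyu.1.le.trans hle)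
          rcases eq_or_lt_of_le (show 5 ≤ kb by omega) with hkb5e | hkb6
          · -- kb = 5 : tail of I'' is {t', t3}
            have htset : dTail t' n1 wb' zb' = {t', t3} := by
              refine (Set.eq_of_subset_of_ncard_le ?_ ?_ (Set.toFinite _)).symm
              · rintro x (rfl | rfl)
                · exact a_mem_tail I''
                · exact ht3T
              · rw [tail_ncard I'', ← hkb5e, Set.ncard_pair (hwcovt3.1.ne)]
            obtain ⟨tt, httT, httmax, httw', httz'⟩ := toptail I''
            have htt : tt = t3 := by
              rw [htset] at httT
              rcases httT with h | h
              · exfalso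
                exact hwcovt3.1.not_ge (h ▸ httmax t3 ht3T)
              · exact h
            rw [htt] at httw' httz'
            exact no_three_covers hP httw' httz' ht3u (wzne I'')
              (fun he => hunley' (he ▸ hw'ley')) (fun he => hunley' (he ▸ (zIcc I').2))
          · -- kb ≥ 6
            obtain ⟨ts, n2, hcovts, hn2lt, I''', hIccsub2, hnmax2, huniq2⟩ :=
              subinterval I'' (by omega)
            have hts : ts = t3 :=
              (huniq2 t3 hwcovt3 (ht3T.2.1.trans (wIcc I'').2)).symm
            rw [hts] at I''' hIccsub2 hcovts
            obtain ⟨t4, ht4T, ht3covt4, _, _⟩ := secondtail I''' (by omega)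
            have ht4ley' : t4 ≤ yb' :=
              ht4T.2.1.trans ((wIcc I''').2.trans (hn2lt.le.trans hn1lt.le))
            have hne4 : t4 ≠ u := fun he => hunley' (he ▸ ht4ley')
            obtain ⟨u2, HDu2, _⟩ := diamond hP ht3covt4 ht3u hne4
            have hm3 : m < t3 := hmt'.1.trans hwcovt3.1
            obtain ⟨_, h3k⟩ := IH t3 hm3 HDu2 I'''
            omega
      rcases ht'wz with h | h
      · exact hcore wb zb I3 h
      · exact hcore zb wb (swap_sides I3) h
    -- ============ main case analysis ============
    rcases eq_or_lt_of_le (hk3 Hy) with hke | hk4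
    · rcases eq_or_lt_of_le (hk3 Hy') with hke' | hk4'
      · -- both are diamonds
        have hk : k = 3 := hke.symm
        have hk' : k' = 3 := hke'.symm
        subst hk hk'
        obtain ⟨tt0, htt0T, _, htt0w, htt0z⟩ := toptail Hy
        have htt0m : tt0 = m := by
          have := htt0T
          rw [tail_eq_k3 Hy rfl] at this
          simpa using this
        rw [htt0m] at htt0w htt0z
        obtain ⟨tt1, htt1T, _, htt1w, htt1z⟩ := toptail Hy'
        have htt1m : tt1 = m := by
          have := htt1T
          rw [tail_eq_k3 Hy' rfl] at this
          simpa using this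
        rw [htt1m] at htt1w htt1z
        -- {w', z'} = {w, z}
        have hw' : w' = w ∨ w' = z := by
          by_contra hcon
          push_neg at hcon
          exact no_three_covers hP htt0w htt0z htt1w (wzne Hy) (Ne.symm hcon.1) (Ne.symm hcon.2)
        have hz' : z' = w ∨ z' = z := by
          by_contra hcon
          push_neg at hcon
          exact no_three_covers hP htt0w htt0z htt1z (wzne Hy) (Ne.symm hcon.1) (Ne.symm hcon.2)
        have Hy'n : IsDkIntervalWith 3 m y' w z := by
          rcases hw' with h1 | h1 <;> rcases hz' with h2 | h2
          · exact absurd (h1.trans h2.symm) (wzne Hy')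
          · rw [← h1, ← h2]; exact Hy'
          · rw [← h1, ← h2]; exact swap_sides Hy'
          · exact absurd (h1.trans h2.symm) (wzne Hy')
        have hE : Set.Icc m y \ {y} = Set.Icc m y' \ {y'} := by
          have e1 : Set.Icc m y \ {y} = {m, w, z} := by
            rw [Icc_eq_k3 Hy rfl]
            ext x
            simp only [Set.mem_diff, Set.mem_insert_iff, Set.mem_singleton_iff]
            constructor
            · rintro ⟨h1, h2⟩
              rcases h1 with rfl | rfl | rfl | rfl
              · exact Or.inl rfl
              · exact Or.inr (Or.inl rfl)
              · exact Or.inr (Or.inr rfl)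
              · exact absurd rfl h2
            · rintro (rfl | rfl | rfl)
              · exact ⟨Or.inl rfl, (a_lt_b Hy).ne⟩
              · exact ⟨Or.inr (Or.inl rfl), (w_lt_b Hy).ne⟩
              · exact ⟨Or.inr (Or.inr (Or.inl rfl)), (z_lt_b Hy).ne⟩
          have e2 : Set.Icc m y' \ {y'} = {m, w, z} := by
            rw [Icc_eq_k3 Hy'n rfl]
            ext x
            simp only [Set.mem_diff, Set.mem_insert_iff, Set.mem_singleton_iff]
            constructor
            · rintro ⟨h1, h2⟩
              rcases h1 with rfl | rfl | rfl | rfl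
              · exact Or.inl rfl
              · exact Or.inr (Or.inl rfl)
              · exact Or.inr (Or.inr rfl)
              · exact absurd rfl h2
            · rintro (rfl | rfl | rfl)
              · exact ⟨Or.inl rfl, (a_lt_b Hy'n).ne⟩
              · exact ⟨Or.inr (Or.inl rfl), (w_lt_b Hy'n).ne⟩
              · exact ⟨Or.inr (Or.inr (Or.inl rfl)), (z_lt_b Hy'n).ne⟩
          rw [e1, e2]
        exact ⟨top_unique hP Hy Hy'n hE, rfl⟩
      · rw [← hke] at Hy
        exact (hB Hy Hy' (by omega)).elim
    · rcases eq_or_lt_of_le (hk3 Hy') with hke' | hk4'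
      · rw [← hke'] at Hy'
        exact (hB Hy' Hy (by omega)).elim
      · -- both have k ≥ 4
        obtain ⟨t, nn, hcovt, hnlt, Isub, hIccEq, hmax, huniq⟩ := subinterval Hy (by omega)
        obtain ⟨t', nn', hcovt', hnlt', Isub', hIccEq', hmax', huniq'⟩ :=
          subinterval Hy' (by omega)
        have htt' : t = t' := by
          by_contra hcon
          obtain ⟨u, HDu, _⟩ := diamond hP hcovt hcovt' hcon
          exact hB HDu Hy (by omega)
        rw [← htt'] at Isub' hIccEq'
        obtain ⟨hnn, hkk⟩ := IH t hcovt.1 Isub Isub'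
        rw [← hnn] at Isub' hIccEq'
        have hkeq : k = k' := by omega
        -- sides agree up to swap
        have hsides := side_pair_unique Isub Isub'
        have Hy'n : IsDkIntervalWith k' m y' w z := by
          rcases hsides with ⟨h1, h2⟩ | ⟨h1, h2⟩
          · rw [← h1, ← h2]; exact Hy'
          · rw [← h1, ← h2]; exact swap_sides Hy'
        have hE : Set.Icc m y \ {y} = Set.Icc m y' \ {y'} := by
          have e1 : Set.Icc m y \ {y} = insert m (Set.Icc t nn) := by
            rw [hIccEq]
            ext x
            simp only [Set.mem_diff, Set.mem_insert_iff, Set.mem_singleton_iff]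
            constructor
            · rintro ⟨h1, h2⟩
              rcases eq_or_ne x m with rfl | hxm
              · exact Or.inl rfl
              · refine Or.inr ⟨h1, ?_⟩
                push_neg
                exact ⟨hxm, by simpa using h2⟩
            · rintro (rfl | ⟨h1, h2⟩)
              · exact ⟨⟨le_rfl, (a_lt_b Hy).le⟩, (a_lt_b Hy).ne⟩
              · push_neg at h2
                exact ⟨h1, h2.2⟩
          have e2 : Set.Icc m y' \ {y'} = insert m (Set.Icc t nn) := by
            rw [hIccEq']
            ext x
            simp only [Set.mem_diff, Set.mem_insert_iff, Set.mem_singleton_iff]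
            constructor
            · rintro ⟨h1, h2⟩
              rcases eq_or_ne x m with rfl | hxm
              · exact Or.inl rfl
              · refine Or.inr ⟨h1, ?_⟩
                push_neg
                exact ⟨hxm, by simpa using h2⟩
            · rintro (rfl | ⟨h1, h2⟩)
              · exact ⟨⟨le_rfl, (a_lt_b Hy').le⟩, (a_lt_b Hy').ne⟩
              · push_neg at h2
                exact ⟨h1, h2.2⟩
          rw [e1, e2]
        subst hkeq
        exact ⟨top_unique hP Hy Hy'n hE, rfl⟩

lemma bottom_unique {m u u' : P} (h : IsDInterval m u) (h' : IsDInterval m u') : u = u' := by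
  obtain ⟨ku, wu, zu, Hu⟩ := h
  obtain ⟨ku', wu', zu', Hu'⟩ := h'
  exact (bottom_unique_aux hP ({x | m < x}).ncard m le_rfl Hu Hu').1

end DC

def WithinRel (S : Set P) (a b : P) : Prop :=
  Relation.EqvGen (fun x y => x ∈ S ∧ y ∈ S ∧ IsDInterval x y) a b

lemma wtrans {S : Set P} {x y z : P} (h1 : WithinRel S x y) (h2 : WithinRel S y z) :
    WithinRel S x z := Relation.EqvGen.trans x y z h1 h2

lemma wsymm {S : Set P} {x y : P} (h1 : WithinRel S x y) : WithinRel S y x :=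
  Relation.EqvGen.symm x y h1

lemma isDInterval_lt {a b : P} (h : IsDInterval a b) : a < b := by
  obtain ⟨k, w, z, H⟩ := h
  exact a_lt_b H

lemma diag_to_within {a b : P} (h : DiagRel a b) : WithinRel Set.univ a b :=
  Relation.EqvGen.mono (fun x y hxy => ⟨trivial, trivial, hxy⟩) _ _ h

section Peel
variable [Fintype P] (hP : IsDComplete P)
include hP

lemma peel {S : Set P} {m : P} (hS : IsUpperSet S) (hmS : m ∉ S)
    (hup : ∀ x, m < x → x ∈ S) {a b : P} (ha : a ∈ S) (hb : b ∈ S)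
    (h : WithinRel (insert m S) a b) : WithinRel S a b := by
  let Conn : P → Prop := fun t => t ∈ S ∧ ∃ u, IsDInterval m u ∧ u ∈ S ∧ WithinRel S u t
  let R : P → P → Prop := fun x y => x = y ∨ (x ∈ S ∧ y ∈ S ∧ WithinRel S x y) ∨
    (x = m ∧ Conn y) ∨ (y = m ∧ Conn x)
  have hR : R a b := by
    clear ha hb
    induction h with
    | rel x y hxy =>
      obtain ⟨hx, hy, hd⟩ := hxy
      rcases Set.mem_insert_iff.mp hx with hxm | hxS
      · rcases Set.mem_insert_iff.mp hy with hym | hyS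
        · exact Or.inl (hxm.trans hym.symm)
        · exact Or.inr (Or.inr (Or.inl ⟨hxm, hyS, y, hxm ▸ hd, hyS,
            Relation.EqvGen.refl y⟩))
      · rcases Set.mem_insert_iff.mp hy with hym | hyS
        · exact absurd (hS (hym ▸ (isDInterval_lt hd).le : x ≤ m) hxS) hmS
        · exact Or.inr (Or.inl ⟨hxS, hyS, Relation.EqvGen.rel _ _ ⟨hxS, hyS, hd⟩⟩)
    | refl x => exact Or.inl rfl
    | symm x y _ ihxy =>
      rcases ihxy with he | ⟨hx, hy, hw⟩ | ⟨hx, hc⟩ | ⟨hy, hc⟩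
      · exact Or.inl he.symm
      · exact Or.inr (Or.inl ⟨hy, hx, hw.symm⟩)
      · exact Or.inr (Or.inr (Or.inr ⟨hx, hc⟩))
      · exact Or.inr (Or.inr (Or.inl ⟨hy, hc⟩))
    | trans x y z _ _ ih1 ih2 =>
      rcases ih1 with he | ⟨hx, hy, hw⟩ | ⟨hx, hcy⟩ | ⟨hy, hcx⟩
      · exact he ▸ ih2
      · rcases ih2 with he2 | ⟨hy2, hz, hw2⟩ | ⟨hy2, hcz⟩ | ⟨hz, hcy2⟩
        · exact he2 ▸ Or.inr (Or.inl ⟨hx, hy, hw⟩)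
        · exact Or.inr (Or.inl ⟨hx, hz, wtrans hw hw2⟩)
        · exact absurd (hy2 ▸ hy) hmS
        · obtain ⟨hyS2, u, hdu, huS, hwu⟩ := hcy2
          exact Or.inr (Or.inr (Or.inr ⟨hz, hx, u, hdu, huS, wtrans hwu (wsymm hw)⟩))
      · rcases ih2 with he2 | ⟨hy2, hz, hw2⟩ | ⟨hy2, hcz⟩ | ⟨hz, hcy2⟩
        · exact he2 ▸ Or.inr (Or.inr (Or.inl ⟨hx, hcy⟩))
        · obtain ⟨hyS, u, hdu, huS, hwu⟩ := hcy
          exact Or.inr (Or.inr (Or.inl ⟨hx, hz, u, hdu, huS, wtrans hwu hw2⟩))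
        · exact absurd (hy2 ▸ hcy.1) hmS
        · exact Or.inl (hx.trans hz.symm)
      · rcases ih2 with he2 | ⟨hy2, hz, hw2⟩ | ⟨hy2, hcz⟩ | ⟨hz, hcy2⟩
        · exact he2 ▸ Or.inr (Or.inr (Or.inr ⟨hy, hcx⟩))
        · exact absurd (hy ▸ hy2) hmS
        · obtain ⟨hxS, u, hdu, huS, hwux⟩ := hcx
          obtain ⟨hzS, u', hdu', hu'S, hwu'z⟩ := hcz
          have huu : u = u' := bottom_unique hP hdu hdu'
          exact Or.inr (Or.inl ⟨hxS, hzS, wtrans (wsymm hwux) (huu ▸ hwu'z)⟩)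
        · exact absurd (hy ▸ hcy2.1) hmS
  rcases hR with he | ⟨_, _, hw⟩ | ⟨hx, _⟩ | ⟨hy, _⟩
  · exact he ▸ Relation.EqvGen.refl a
  · exact hw
  · exact absurd (hx ▸ ha) hmS
  · exact absurd (hy ▸ hb) hmS

lemma within_descend : ∀ (n : ℕ) (S : Set P), IsUpperSet S → Sᶜ.ncard ≤ n →
    ∀ a b : P, a ∈ S → b ∈ S → WithinRel Set.univ a b → WithinRel S a b := by
  intro n
  induction n with
  | zero =>
    intro S hS hc a b ha hb h
    have h0 : Sᶜ = ∅ := (Set.ncard_eq_zero (Set.toFinite _)).mp (Nat.le_zero.mp hc)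
    have : S = Set.univ := Set.compl_empty_iff.mp h0
    exact this ▸ h
  | succ n ih =>
    intro S hS hc a b ha hb h
    rcases eq_or_ne Sᶜ ∅ with he | hne
    · have : S = Set.univ := Set.compl_empty_iff.mp he
      exact this ▸ h
    · obtain ⟨m, hm, hmax⟩ := Finite.exists_maximal_wrt id Sᶜ (Set.toFinite _)
        (Set.nonempty_iff_ne_empty.mpr hne)
      have hup : ∀ x, m < x → x ∈ S := by
        intro x hx
        by_contra hxS
        exact hx.ne (hmax x hxS hx.le)
      have hS' : IsUpperSet (insert m S) := by
        intro u v huv hu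
        rcases Set.mem_insert_iff.mp hu with hum | huS
        · rcases eq_or_lt_of_le huv with he2 | hlt
          · exact Set.mem_insert_iff.mpr (Or.inl (he2 ▸ hum))
          · exact Set.mem_insert_iff.mpr (Or.inr (hup v (hum ▸ hlt)))
        · exact Set.mem_insert_iff.mpr (Or.inr (hS huv huS))
      have hcompl : (insert m S)ᶜ = Sᶜ \ {m} := by
        ext x
        simp only [Set.mem_compl_iff, Set.mem_insert_iff, Set.mem_diff,
          Set.mem_singleton_iff]
        tauto
      have hc' : (insert m S)ᶜ.ncard ≤ n := by
        have hpos : 0 < Sᶜ.ncard := (Set.ncard_pos (Set.toFinite _)).mpr ⟨m, hm⟩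
        rw [hcompl, Set.ncard_diff_singleton_of_mem hm]
        omega
      have h' := ih (insert m S) hS' hc' a b (Set.mem_insert_iff.mpr (Or.inr ha))
        (Set.mem_insert_iff.mpr (Or.inr hb)) h
      exact peel hP hS hm hup ha hb h'

end Peel

section Transfer
variable {S : Set P} (hS : IsUpperSet S)
include hS

lemma icc_subset_upper (x y : S) : Set.Icc (x : P) (y : P) ⊆ S :=
  fun _ ht => hS ht.1 x.2

lemma icc_image (x y : S) : Subtype.val '' (Set.Icc x y) = Set.Icc (x : P) (y : P) := by
  ext t
  constructor
  · rintro ⟨u, hu, rfl⟩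
    exact ⟨hu.1, hu.2⟩
  · intro ht
    exact ⟨⟨t, icc_subset_upper hS x y ht⟩, ⟨ht.1, ht.2⟩, rfl⟩

lemma tail_image (x y u v : S) :
    Subtype.val '' {t ∈ Set.Icc x y | t ≤ u ∧ t ≤ v} =
      {t ∈ Set.Icc (x : P) (y : P) | t ≤ (u : P) ∧ t ≤ (v : P)} := by
  ext t
  constructor
  · rintro ⟨s', ⟨hs1, hs2⟩, rfl⟩
    exact ⟨⟨hs1.1, hs1.2⟩, hs2⟩
  · intro ⟨ht, hp⟩
    exact ⟨⟨t, icc_subset_upper hS x y ht⟩, ⟨⟨ht.1, ht.2⟩, hp⟩, rfl⟩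

lemma neck_image (x y u v : S) :
    Subtype.val '' {t ∈ Set.Icc x y | u ≤ t ∧ v ≤ t} =
      {t ∈ Set.Icc (x : P) (y : P) | (u : P) ≤ t ∧ (v : P) ≤ t} := by
  ext t
  constructor
  · rintro ⟨s', ⟨hs1, hs2⟩, rfl⟩
    exact ⟨⟨hs1.1, hs1.2⟩, hs2⟩
  · intro ⟨ht, hp⟩
    exact ⟨⟨t, icc_subset_upper hS x y ht⟩, ⟨⟨ht.1, ht.2⟩, hp⟩, rfl⟩

omit hS in
lemma chain_iff (A : Set S) : IsChain (· ≤ ·) A ↔ IsChain (· ≤ ·) (Subtype.val '' A) := by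
  constructor
  · intro h a ha b hb hne
    obtain ⟨a', ha', rfl⟩ := ha
    obtain ⟨b', hb', rfl⟩ := hb
    have hne' : a' ≠ b' := fun he => hne (congrArg Subtype.val he)
    rcases h ha' hb' hne' with h2 | h2
    · exact Or.inl h2
    · exact Or.inr h2
  · intro h a ha b hb hne
    rcases h (Set.mem_image_of_mem _ ha) (Set.mem_image_of_mem _ hb)
      (fun he => hne (Subtype.val_injective he)) with h2 | h2
    · exact Or.inl h2
    · exact Or.inr h2

lemma dk_transfer (k : ℕ) (x y u v : S) :
    IsDkIntervalWith k x y u v ↔ IsDkIntervalWith k (x : P) (y : P) (u : P) (v : P) := by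
  constructor
  · intro H
    obtain ⟨h1, ⟨hk, hu, hv, huv, hvu, hcl, hc1, hc2, hn1⟩, hn2⟩ := H
    refine ⟨h1, ⟨hk, ?_, ?_, huv, hvu, ?_, ?_, ?_, ?_⟩, ?_⟩
    · rw [← icc_image hS x y]; exact ⟨u, hu, rfl⟩
    · rw [← icc_image hS x y]; exact ⟨v, hv, rfl⟩
    · intro t ht
      rw [← icc_image hS x y] at ht
      obtain ⟨t', ht', rfl⟩ := ht
      rcases hcl t' ht' with h | h | h | h
      · exact Or.inl (congrArg Subtype.val h)
      · exact Or.inr (Or.inl (congrArg Subtype.val h))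
      · exact Or.inr (Or.inr (Or.inl h))
      · exact Or.inr (Or.inr (Or.inr h))
    · rw [← tail_image hS x y u v]
      exact (chain_iff _).mp hc1
    · rw [← neck_image hS x y u v]
      exact (chain_iff _).mp hc2
    · rw [← tail_image hS x y u v, Set.ncard_image_of_injective _ Subtype.val_injective]
      exact hn1
    · rw [← neck_image hS x y u v, Set.ncard_image_of_injective _ Subtype.val_injective]
      exact hn2
  · intro H
    obtain ⟨h1, ⟨hk, hu, hv, huv, hvu, hcl, hc1, hc2, hn1⟩, hn2⟩ := H
    refine ⟨h1, ⟨hk, ⟨hu.1, hu.2⟩, ⟨hv.1, hv.2⟩, huv, hvu, ?_, ?_, ?_, ?_⟩, ?_⟩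
    · intro t ht
      have ht' : (t : P) ∈ Set.Icc (x : P) (y : P) := ⟨ht.1, ht.2⟩
      rcases hcl (t : P) ht' with h | h | h | h
      · exact Or.inl (Subtype.ext h)
      · exact Or.inr (Or.inl (Subtype.ext h))
      · exact Or.inr (Or.inr (Or.inl h))
      · exact Or.inr (Or.inr (Or.inr h))
    · refine (chain_iff _).mpr ?_
      rw [tail_image hS x y u v]
      exact hc1
    · refine (chain_iff _).mpr ?_
      rw [neck_image hS x y u v]
      exact hc2
    · have h := hn1
      rw [← tail_image hS x y u v, Set.ncard_image_of_injective _ Subtype.val_injective] at h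
      exact h
    · have h := hn2
      rw [← neck_image hS x y u v, Set.ncard_image_of_injective _ Subtype.val_injective] at h
      exact h

lemma isDInterval_transfer (x y : S) : IsDInterval x y ↔ IsDInterval (x : P) (y : P) := by
  constructor
  · rintro ⟨k, u, v, H⟩
    exact ⟨k, u, v, (dk_transfer hS k x y u v).mp H⟩
  · rintro ⟨k, u, v, H⟩
    have hu : u ∈ S := icc_subset_upper hS x y H.2.1.2.1
    have hv : v ∈ S := icc_subset_upper hS x y H.2.1.2.2.1
    exact ⟨k, ⟨u, hu⟩, ⟨v, hv⟩, (dk_transfer hS k x y ⟨u, hu⟩ ⟨v, hv⟩).mpr H⟩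

end Transfer
end DProof

/-- For an upper set `S` of a d-complete poset `P`, two elements of `S` are in
the same diagonal of `S` if and only if they are in the same diagonal of `P`. -/
theorem upperSet_diagRel_iff {P : Type*} [PartialOrder P] [Fintype P]
    (hP : IsDComplete P) (S : Set P) (hS : IsUpperSet S) (a b : S) :
    DiagRel a b ↔ DiagRel (a : P) (b : P) := by
  constructor
  · intro h
    induction h with
    | rel x y hxy =>
      exact Relation.EqvGen.rel _ _ ((DProof.isDInterval_transfer hS x y).mp hxy)
    | refl x => exact Relation.EqvGen.refl _
    | symm x y _ ih => exact Relation.EqvGen.symm _ _ ih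
    | trans x y z _ _ ih1 ih2 => exact Relation.EqvGen.trans _ _ _ ih1 ih2
  · intro h
    have h1 : DProof.WithinRel Set.univ (a : P) (b : P) := DProof.diag_to_within h
    have h2 : DProof.WithinRel S (a : P) (b : P) :=
      DProof.within_descend hP (Sᶜ.ncard) S hS le_rfl _ _ a.2 b.2 h1
    have key : ∀ x y : P, DProof.WithinRel S x y → x = y ∨ ∃ (hx : x ∈ S) (hy : y ∈ S),
        DiagRel (⟨x, hx⟩ : S) ⟨y, hy⟩ := by
      intro x y hxy
      induction hxy with
      | rel x y hxy =>
        obtain ⟨hx, hy, hd⟩ := hxy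
        exact Or.inr ⟨hx, hy, Relation.EqvGen.rel _ _
          ((DProof.isDInterval_transfer hS ⟨x, hx⟩ ⟨y, hy⟩).mpr hd)⟩
      | refl x => exact Or.inl rfl
      | symm x y _ ih =>
        rcases ih with he | ⟨hx, hy, hd⟩
        · exact Or.inl he.symm
        · exact Or.inr ⟨hy, hx, Relation.EqvGen.symm _ _ hd⟩
      | trans x y z _ _ ih1 ih2 =>
        rcases ih1 with rfl | ⟨hx, hy, hd⟩
        · exact ih2
        · rcases ih2 with rfl | ⟨hy2, hz, hd2⟩
          · exact Or.inr ⟨hx, hy, hd⟩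
          · exact Or.inr ⟨hx, hz, Relation.EqvGen.trans _ _ _ hd hd2⟩
    rcases key _ _ h2 with he | ⟨hx, hy, hd⟩
    · have hab : a = b := Subtype.ext he
      exact hab ▸ Relation.EqvGen.refl a
    · have ea : (⟨(a : P), hx⟩ : S) = a := Subtype.ext rfl
      have eb : (⟨(b : P), hy⟩ : S) = b := Subtype.ext rfl
      exact ea ▸ eb ▸ hd
end

section
/- Let C and D be adjacent diagonals of a d-complete poset P such that the minimal element of C is a minimal element of P. Then every element of D is adjacent (in the covering relation) to some element of C. -/
variable {P : Type*} [PartialOrder P]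

namespace DCAux

/-- In a finite order, below any strict inequality there is a covering step. -/
lemma exists_covby_le [Finite P] {a b : P} (h : a < b) : ∃ u, a ⋖ u ∧ u ≤ b := by
  obtain ⟨u, hu, hmin⟩ := (wellFounded_lt (α := P)).has_min {m | a < m ∧ m ≤ b} ⟨b, h, le_rfl⟩
  exact ⟨u, ⟨hu.1, fun m hm1 hm2 => hmin m ⟨hm1, le_of_lt (lt_of_lt_of_le hm2 hu.2)⟩ hm2⟩, hu.2⟩

section Ivl
variable {k : ℕ} {x y w z : P}

lemma dkStruct_swap {S : Set P} (h : DkStruct k S w z) : DkStruct k S z w := by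
  obtain ⟨h1, h2, h3, h4, h5, h6, h7, h8, h9⟩ := h
  have e1 : {m ∈ S | m ≤ z ∧ m ≤ w} = {m ∈ S | m ≤ w ∧ m ≤ z} := by
    ext m; exact ⟨fun ⟨a, b, c⟩ => ⟨a, c, b⟩, fun ⟨a, b, c⟩ => ⟨a, c, b⟩⟩
  have e2 : {m ∈ S | z ≤ m ∧ w ≤ m} = {m ∈ S | w ≤ m ∧ z ≤ m} := by
    ext m; exact ⟨fun ⟨a, b, c⟩ => ⟨a, c, b⟩, fun ⟨a, b, c⟩ => ⟨a, c, b⟩⟩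
  refine ⟨h1, h3, h2, h5, h4, fun m hm => ?_, by rw [e1]; exact h7, by rw [e2]; exact h8,
    by rw [e1]; exact h9⟩
  rcases h6 m hm with h | h | ⟨a, b⟩ | ⟨a, b⟩
  · exact Or.inr (Or.inl h)
  · exact Or.inl h
  · exact Or.inr (Or.inr (Or.inl ⟨b, a⟩))
  · exact Or.inr (Or.inr (Or.inr ⟨b, a⟩))

lemma ivl_swap (h : IsDkIntervalWith k x y w z) : IsDkIntervalWith k x y z w := by
  obtain ⟨h1, h2, h3⟩ := h
  have e2 : {m ∈ Set.Icc x y | z ≤ m ∧ w ≤ m} = {m ∈ Set.Icc x y | w ≤ m ∧ z ≤ m} := by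
    ext m; exact ⟨fun ⟨a, b, c⟩ => ⟨a, c, b⟩, fun ⟨a, b, c⟩ => ⟨a, c, b⟩⟩
  exact ⟨h1, dkStruct_swap h2, by rw [e2]; exact h3⟩

lemma ivl_k3 (h : IsDkIntervalWith k x y w z) : 3 ≤ k := h.2.1.1

lemma ivl_w_mem (h : IsDkIntervalWith k x y w z) : w ∈ Set.Icc x y := h.2.1.2.1

lemma ivl_z_mem (h : IsDkIntervalWith k x y w z) : z ∈ Set.Icc x y := h.2.1.2.2.1

lemma ivl_nwz (h : IsDkIntervalWith k x y w z) : ¬ w ≤ z := h.2.1.2.2.2.1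

lemma ivl_nzw (h : IsDkIntervalWith k x y w z) : ¬ z ≤ w := h.2.1.2.2.2.2.1

lemma ivl_class (h : IsDkIntervalWith k x y w z) :
    ∀ m ∈ Set.Icc x y, m = w ∨ m = z ∨ (m ≤ w ∧ m ≤ z) ∨ (w ≤ m ∧ z ≤ m) :=
  h.2.1.2.2.2.2.2.1

lemma ivl_x_lt_w (h : IsDkIntervalWith k x y w z) : x < w := by
  have hw := ivl_w_mem h; have hz := ivl_z_mem h
  refine lt_of_le_of_ne hw.1 fun he => ivl_nwz h ?_
  rw [← he]; exact hz.1

lemma ivl_x_lt_z (h : IsDkIntervalWith k x y w z) : x < z := ivl_x_lt_w (ivl_swap h)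

lemma ivl_w_lt_y (h : IsDkIntervalWith k x y w z) : w < y := by
  have hw := ivl_w_mem h; have hz := ivl_z_mem h
  refine lt_of_le_of_ne hw.2 fun he => ivl_nzw h ?_
  rw [he]; exact hz.2

lemma ivl_z_lt_y (h : IsDkIntervalWith k x y w z) : z < y := ivl_w_lt_y (ivl_swap h)

lemma ivl_x_lt_y (h : IsDkIntervalWith k x y w z) : x < y :=
  (ivl_x_lt_w h).trans (ivl_w_lt_y h)

lemma ivl_not_cov (h : IsDkIntervalWith k x y w z) : ¬ x ⋖ y :=
  fun hcov => hcov.2 (ivl_x_lt_w h) (ivl_w_lt_y h)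

/-- the tail and neck sets -/
lemma ivl_tail_ncard (h : IsDkIntervalWith k x y w z) :
    {m ∈ Set.Icc x y | m ≤ w ∧ m ≤ z}.ncard = k - 2 := h.2.1.2.2.2.2.2.2.2.2

lemma ivl_neck_ncard (h : IsDkIntervalWith k x y w z) :
    {m ∈ Set.Icc x y | w ≤ m ∧ z ≤ m}.ncard = k - 2 := h.2.2

lemma ivl_x_tail (h : IsDkIntervalWith k x y w z) :
    x ∈ {m ∈ Set.Icc x y | m ≤ w ∧ m ≤ z} :=
  ⟨Set.left_mem_Icc.2 (le_of_lt (ivl_x_lt_y h)), le_of_lt (ivl_x_lt_w h), le_of_lt (ivl_x_lt_z h)⟩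

lemma ivl_y_neck (h : IsDkIntervalWith k x y w z) :
    y ∈ {m ∈ Set.Icc x y | w ≤ m ∧ z ≤ m} :=
  ⟨Set.right_mem_Icc.2 (le_of_lt (ivl_x_lt_y h)), le_of_lt (ivl_w_lt_y h), le_of_lt (ivl_z_lt_y h)⟩

end Ivl

end DCAux

section PartB
open Set
namespace DCAux
variable {P : Type*} [PartialOrder P]

lemma ivl_diamond {x y w z : P} (h : IsDkIntervalWith 3 x y w z) :
    Set.Icc x y = {x, w, z, y} ∧ x ⋖ w ∧ x ⋖ z ∧ w ⋖ y ∧ z ⋖ y := by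
  have hT : {m ∈ Set.Icc x y | m ≤ w ∧ m ≤ z} = {x} := by
    have h1 : {m ∈ Set.Icc x y | m ≤ w ∧ m ≤ z}.ncard = 1 := ivl_tail_ncard h
    obtain ⟨a, ha⟩ := Set.ncard_eq_one.mp h1
    have hx := ivl_x_tail h
    rw [ha] at hx ⊢
    rw [Set.mem_singleton_iff] at hx
    rw [hx]
  have hN : {m ∈ Set.Icc x y | w ≤ m ∧ z ≤ m} = {y} := by
    have h1 : {m ∈ Set.Icc x y | w ≤ m ∧ z ≤ m}.ncard = 1 := ivl_neck_ncard h
    obtain ⟨a, ha⟩ := Set.ncard_eq_one.mp h1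
    have hy := ivl_y_neck h
    rw [ha] at hy ⊢
    rw [Set.mem_singleton_iff] at hy
    rw [hy]
  have hIcc : Set.Icc x y = {x, w, z, y} := by
    apply Set.Subset.antisymm
    · intro m hm
      rcases ivl_class h m hm with h1 | h1 | h1 | h1
      · exact Or.inr (Or.inl h1)
      · exact Or.inr (Or.inr (Or.inl h1))
      · have : m ∈ ({x} : Set P) := by rw [← hT]; exact ⟨hm, h1⟩
        exact Or.inl this
      · have : m ∈ ({y} : Set P) := by rw [← hN]; exact ⟨hm, h1⟩
        exact Or.inr (Or.inr (Or.inr this))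
    · intro m hm
      rcases hm with h1 | h1 | h1 | h1 <;> subst h1
      · exact Set.left_mem_Icc.2 (le_of_lt (ivl_x_lt_y h))
      · exact ivl_w_mem h
      · exact ivl_z_mem h
      · exact Set.right_mem_Icc.2 (le_of_lt (ivl_x_lt_y h))
  have hmem : ∀ m, x ≤ m → m ≤ y → m = x ∨ m = w ∨ m = z ∨ m = y := by
    intro m h1 h2
    have : m ∈ Set.Icc x y := ⟨h1, h2⟩
    rw [hIcc] at this
    simpa using this
  refine ⟨hIcc, ⟨ivl_x_lt_w h, fun m h1 h2 => ?_⟩, ⟨ivl_x_lt_z h, fun m h1 h2 => ?_⟩,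
    ⟨ivl_w_lt_y h, fun m h1 h2 => ?_⟩, ⟨ivl_z_lt_y h, fun m h1 h2 => ?_⟩⟩
  · rcases hmem m (le_of_lt h1) (le_of_lt (h2.trans (ivl_w_lt_y h))) with e | e | e | e <;> subst e
    · exact lt_irrefl _ h1
    · exact lt_irrefl _ h2
    · exact ivl_nzw h (le_of_lt h2)
    · exact absurd (le_of_lt h2) (not_le_of_gt (ivl_w_lt_y h))
  · rcases hmem m (le_of_lt h1) (le_of_lt (h2.trans (ivl_z_lt_y h))) with e | e | e | e <;> subst e
    · exact lt_irrefl _ h1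
    · exact ivl_nwz h (le_of_lt h2)
    · exact lt_irrefl _ h2
    · exact absurd (le_of_lt h2) (not_le_of_gt (ivl_z_lt_y h))
  · rcases hmem m (le_of_lt ((ivl_x_lt_w h).trans h1)) (le_of_lt h2) with e | e | e | e <;> subst e
    · exact absurd h1 (not_lt_of_ge (le_of_lt (ivl_x_lt_w h)))
    · exact lt_irrefl _ h1
    · exact ivl_nwz h (le_of_lt h1)
    · exact lt_irrefl _ h2
  · rcases hmem m (le_of_lt ((ivl_x_lt_z h).trans h1)) (le_of_lt h2) with e | e | e | e <;> subst e
    · exact absurd h1 (not_lt_of_ge (le_of_lt (ivl_x_lt_z h)))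
    · exact ivl_nzw h (le_of_lt h1)
    · exact lt_irrefl _ h1
    · exact lt_irrefl _ h2

lemma ivl3_covby_y {x y w z : P} (h : IsDkIntervalWith 3 x y w z) :
    ∀ m ∈ Set.Icc x y, m ⋖ y → m = w ∨ m = z := by
  intro m hm hcov
  obtain ⟨hIcc, _, _, _, _⟩ := ivl_diamond h
  rw [hIcc] at hm
  rcases hm with e | e | e | e
  · subst e; exact absurd hcov (ivl_not_cov h)
  · exact Or.inl e
  · exact Or.inr e
  · rw [Set.mem_singleton_iff] at e; subst e; exact absurd hcov.1 (lt_irrefl _)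

lemma ivl3_covby_x {x y w z : P} (h : IsDkIntervalWith 3 x y w z) :
    ∀ m ∈ Set.Icc x y, x ⋖ m → m = w ∨ m = z := by
  intro m hm hcov
  obtain ⟨hIcc, _, _, _, _⟩ := ivl_diamond h
  rw [hIcc] at hm
  rcases hm with e | e | e | e
  · subst e; exact absurd hcov.1 (lt_irrefl _)
  · exact Or.inl e
  · exact Or.inr e
  · rw [Set.mem_singleton_iff] at e; subst e; exact absurd hcov (ivl_not_cov h)

lemma ivl_sub [Finite P] {k : ℕ} {x y w z : P} (h : IsDkIntervalWith k x y w z) (hk : 4 ≤ k) :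
    ∃ t n, x ⋖ t ∧ n ⋖ y ∧ IsDkIntervalWith (k-1) t n w z ∧
      Set.Icc t n = Set.Icc x y \ {x, y} ∧
      (∀ m ∈ Set.Icc x y, m ⋖ y → m = n) ∧ (∀ m ∈ Set.Icc x y, x ⋖ m → m = t) := by
  set T := {m ∈ Set.Icc x y | m ≤ w ∧ m ≤ z} with hTdef
  set N := {m ∈ Set.Icc x y | w ≤ m ∧ z ≤ m} with hNdef
  have hchT : IsChain (· ≤ ·) T := h.2.1.2.2.2.2.2.2.1
  have hchN : IsChain (· ≤ ·) N := h.2.1.2.2.2.2.2.2.2.1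
  have hT'card : (T \ {x}).ncard = k - 3 := by
    rw [Set.ncard_diff_singleton_of_mem (ivl_x_tail h)]
    rw [ivl_tail_ncard h]; omega
  have hN'card : (N \ {y}).ncard = k - 3 := by
    rw [Set.ncard_diff_singleton_of_mem (ivl_y_neck h)]
    rw [ivl_neck_ncard h]; omega
  have hT'ne : (T \ {x}).Nonempty := by
    apply Set.nonempty_of_ncard_ne_zero; rw [hT'card]; omega
  have hN'ne : (N \ {y}).Nonempty := by
    apply Set.nonempty_of_ncard_ne_zero; rw [hN'card]; omega
  obtain ⟨t, htmem, htmin⟩ := (wellFounded_lt (α := P)).has_min (T \ {x}) hT'ne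
  obtain ⟨n, hnmem, hnmax⟩ := (wellFounded_gt (α := P)).has_min (N \ {y}) hN'ne
  have htT : t ∈ T := htmem.1
  have hnN : n ∈ N := hnmem.1
  have htle : ∀ m ∈ T \ {x}, t ≤ m := by
    intro m hm
    rcases eq_or_ne m t with e | e
    · exact le_of_eq e.symm
    · rcases hchT htT hm.1 (Ne.symm e) with h1 | h1
      · exact h1
      · exact absurd (lt_of_le_of_ne h1 e) (htmin m hm)
  have hnge : ∀ m ∈ N \ {y}, m ≤ n := by
    intro m hm
    rcases eq_or_ne m n with e | e
    · exact le_of_eq e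
    · rcases hchN hm.1 hnN e with h1 | h1
      · exact h1
      · exact absurd (lt_of_le_of_ne h1 (Ne.symm e)) (hnmax m hm)
  have hxt : x < t := lt_of_le_of_ne htT.1.1 (fun e => htmem.2 (by rw [← e]; rfl))
  have hny : n < y := lt_of_le_of_ne hnN.1.2 hnmem.2
  have htw : t ≤ w := htT.2.1
  have htz : t ≤ z := htT.2.2
  have hwn : w ≤ n := hnN.2.1
  have hzn : z ≤ n := hnN.2.2
  have htnew : t ≠ w := fun e => ivl_nwz h (by rw [← e]; exact htz)
  have htnez : t ≠ z := fun e => ivl_nzw h (by rw [← e]; exact htw)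
  have hwnen : w ≠ n := fun e => ivl_nzw h (by rw [e]; exact hzn)
  have hznen : z ≠ n := fun e => ivl_nwz h (by rw [e]; exact hwn)
  -- x ⋖ t
  have hcovxt : x ⋖ t := by
    refine ⟨hxt, fun m h1 h2 => ?_⟩
    have hmI : m ∈ Set.Icc x y := ⟨le_of_lt h1, le_of_lt (lt_of_lt_of_le h2 (htw.trans (ivl_w_mem h).2))⟩
    rcases ivl_class h m hmI with e | e | e | e
    · subst e; exact absurd (le_of_lt h2) (fun hh => ivl_nwz h (hh.trans htz))
    · subst e; exact absurd (le_of_lt h2) (fun hh => ivl_nzw h (hh.trans htw))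
    · have : m ∈ T \ {x} := ⟨⟨hmI, e.1, e.2⟩, fun hh => absurd (Set.mem_singleton_iff.mp hh) (ne_of_gt h1)⟩
      exact absurd h2 (not_lt_of_ge (htle m this))
    · exact absurd (e.1.trans (le_of_lt h2)) (fun hh => ivl_nwz h (hh.trans htz))
  -- n ⋖ y
  have hcovny : n ⋖ y := by
    refine ⟨hny, fun m h1 h2 => ?_⟩
    have hmI : m ∈ Set.Icc x y := ⟨le_of_lt (lt_of_le_of_lt (htT.1.1.trans (htw.trans hwn)) h1), le_of_lt h2⟩
    rcases ivl_class h m hmI with e | e | e | e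
    · subst e; exact absurd h1 (not_lt_of_ge hwn)
    · subst e; exact absurd h1 (not_lt_of_ge hzn)
    · exact absurd (lt_of_le_of_lt e.1 (lt_of_le_of_lt hwn h1)) (lt_irrefl m)
    · have : m ∈ N \ {y} := ⟨⟨hmI, e.1, e.2⟩, fun hh => absurd (Set.mem_singleton_iff.mp hh) (ne_of_lt h2)⟩
      exact absurd h1 (not_lt_of_ge (hnge m this))
  -- Icc t n = Icc x y \ {x, y}
  have hIcc' : Set.Icc t n = Set.Icc x y \ {x, y} := by
    apply Set.Subset.antisymm
    · intro m hm
      refine ⟨⟨le_of_lt (lt_of_lt_of_le hxt hm.1), le_of_lt (lt_of_le_of_lt hm.2 hny)⟩, ?_⟩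
      intro hh
      rcases hh with e | e
      · subst e; exact absurd hm.1 (not_le_of_gt hxt)
      · rw [Set.mem_singleton_iff] at e; subst e; exact absurd hm.2 (not_le_of_gt hny)
    · intro m hm
      obtain ⟨hmI, hmne⟩ := hm
      have hnex : m ≠ x := fun e => hmne (by rw [e]; exact Or.inl rfl)
      have hney : m ≠ y := fun e => hmne (by rw [e]; exact Or.inr rfl)
      rcases ivl_class h m hmI with e | e | e | e
      · subst e; exact ⟨htw, hwn⟩
      · subst e; exact ⟨htz, hzn⟩
      · have : m ∈ T \ {x} := ⟨⟨hmI, e.1, e.2⟩, hnex⟩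
        exact ⟨htle m this, e.1.trans hwn⟩
      · have : m ∈ N \ {y} := ⟨⟨hmI, e.1, e.2⟩, hney⟩
        exact ⟨htw.trans e.1, hnge m this⟩
  -- tail and neck of the subinterval
  have hsubT : {m ∈ Set.Icc t n | m ≤ w ∧ m ≤ z} = T \ {x} := by
    ext m
    constructor
    · intro ⟨hm1, hm2⟩
      have := hIcc' ▸ hm1
      exact ⟨⟨this.1, hm2⟩, fun hh => this.2 (Or.inl (Set.mem_singleton_iff.mp hh))⟩
    · intro ⟨hm1, hm2⟩
      exact ⟨⟨htle m ⟨hm1, hm2⟩, hm1.2.1.trans hwn⟩, hm1.2⟩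
  have hsubN : {m ∈ Set.Icc t n | w ≤ m ∧ z ≤ m} = N \ {y} := by
    ext m
    constructor
    · intro ⟨hm1, hm2⟩
      have := hIcc' ▸ hm1
      exact ⟨⟨this.1, hm2⟩, fun hh => this.2 (Or.inr hh)⟩
    · intro ⟨hm1, hm2⟩
      exact ⟨⟨htw.trans hm1.2.1, hnge m ⟨hm1, hm2⟩⟩, hm1.2⟩
  have hsub : IsDkIntervalWith (k-1) t n w z := by
    refine ⟨htw.trans hwn, ⟨by omega, ⟨htw, hwn⟩, ⟨htz, hzn⟩, ivl_nwz h, ivl_nzw h,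
      fun m hm => ivl_class h m (hIcc' ▸ hm).1, ?_, ?_, ?_⟩, ?_⟩
    · rw [hsubT]; exact hchT.mono Set.diff_subset
    · rw [hsubN]; exact hchN.mono Set.diff_subset
    · rw [hsubT, hT'card]; omega
    · rw [hsubN, hN'card]; omega
  -- uniqueness of covers
  refine ⟨t, n, hcovxt, hcovny, hsub, hIcc', ?_, ?_⟩
  · intro m hmI hcov
    rcases ivl_class h m hmI with e | e | e | e
    · subst e
      exact absurd hcov (fun hc => hc.2 (lt_of_le_of_ne hwn hwnen) hny)
    · subst e
      exact absurd hcov (fun hc => hc.2 (lt_of_le_of_ne hzn hznen) hny)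
    · have h1 : m < n := lt_of_le_of_lt e.1 (lt_of_le_of_ne hwn hwnen)
      exact absurd hcov (fun hc => hc.2 h1 hny)
    · rcases eq_or_ne m y with ey | ey
      · subst ey; exact absurd hcov.1 (lt_irrefl _)
      · have hmN : m ∈ N \ {y} := ⟨⟨hmI, e.1, e.2⟩, ey⟩
        rcases eq_or_ne m n with en | en
        · exact en
        · exact absurd hcov (fun hc => hc.2 (lt_of_le_of_ne (hnge m hmN) en) hny)
  · intro m hmI hcov
    rcases ivl_class h m hmI with e | e | e | e
    · subst e
      exact absurd hcov (fun hc => hc.2 hxt (lt_of_le_of_ne htw htnew))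
    · subst e
      exact absurd hcov (fun hc => hc.2 hxt (lt_of_le_of_ne htz htnez))
    · rcases eq_or_ne m x with ex | ex
      · subst ex; exact absurd hcov.1 (lt_irrefl _)
      · have hmT : m ∈ T \ {x} := ⟨⟨hmI, e.1, e.2⟩, ex⟩
        rcases eq_or_ne m t with et | et
        · exact et
        · exact absurd hcov (fun hc => hc.2 hxt (lt_of_le_of_ne (htle m hmT) (Ne.symm et)))
    · have h1 : t < m := lt_of_le_of_lt (lt_of_le_of_ne htw htnew).le (lt_of_le_of_ne e.1 (fun hh => (by exact absurd (hh ▸ e.2) (ivl_nzw h)) ))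
      exact absurd hcov (fun hc => hc.2 hxt h1)

end DCAux
end PartB

section PartC
namespace DCAux
variable {P : Type*} [PartialOrder P]

lemma covers_not_le {a u v : P} (hu : a ⋖ u) (hv : a ⋖ v) (huv : u ≠ v) : ¬ u ≤ v :=
  fun hle => hv.2 hu.1 (lt_of_le_of_ne hle huv)

lemma covby_not_le {u v r : P} (hu : u ⋖ r) (hv : v ⋖ r) (huv : u ≠ v) : ¬ u ≤ v :=
  fun hle => hu.2 (lt_of_le_of_ne hle huv) hv.1

/-- `[x,y] minus its max` is a `d_k^-`-convex set. -/
lemma ivl_minus_max [Finite P] {k : ℕ} {x y w z : P} (h : IsDkIntervalWith k x y w z) :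
    IsConvexSet (Set.Icc x y \ {y}) ∧ DkStruct k (Set.Icc x y \ {y}) w z ∧
      {m ∈ Set.Icc x y \ {y} | w ≤ m ∧ z ≤ m}.ncard = k - 3 := by
  have hwy := ivl_w_lt_y h
  have hzy := ivl_z_lt_y h
  have hTs : {m ∈ Set.Icc x y \ {y} | m ≤ w ∧ m ≤ z} = {m ∈ Set.Icc x y | m ≤ w ∧ m ≤ z} := by
    ext m
    constructor
    · intro ⟨h1, h2⟩; exact ⟨h1.1, h2⟩
    · intro ⟨h1, h2⟩
      exact ⟨⟨h1, fun hy => absurd (Set.mem_singleton_iff.mp hy ▸ h2.1) (not_le_of_gt hwy)⟩, h2⟩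
  have hNs : {m ∈ Set.Icc x y \ {y} | w ≤ m ∧ z ≤ m}
      = {m ∈ Set.Icc x y | w ≤ m ∧ z ≤ m} \ {y} := by
    ext m
    constructor
    · intro ⟨h1, h2⟩; exact ⟨⟨h1.1, h2⟩, h1.2⟩
    · intro ⟨h1, h2⟩; exact ⟨⟨h1.1, h2⟩, h1.2⟩
  refine ⟨?_, ⟨ivl_k3 h, ⟨ivl_w_mem h, fun e => absurd ((Set.mem_singleton_iff.mp e) ▸ hwy) (lt_irrefl _)⟩,
    ⟨ivl_z_mem h, fun e => absurd ((Set.mem_singleton_iff.mp e) ▸ hzy) (lt_irrefl _)⟩,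
    ivl_nwz h, ivl_nzw h, fun m hm => ivl_class h m hm.1, ?_, ?_, ?_⟩, ?_⟩
  · intro a ha b hb m h1 h2
    refine ⟨⟨ha.1.1.trans h1, h2.trans hb.1.2⟩, fun e => hb.2 ?_⟩
    rw [Set.mem_singleton_iff] at e
    subst e
    exact Set.mem_singleton_iff.mpr (le_antisymm hb.1.2 h2)
  · rw [hTs]; exact h.2.1.2.2.2.2.2.2.1
  · rw [hNs]; exact (h.2.1.2.2.2.2.2.2.2.1).mono Set.diff_subset
  · rw [hTs]; exact ivl_tail_ncard h
  · rw [hNs, Set.ncard_diff_singleton_of_mem (ivl_y_neck h), ivl_neck_ncard h]; omega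

/-- Completion of a "V" of covers to a `d_3`-interval. -/
lemma complete_vee [Finite P] (hP : IsDComplete P) {a u v : P}
    (hu : a ⋖ u) (hv : a ⋖ v) (huv : u ≠ v) :
    ∃ r, IsDkIntervalWith 3 a r u v ∧ Set.Icc a r = {a, u, v, r} := by
  have hnuv : ¬ u ≤ v := covers_not_le hu hv huv
  have hnvu : ¬ v ≤ u := covers_not_le hv hu (Ne.symm huv)
  set S : Set P := {a, u, v} with hS
  have hmemS : ∀ m, m ∈ S ↔ m = a ∨ m = u ∨ m = v := by
    intro m; simp [hS]
  have hconv : IsConvexSet S := by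
    intro p hp q hq m h1 h2
    rw [hmemS] at hp hq ⊢
    rcases hp with e | e | e <;> rw [e] at h1 <;> rcases hq with e2 | e2 | e2 <;> rw [e2] at h2
    · exact Or.inl (le_antisymm h2 h1)
    · rcases eq_or_ne m a with e3 | e3
      · exact Or.inl e3
      · rcases eq_or_ne m u with e4 | e4
        · exact Or.inr (Or.inl e4)
        · exact absurd (lt_of_le_of_ne h2 e4) (fun hh => hu.2 (lt_of_le_of_ne h1 (Ne.symm e3)) hh)
    · rcases eq_or_ne m a with e3 | e3
      · exact Or.inl e3
      · rcases eq_or_ne m v with e4 | e4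
        · exact Or.inr (Or.inr e4)
        · exact absurd (lt_of_le_of_ne h2 e4) (fun hh => hv.2 (lt_of_le_of_ne h1 (Ne.symm e3)) hh)
    · exact absurd (h1.trans h2) (not_le_of_gt hu.1)
    · exact Or.inr (Or.inl (le_antisymm h2 h1))
    · exact absurd (h1.trans h2) hnuv
    · exact absurd (h1.trans h2) (not_le_of_gt hv.1)
    · exact absurd (h1.trans h2) hnvu
    · exact Or.inr (Or.inr (le_antisymm h2 h1))
  have hTeq : {m ∈ S | m ≤ u ∧ m ≤ v} = {a} := by
    ext m
    constructor
    · intro ⟨h1, h2⟩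
      rw [hmemS] at h1
      rcases h1 with e | e | e <;> subst e
      · rfl
      · exact absurd h2.2 hnuv
      · exact absurd h2.1 hnvu
    · intro e
      rw [Set.mem_singleton_iff] at e; subst e
      exact ⟨by rw [hmemS]; exact Or.inl rfl, hu.1.le, hv.1.le⟩
  have hNeq : {m ∈ S | u ≤ m ∧ v ≤ m} = (∅ : Set P) := by
    ext m
    simp only [Set.mem_empty_iff_false, iff_false]
    intro ⟨h1, h2⟩
    rw [hmemS] at h1
    rcases h1 with e | e | e <;> subst e
    · exact absurd h2.1 (not_le_of_gt hu.1)
    · exact hnvu h2.2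
    · exact hnuv h2.1
  have hDk : IsDkMinusConvex 3 S := by
    refine ⟨hconv, u, v, ⟨le_refl 3, by rw [hmemS]; tauto, by rw [hmemS]; tauto,
      hnuv, hnvu, ?_, ?_, ?_, ?_⟩, ?_⟩
    · intro m hm
      rw [hmemS] at hm
      rcases hm with e | e | e <;> subst e
      · exact Or.inr (Or.inr (Or.inl ⟨hu.1.le, hv.1.le⟩))
      · exact Or.inl rfl
      · exact Or.inr (Or.inl rfl)
    · rw [hTeq]; exact Set.pairwise_singleton _ _
    · rw [hNeq]; exact Set.pairwise_empty _
    · rw [hTeq]; simp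
    · rw [hNeq]; simp
  obtain ⟨r, hrS, a', hIk, hIcc⟩ := hP.1 3 S hDk
  obtain ⟨w₂, z₂, h₂⟩ := hIk
  have ha' : a' = a := by
    have hmema : a ∈ Set.Icc a' r := by
      rw [hIcc]; exact Set.mem_insert_of_mem _ (by rw [hmemS]; tauto)
    have h1 : a' ∈ Set.Icc a' r := ⟨le_refl _, h₂.1⟩
    rw [hIcc, Set.mem_insert_iff] at h1
    rcases h1 with e | e
    · exfalso
      have h2 : u ∈ Set.Icc a' r := by
        rw [hIcc]; exact Set.mem_insert_of_mem _ (by rw [hmemS]; tauto)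
      have h3 : r ≤ a := by rw [← e]; exact hmema.1
      exact absurd (hu.1.trans_le (h2.2.trans h3)) (lt_irrefl a)
    · rw [hmemS] at e
      rcases e with e | e | e
      · exact e
      · exact absurd hmema.1 (by rw [e]; exact not_le_of_gt hu.1)
      · exact absurd hmema.1 (by rw [e]; exact not_le_of_gt hv.1)
  rw [ha'] at hIcc h₂
  have hIcc' : Set.Icc a r = {a, u, v, r} := by
    rw [hIcc]; ext m; simp [hS]; tauto
  have hsides : (w₂ = u ∧ z₂ = v) ∨ (w₂ = v ∧ z₂ = u) := by
    have hw₂ : w₂ ∈ Set.Icc a r := ivl_w_mem h₂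
    have hz₂ : z₂ ∈ Set.Icc a r := ivl_z_mem h₂
    have hnwz : ¬ w₂ ≤ z₂ := ivl_nwz h₂
    have hnzw : ¬ z₂ ≤ w₂ := ivl_nzw h₂
    have haw : a ≤ w₂ := hw₂.1
    have haz : a ≤ z₂ := hz₂.1
    have hwr : w₂ ≤ r := hw₂.2
    have hzr : z₂ ≤ r := hz₂.2
    rw [hIcc, Set.mem_insert_iff, hmemS] at hw₂ hz₂
    rcases hw₂ with e | e | e | e <;> rcases hz₂ with e2 | e2 | e2 | e2 <;> subst_vars
    all_goals first
      | (exact absurd hzr hnzw)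
      | (exact absurd hwr hnwz)
      | (exact absurd haz hnwz)
      | (exact absurd haw hnzw)
      | (exact absurd (le_refl _) hnwz)
      | (exact Or.inl ⟨rfl, rfl⟩)
      | (exact Or.inr ⟨rfl, rfl⟩)
  rcases hsides with ⟨e1, e2⟩ | ⟨e1, e2⟩
  · rw [e1, e2] at h₂; exact ⟨r, h₂, hIcc'⟩
  · rw [e1, e2] at h₂; exact ⟨r, ivl_swap h₂, hIcc'⟩

end DCAux
end PartC

section PartD
namespace DCAux
variable {P : Type*} [PartialOrder P]

/-- An incomparable pair has at most one common cover (axiom 3). -/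
lemma common_cover_unique [Finite P] (hP : IsDComplete P) {u v r r' : P}
    (h1 : u ⋖ r) (h2 : u ⋖ r') (h3 : v ⋖ r) (h4 : v ⋖ r') (huv : u ≠ v) (hrr : r ≠ r') :
    False := by
  have hnrr : ¬ r ≤ r' := covers_not_le h1 h2 hrr
  have hnrr' : ¬ r' ≤ r := covers_not_le h2 h1 (Ne.symm hrr)
  have hur : u ≠ r := ne_of_lt h1.1
  have hur' : u ≠ r' := ne_of_lt h2.1
  have hvr : v ≠ r := ne_of_lt h3.1
  have hvr' : v ≠ r' := ne_of_lt h4.1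
  have key : ∀ p : P, p ⋖ r → p ⋖ r' →
      IsDkMinusConvex 3 ({p, r, r'} : Set P) := by
    intro p hp hp'
    have hmem : ∀ m : P, m ∈ ({p, r, r'} : Set P) ↔ m = p ∨ m = r ∨ m = r' := by
      intro m; simp
    refine ⟨?_, r, r', ⟨le_refl 3, by rw [hmem]; tauto, by rw [hmem]; tauto, hnrr, hnrr',
      ?_, ?_, ?_, ?_⟩, ?_⟩
    · intro s hs q hq m hm1 hm2
      rw [hmem] at hs hq ⊢
      rcases hs with e | e | e <;> rw [e] at hm1 <;> rcases hq with e2 | e2 | e2 <;> rw [e2] at hm2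
      · exact Or.inl (le_antisymm hm2 hm1)
      · rcases eq_or_ne m p with e3 | e3
        · exact Or.inl e3
        · rcases eq_or_ne m r with e4 | e4
          · exact Or.inr (Or.inl e4)
          · exact absurd (lt_of_le_of_ne hm2 e4) (fun hh => hp.2 (lt_of_le_of_ne hm1 (Ne.symm e3)) hh)
      · rcases eq_or_ne m p with e3 | e3
        · exact Or.inl e3
        · rcases eq_or_ne m r' with e4 | e4
          · exact Or.inr (Or.inr e4)
          · exact absurd (lt_of_le_of_ne hm2 e4) (fun hh => hp'.2 (lt_of_le_of_ne hm1 (Ne.symm e3)) hh)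
      · exact absurd (hm1.trans hm2) (not_le_of_gt hp.1)
      · exact Or.inr (Or.inl (le_antisymm hm2 hm1))
      · exact absurd (hm1.trans hm2) hnrr
      · exact absurd (hm1.trans hm2) (not_le_of_gt hp'.1)
      · exact absurd (hm1.trans hm2) hnrr'
      · exact Or.inr (Or.inr (le_antisymm hm2 hm1))
    · intro m hm
      rw [hmem] at hm
      rcases hm with e | e | e <;> subst e
      · exact Or.inr (Or.inr (Or.inl ⟨hp.1.le, hp'.1.le⟩))
      · exact Or.inl rfl
      · exact Or.inr (Or.inl rfl)
    · have : {m ∈ ({p, r, r'} : Set P) | m ≤ r ∧ m ≤ r'} = {p} := by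
        ext m
        constructor
        · intro ⟨hm1, hm2⟩
          rw [hmem] at hm1
          rcases hm1 with e | e | e <;> subst e
          · rfl
          · exact absurd hm2.2 hnrr
          · exact absurd hm2.1 hnrr'
        · intro e
          rw [Set.mem_singleton_iff] at e; subst e
          exact ⟨by rw [hmem]; tauto, hp.1.le, hp'.1.le⟩
      rw [this]; exact Set.pairwise_singleton _ _
    · have : {m ∈ ({p, r, r'} : Set P) | r ≤ m ∧ r' ≤ m} = (∅ : Set P) := by
        ext m
        simp only [Set.mem_empty_iff_false, iff_false]
        intro ⟨hm1, hm2⟩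
        rw [hmem] at hm1
        rcases hm1 with e | e | e <;> subst e
        · exact absurd hm2.1 (not_le_of_gt hp.1)
        · exact hnrr' hm2.2
        · exact hnrr hm2.1
      rw [this]; simp
    · have : {m ∈ ({p, r, r'} : Set P) | m ≤ r ∧ m ≤ r'} = {p} := by
        ext m
        constructor
        · intro ⟨hm1, hm2⟩
          rw [hmem] at hm1
          rcases hm1 with e | e | e <;> subst e
          · rfl
          · exact absurd hm2.2 hnrr
          · exact absurd hm2.1 hnrr'
        · intro e
          rw [Set.mem_singleton_iff] at e; subst e
          exact ⟨by rw [hmem]; tauto, hp.1.le, hp'.1.le⟩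
      rw [this]; simp
    · have : {m ∈ ({p, r, r'} : Set P) | r ≤ m ∧ r' ≤ m} = (∅ : Set P) := by
        ext m
        simp only [Set.mem_empty_iff_false, iff_false]
        intro ⟨hm1, hm2⟩
        rw [hmem] at hm1
        rcases hm1 with e | e | e <;> subst e
        · exact absurd hm2.1 (not_le_of_gt hp.1)
        · exact hnrr' hm2.2
        · exact hnrr hm2.1
      rw [this]; simp
  have hSu := key u h1 h2
  have hSv := key v h3 h4
  have hdiff : ({u, r, r'} : Set P) \ {u} = ({v, r, r'} : Set P) \ {v} := by
    ext m
    simp only [Set.mem_diff, Set.mem_insert_iff, Set.mem_singleton_iff]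
    constructor
    · rintro ⟨h | h | h, hne⟩
      · exact absurd h hne
      · exact ⟨Or.inr (Or.inl h), fun e => hvr (e.symm.trans h)⟩
      · exact ⟨Or.inr (Or.inr h), fun e => hvr' (e.symm.trans h)⟩
    · rintro ⟨h | h | h, hne⟩
      · exact absurd h hne
      · exact ⟨Or.inr (Or.inl h), fun e => hur (e.symm.trans h)⟩
      · exact ⟨Or.inr (Or.inr h), fun e => hur' (e.symm.trans h)⟩
  have heq := hP.2.2 3 3 _ _ hSu hSv u (by simp) v (by simp)
    (by
      intro m hm
      simp only [Set.mem_insert_iff, Set.mem_singleton_iff] at hm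
      rcases hm with e | e | e <;> subst e
      · exact le_refl _
      · exact h1.1.le
      · exact h2.1.le)
    (by
      intro m hm
      simp only [Set.mem_insert_iff, Set.mem_singleton_iff] at hm
      rcases hm with e | e | e <;> subst e
      · exact le_refl _
      · exact h3.1.le
      · exact h4.1.le)
    hdiff
  have : v ∈ ({u, r, r'} : Set P) := by rw [heq]; simp
  simp only [Set.mem_insert_iff, Set.mem_singleton_iff] at this
  rcases this with e | e | e
  · exact huv e.symm
  · exact hvr e
  · exact hvr' e

end DCAux
end PartD

section PartE
namespace DCAux
variable {P : Type*} [PartialOrder P]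

/-- No "triangle" configuration exists in a d-complete poset. -/
lemma no_triangle [Finite P] (hP : IsDComplete P) (a : P) :
    ∀ b c f g h : P, f ⋖ a → f ⋖ b → g ⋖ a → g ⋖ c → h ⋖ b → h ⋖ c →
    ¬ a ≤ b → ¬ b ≤ a → ¬ a ≤ c → ¬ c ≤ a → ¬ b ≤ c → ¬ c ≤ b → False := by
  induction a using WellFounded.induction (wellFounded_gt (α := P)) with
  | _ a IH =>
  intro b c f g h hfa hfb hga hgc hhb hhc nab nba nac nca nbc ncb
  have hne_ab : a ≠ b := fun e => nab (e ▸ le_refl a)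
  have hne_ac : a ≠ c := fun e => nac (e ▸ le_refl a)
  have hne_bc : b ≠ c := fun e => nbc (e ▸ le_refl b)
  obtain ⟨p, hpI, hpIcc⟩ := complete_vee hP hfa hfb hne_ab
  obtain ⟨q, hqI, hqIcc⟩ := complete_vee hP hga hgc hne_ac
  obtain ⟨m, hmI, hmIcc⟩ := complete_vee hP hhb hhc hne_bc
  have hap : a ⋖ p := (ivl_diamond hpI).2.2.2.1
  have hbp : b ⋖ p := (ivl_diamond hpI).2.2.2.2
  have haq : a ⋖ q := (ivl_diamond hqI).2.2.2.1
  have hcq : c ⋖ q := (ivl_diamond hqI).2.2.2.2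
  have hbm : b ⋖ m := (ivl_diamond hmI).2.2.2.1
  have hcm : c ⋖ m := (ivl_diamond hmI).2.2.2.2
  have hpq : p ≠ q := by
    intro e
    have hcov : c ⋖ p := e ▸ hcq
    have hmem := hP.2.1 f p ⟨3, a, b, hpI⟩ c hcov
    rw [hpIcc] at hmem
    simp only [Set.mem_insert_iff, Set.mem_singleton_iff] at hmem
    rcases hmem with e2 | e2 | e2 | e2
    · exact nca (e2 ▸ hfa.1.le)
    · exact nca (le_of_eq e2)
    · exact ncb (le_of_eq e2)
    · exact absurd hcov.1 (e2 ▸ lt_irrefl c)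
  have hpm : p ≠ m := by
    intro e
    have hcov : c ⋖ p := e ▸ hcm
    have hmem := hP.2.1 f p ⟨3, a, b, hpI⟩ c hcov
    rw [hpIcc] at hmem
    simp only [Set.mem_insert_iff, Set.mem_singleton_iff] at hmem
    rcases hmem with e2 | e2 | e2 | e2
    · exact nca (e2 ▸ hfa.1.le)
    · exact nca (le_of_eq e2)
    · exact ncb (le_of_eq e2)
    · exact absurd hcov.1 (e2 ▸ lt_irrefl c)
  have hqm : q ≠ m := by
    intro e
    have hcov : b ⋖ q := e ▸ hbm
    have hmem := hP.2.1 g q ⟨3, a, c, hqI⟩ b hcov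
    rw [hqIcc] at hmem
    simp only [Set.mem_insert_iff, Set.mem_singleton_iff] at hmem
    rcases hmem with e2 | e2 | e2 | e2
    · exact nba (e2 ▸ hga.1.le)
    · exact nba (le_of_eq e2)
    · exact nbc (le_of_eq e2)
    · exact absurd hcov.1 (e2 ▸ lt_irrefl b)
  exact IH p hap.1 q m a b c hap haq hbp hbm hcq hcm
    (covers_not_le hap haq hpq) (covers_not_le haq hap (Ne.symm hpq))
    (covers_not_le hbp hbm hpm) (covers_not_le hbm hbp (Ne.symm hpm))
    (covers_not_le hcq hcm hqm) (covers_not_le hcm hcq (Ne.symm hqm))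

/-- The bottom of a d-interval has no covers escaping the interval. -/
lemma no_escape [Finite P] (hP : IsDComplete P) :
    ∀ k : ℕ, ∀ x y w z u : P, IsDkIntervalWith k x y w z → x ⋖ u → u ≤ y := by
  intro k
  induction k using Nat.strong_induction_on with
  | _ k IH =>
  intro x y w z u hI hu
  by_contra hne
  by_cases hk : 4 ≤ k
  · obtain ⟨t, n, hxt, hny, hsub, hIccsub, _, _⟩ := ivl_sub hI hk
    have hty : t ≤ y := (ivl_w_mem hsub).1.trans (ivl_w_mem hI).2
    have hut : t ≠ u := fun e => hne (e ▸ hty)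
    obtain ⟨r, hrI, hrIcc⟩ := complete_vee hP hxt hu hut
    have htr : t ⋖ r := (ivl_diamond hrI).2.2.2.1
    have hur : u ⋖ r := (ivl_diamond hrI).2.2.2.2
    have hrn : r ≤ n := IH (k-1) (by omega) t n w z r hsub htr
    exact hne (hur.1.le.trans (hrn.trans hny.1.le))
  · have hk3 : k = 3 := by have := ivl_k3 hI; omega
    subst hk3
    obtain ⟨hIcc, hxw, hxz, hwy, hzy⟩ := ivl_diamond hI
    have hunw : w ≠ u := fun e => hne (e ▸ hwy.1.le)
    have hunz : z ≠ u := fun e => hne (e ▸ hzy.1.le)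
    obtain ⟨va, haI, haIcc⟩ := complete_vee hP hxw hu hunw
    obtain ⟨vb, hbI, hbIcc⟩ := complete_vee hP hxz hu hunz
    have hwa : w ⋖ va := (ivl_diamond haI).2.2.2.1
    have hua : u ⋖ va := (ivl_diamond haI).2.2.2.2
    have hzb : z ⋖ vb := (ivl_diamond hbI).2.2.2.1
    have hub : u ⋖ vb := (ivl_diamond hbI).2.2.2.2
    have hmemIa : ∀ m, m ∈ Set.Icc x va ↔ m = x ∨ m = w ∨ m = u ∨ m = va := by
      intro m; rw [haIcc]; simp
    have hmemIb : ∀ m, m ∈ Set.Icc x vb ↔ m = x ∨ m = z ∨ m = u ∨ m = vb := by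
      intro m; rw [hbIcc]; simp
    have nya : ¬ y ≤ va := by
      intro hle
      have hm : y ∈ Set.Icc x va := ⟨(ivl_x_lt_y hI).le, hle⟩
      rw [hmemIa] at hm
      rcases hm with e | e | e | e
      · exact absurd (ivl_x_lt_y hI) (by rw [e]; exact lt_irrefl x)
      · rw [e] at hwy; exact lt_irrefl w hwy.1
      · exact hne (le_of_eq e.symm)
      · exact hne (hua.1.le.trans (le_of_eq e.symm))
    have nay : ¬ va ≤ y := fun hle => hne (hua.1.le.trans hle)
    have nyb : ¬ y ≤ vb := by
      intro hle
      have hm : y ∈ Set.Icc x vb := ⟨(ivl_x_lt_y hI).le, hle⟩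
      rw [hmemIb] at hm
      rcases hm with e | e | e | e
      · exact absurd (ivl_x_lt_y hI) (by rw [e]; exact lt_irrefl x)
      · rw [e] at hzy; exact lt_irrefl z hzy.1
      · exact hne (le_of_eq e.symm)
      · exact hne (hub.1.le.trans (le_of_eq e.symm))
    have nby : ¬ vb ≤ y := fun hle => hne (hub.1.le.trans hle)
    have nab' : ¬ va ≤ vb := by
      intro hle
      have hm : w ∈ Set.Icc x vb := ⟨hxw.1.le, hwa.1.le.trans hle⟩
      rw [hmemIb] at hm
      rcases hm with e | e | e | e
      · exact absurd hxw.1 (by rw [e]; exact lt_irrefl x)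
      · exact ivl_nwz hI (le_of_eq e)
      · exact hunw e
      · exact hne (hub.1.le.trans ((le_of_eq e.symm).trans hwy.1.le))
    have nba' : ¬ vb ≤ va := by
      intro hle
      have hm : z ∈ Set.Icc x va := ⟨hxz.1.le, hzb.1.le.trans hle⟩
      rw [hmemIa] at hm
      rcases hm with e | e | e | e
      · exact absurd hxz.1 (by rw [e]; exact lt_irrefl x)
      · exact ivl_nzw hI (le_of_eq e)
      · exact hunz e
      · exact hne (hua.1.le.trans ((le_of_eq e.symm).trans hzy.1.le))
    exact no_triangle hP y va vb w z u hwy hwa hzy hzb hua hub nya nay nyb nby nab' nba'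

end DCAux
end PartE

section PartF
namespace DCAux
variable {P : Type*} [PartialOrder P]

/-- A "V" of covers is a `d_3^-`-convex set. -/
lemma vee_minus [Finite P] {a u v : P} (hu : a ⋖ u) (hv : a ⋖ v) (huv : u ≠ v) :
    IsDkMinusConvex 3 ({a, u, v} : Set P) := by
  have hnuv : ¬ u ≤ v := covers_not_le hu hv huv
  have hnvu : ¬ v ≤ u := covers_not_le hv hu (Ne.symm huv)
  have hmemS : ∀ m : P, m ∈ ({a, u, v} : Set P) ↔ m = a ∨ m = u ∨ m = v := by
    intro m; simp
  have hTeq : {m ∈ ({a, u, v} : Set P) | m ≤ u ∧ m ≤ v} = {a} := by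
    ext m
    constructor
    · intro ⟨h1, h2⟩
      rw [hmemS] at h1
      rcases h1 with e | e | e <;> subst e
      · rfl
      · exact absurd h2.2 hnuv
      · exact absurd h2.1 hnvu
    · intro e
      rw [Set.mem_singleton_iff] at e; subst e
      exact ⟨by rw [hmemS]; tauto, hu.1.le, hv.1.le⟩
  have hNeq : {m ∈ ({a, u, v} : Set P) | u ≤ m ∧ v ≤ m} = (∅ : Set P) := by
    ext m
    simp only [Set.mem_empty_iff_false, iff_false]
    intro ⟨h1, h2⟩
    rw [hmemS] at h1
    rcases h1 with e | e | e <;> subst e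
    · exact absurd h2.1 (not_le_of_gt hu.1)
    · exact hnvu h2.2
    · exact hnuv h2.1
  refine ⟨?_, u, v, ⟨le_refl 3, by rw [hmemS]; tauto, by rw [hmemS]; tauto,
    hnuv, hnvu, ?_, ?_, ?_, ?_⟩, ?_⟩
  · intro p hp q hq m h1 h2
    rw [hmemS] at hp hq ⊢
    rcases hp with e | e | e <;> rw [e] at h1 <;> rcases hq with e2 | e2 | e2 <;> rw [e2] at h2
    · exact Or.inl (le_antisymm h2 h1)
    · rcases eq_or_ne m a with e3 | e3
      · exact Or.inl e3
      · rcases eq_or_ne m u with e4 | e4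
        · exact Or.inr (Or.inl e4)
        · exact absurd (lt_of_le_of_ne h2 e4) (fun hh => hu.2 (lt_of_le_of_ne h1 (Ne.symm e3)) hh)
    · rcases eq_or_ne m a with e3 | e3
      · exact Or.inl e3
      · rcases eq_or_ne m v with e4 | e4
        · exact Or.inr (Or.inr e4)
        · exact absurd (lt_of_le_of_ne h2 e4) (fun hh => hv.2 (lt_of_le_of_ne h1 (Ne.symm e3)) hh)
    · exact absurd (h1.trans h2) (not_le_of_gt hu.1)
    · exact Or.inr (Or.inl (le_antisymm h2 h1))
    · exact absurd (h1.trans h2) hnuv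
    · exact absurd (h1.trans h2) (not_le_of_gt hv.1)
    · exact absurd (h1.trans h2) hnvu
    · exact Or.inr (Or.inr (le_antisymm h2 h1))
  · intro m hm
    rw [hmemS] at hm
    rcases hm with e | e | e <;> subst e
    · exact Or.inr (Or.inr (Or.inl ⟨hu.1.le, hv.1.le⟩))
    · exact Or.inl rfl
    · exact Or.inr (Or.inl rfl)
  · rw [hTeq]; exact Set.pairwise_singleton _ _
  · rw [hNeq]; exact Set.pairwise_empty _
  · rw [hTeq]; simp
  · rw [hNeq]; simp

/-- Two elements covered by the same incomparable pair coincide (axiom 3). -/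
lemma common_base_unique [Finite P] (hP : IsDComplete P) {a b u v : P}
    (h1 : a ⋖ u) (h2 : a ⋖ v) (h3 : b ⋖ u) (h4 : b ⋖ v) (huv : u ≠ v) : a = b := by
  by_contra hne
  have hSa := vee_minus h1 h2 huv
  have hSb := vee_minus h3 h4 huv
  have hdiff : ({a, u, v} : Set P) \ {a} = ({b, u, v} : Set P) \ {b} := by
    ext m
    simp only [Set.mem_diff, Set.mem_insert_iff, Set.mem_singleton_iff]
    constructor
    · rintro ⟨h | h | h, hme⟩
      · exact absurd h hme
      · exact ⟨Or.inr (Or.inl h), fun e => absurd (e ▸ h ▸ h3.1) (lt_irrefl _)⟩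
      · exact ⟨Or.inr (Or.inr h), fun e => absurd (e ▸ h ▸ h4.1) (lt_irrefl _)⟩
    · rintro ⟨h | h | h, hme⟩
      · exact absurd h hme
      · exact ⟨Or.inr (Or.inl h), fun e => absurd (e ▸ h ▸ h1.1) (lt_irrefl _)⟩
      · exact ⟨Or.inr (Or.inr h), fun e => absurd (e ▸ h ▸ h2.1) (lt_irrefl _)⟩
  have heq := hP.2.2 3 3 _ _ hSa hSb a (by simp) b (by simp)
    (by
      intro m hm
      simp only [Set.mem_insert_iff, Set.mem_singleton_iff] at hm
      rcases hm with e | e | e <;> subst e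
      · exact le_refl _
      · exact h1.1.le
      · exact h2.1.le)
    (by
      intro m hm
      simp only [Set.mem_insert_iff, Set.mem_singleton_iff] at hm
      rcases hm with e | e | e <;> subst e
      · exact le_refl _
      · exact h3.1.le
      · exact h4.1.le)
    hdiff
  have : b ∈ ({a, u, v} : Set P) := by rw [heq]; simp
  simp only [Set.mem_insert_iff, Set.mem_singleton_iff] at this
  rcases this with e | e | e
  · exact hne e.symm
  · exact absurd (e ▸ h3.1) (lt_irrefl _)
  · exact absurd (e ▸ h4.1) (lt_irrefl _)

/-- A d-interval is determined by its top: uniqueness of the bottom. -/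
lemma unique_bottom [Finite P] (hP : IsDComplete P) :
    ∀ k l : ℕ, ∀ x x' y w z w' z' : P,
      IsDkIntervalWith k x y w z → IsDkIntervalWith l x' y w' z' → x = x' := by
  intro k
  induction k using Nat.strong_induction_on with
  | _ k IH =>
  intro l x x' y w z w' z' hI hJ
  by_cases hk : 4 ≤ k
  · by_cases hl : 4 ≤ l
    · obtain ⟨t, n, hxt, hny, hsub, hIccsub, hcovy, hcovx⟩ := ivl_sub hI hk
      obtain ⟨t', n', hxt', hny', hsub', hIccsub', hcovy', hcovx'⟩ := ivl_sub hJ hl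
      have hnn : n = n' := hcovy' n (hP.2.1 x' y ⟨l, w', z', hJ⟩ n hny) hny
      rw [← hnn] at hsub' hIccsub'
      have htt : t = t' := IH (k-1) (by omega) (l-1) t t' n w z w' z' hsub hsub'
      have hS := ivl_minus_max hI
      have hT := ivl_minus_max hJ
      have hxy := ivl_x_lt_y hI
      have hx'y := ivl_x_lt_y hJ
      have hdiff : (Set.Icc x y \ {y}) \ {x} = (Set.Icc x' y \ {y}) \ {x'} := by
        have e1 : (Set.Icc x y \ {y}) \ {x} = Set.Icc x y \ {x, y} := by
          ext m; simp only [Set.mem_diff, Set.mem_insert_iff, Set.mem_singleton_iff]; tauto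
        have e2 : (Set.Icc x' y \ {y}) \ {x'} = Set.Icc x' y \ {x', y} := by
          ext m; simp only [Set.mem_diff, Set.mem_insert_iff, Set.mem_singleton_iff]; tauto
        rw [e1, e2, ← hIccsub, ← hIccsub', htt]
      have heq := hP.2.2 k l _ _ ⟨hS.1, w, z, hS.2.1, hS.2.2⟩ ⟨hT.1, w', z', hT.2.1, hT.2.2⟩
        x ⟨⟨le_refl x, hxy.le⟩, fun e => (ne_of_lt hxy) (Set.mem_singleton_iff.mp e)⟩
        x' ⟨⟨le_refl x', hx'y.le⟩, fun e => (ne_of_lt hx'y) (Set.mem_singleton_iff.mp e)⟩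
        (fun m hm => hm.1.1) (fun m hm => hm.1.1) hdiff
      have hx : x ∈ Set.Icc x' y \ {y} := by
        rw [← heq]
        exact ⟨⟨le_refl x, hxy.le⟩, fun e => (ne_of_lt hxy) (Set.mem_singleton_iff.mp e)⟩
      have hx' : x' ∈ Set.Icc x y \ {y} := by
        rw [heq]
        exact ⟨⟨le_refl x', hx'y.le⟩, fun e => (ne_of_lt hx'y) (Set.mem_singleton_iff.mp e)⟩
      exact le_antisymm hx'.1.1 hx.1.1
    · exfalso
      have hl3 : l = 3 := by have := ivl_k3 hJ; omega
      subst hl3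
      obtain ⟨t, n, hxt, hny, hsub, hIccsub, hcovy, hcovx⟩ := ivl_sub hI hk
      obtain ⟨_, _, _, hw'y, hz'y⟩ := ivl_diamond hJ
      have e1 : w' = n := hcovy w' (hP.2.1 x y ⟨k, w, z, hI⟩ w' hw'y) hw'y
      have e2 : z' = n := hcovy z' (hP.2.1 x y ⟨k, w, z, hI⟩ z' hz'y) hz'y
      exact ivl_nwz hJ (e1 ▸ e2 ▸ le_refl n)
  · have hk3 : k = 3 := by have := ivl_k3 hI; omega
    subst hk3
    by_cases hl : 4 ≤ l
    · exfalso
      obtain ⟨t', n', hxt', hny', hsub', hIccsub', hcovy', hcovx'⟩ := ivl_sub hJ hl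
      obtain ⟨_, _, _, hwy, hzy⟩ := ivl_diamond hI
      have e1 : w = n' := hcovy' w (hP.2.1 x' y ⟨l, w', z', hJ⟩ w hwy) hwy
      have e2 : z = n' := hcovy' z (hP.2.1 x' y ⟨l, w', z', hJ⟩ z hzy) hzy
      exact ivl_nwz hI (e1 ▸ e2 ▸ le_refl n')
    · have hl3 : l = 3 := by have := ivl_k3 hJ; omega
      subst hl3
      obtain ⟨_, hxw, hxz, hwy, hzy⟩ := ivl_diamond hI
      obtain ⟨_, hxw', hxz', hw'y, hz'y⟩ := ivl_diamond hJ
      have hw'm : w' = w ∨ w' = z :=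
        ivl3_covby_y hI w' (hP.2.1 x y ⟨3, w, z, hI⟩ w' hw'y) hw'y
      have hz'm : z' = w ∨ z' = z :=
        ivl3_covby_y hI z' (hP.2.1 x y ⟨3, w, z, hI⟩ z' hz'y) hz'y
      have hwz' : w' ≠ z' := fun e => ivl_nwz hJ (le_of_eq e)
      have hwz : w ≠ z := fun e => ivl_nwz hI (le_of_eq e)
      rcases hw'm with e1 | e1 <;> rcases hz'm with e2 | e2 <;> rw [e1] at hxw' <;> rw [e2] at hxz'
      · exact absurd (e1.trans e2.symm) hwz'
      · exact common_base_unique hP hxw hxz hxw' hxz' hwz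
      · exact common_base_unique hP hxw hxz hxz' hxw' hwz
      · exact absurd (e1.trans e2.symm) hwz'

end DCAux
end PartF

section PartG
namespace DCAux
variable {P : Type*} [PartialOrder P]

def Sym (a b : P) : Prop := IsDInterval a b ∨ IsDInterval b a

lemma ivl_bot_lt_top {a b : P} (h : IsDInterval a b) : a < b := by
  obtain ⟨k, w, z, h⟩ := h
  exact ivl_x_lt_y h

lemma unique_bottom' [Finite P] (hP : IsDComplete P) {a a' b : P}
    (h1 : IsDInterval a b) (h2 : IsDInterval a' b) : a = a' := by
  obtain ⟨k, w, z, h1⟩ := h1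
  obtain ⟨l, w', z', h2⟩ := h2
  exact unique_bottom hP k l a a' b w z w' z' h1 h2

lemma eqvGen_rtg {a b : P} (h : DiagRel a b) : Relation.ReflTransGen (Sym (P := P)) a b := by
  induction h with
  | rel x y hxy => exact Relation.ReflTransGen.single (Or.inl hxy)
  | refl x => exact Relation.ReflTransGen.refl
  | symm x y h ih =>
    exact (@Relation.ReflTransGen.stdSymm _ _ ⟨fun p q hpq => hpq.symm⟩).symm _ _ ih
  | trans x y z h1 h2 ih1 ih2 => exact ih1.trans ih2

lemma rtg_list {a b : P} (h : Relation.ReflTransGen (Sym (P := P)) a b) :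
    ∃ l : List P, List.Chain Sym a l ∧ l.getLastD a = b := by
  induction h using Relation.ReflTransGen.head_induction_on with
  | refl => exact ⟨[], List.Chain.nil, rfl⟩
  | head hac hcb ih =>
    obtain ⟨l, hl, hlast⟩ := ih
    exact ⟨_ :: l, List.Chain.cons hac hl, by rw [List.getLastD_cons]; exact hlast⟩

lemma shorten [Finite P] (hP : IsDComplete P) (c : P) (hbase : ¬ ∃ e : P, IsDInterval e c) :
    ∀ (l : List P) (u v : P), IsDInterval u v → List.Chain Sym v l → l.getLastD v = c →
      ∃ l₂ : List P, List.Chain Sym u l₂ ∧ l₂.getLastD u = c ∧ l₂.length < l.length + 1 := by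
  intro l
  induction l with
  | nil =>
    intro u v huv _ hlast
    exact absurd ⟨u, hlast ▸ huv⟩ hbase
  | cons w' l' ih =>
    intro u v huv hch hlast
    simp only [List.Chain, List.chain_cons] at hch
    rw [List.getLastD_cons] at hlast
    rcases hch.1 with hvw | hwv
    · obtain ⟨l₃, h3c, h3l, h3len⟩ := ih v w' hvw hch.2 hlast
      refine ⟨v :: l₃, List.chain_cons.mpr ⟨Or.inl huv, h3c⟩,
        by rw [List.getLastD_cons]; exact h3l, ?_⟩
      simp only [List.length_cons]
      omega
    · have heq : u = w' := unique_bottom' hP huv hwv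
      refine ⟨l', by rw [heq]; exact hch.2, by rw [heq]; exact hlast, ?_⟩
      simp only [List.length_cons]
      omega

lemma reach_top [Finite P] (hP : IsDComplete P) (c : P) (hbase : ¬ ∃ e : P, IsDInterval e c) :
    ∀ (n : ℕ) (l : List P) (u : P), l.length = n → List.Chain Sym u l → l.getLastD u = c →
      u = c ∨ ∃ e, IsDInterval e u := by
  intro n
  induction n using Nat.strong_induction_on with
  | _ n IHn =>
  intro l u hlen hch hlast
  cases l with
  | nil => exact Or.inl hlast
  | cons v l' =>
    simp only [List.Chain, List.chain_cons] at hch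
    rw [List.getLastD_cons] at hlast
    rcases hch.1 with huv | hvu
    · obtain ⟨l₂, h2c, h2l, h2len⟩ := shorten hP c hbase l' u v huv hch.2 hlast
      refine IHn l₂.length ?_ l₂ u rfl h2c h2l
      rw [← hlen]
      simp only [List.length_cons]
      omega
    · exact Or.inr ⟨v, hvu⟩

lemma class_top [Finite P] (hP : IsDComplete P) {c0 c : P} (hc : DiagRel c0 c)
    (hminP : ∀ y : P, ¬ y < c) :
    ∀ u, DiagRel c0 u → u ≠ c → ∃ e, DiagRel c0 e ∧ IsDInterval e u := by
  have hbase : ¬ ∃ e : P, IsDInterval e c := fun ⟨e, he⟩ => hminP e (ivl_bot_lt_top he)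
  intro u hu hne
  have huc : DiagRel u c :=
    Relation.EqvGen.trans _ _ _ (Relation.EqvGen.symm _ _ hu) hc
  obtain ⟨l, hl, hlast⟩ := rtg_list (eqvGen_rtg huc)
  rcases reach_top hP c hbase l.length l u rfl hl hlast with e | ⟨e, he⟩
  · exact absurd e hne
  · exact ⟨e, Relation.EqvGen.trans _ _ _ hu
      (Relation.EqvGen.symm _ _ (Relation.EqvGen.rel _ _ he)), he⟩

end DCAux
end PartG

section PartH
namespace DCAux
variable {P : Type*} [PartialOrder P]

def AdjC (c0 d : P) : Prop := ∃ c', DiagRel c0 c' ∧ (c' ⋖ d ∨ d ⋖ c')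

lemma diag_step {c0 a b : P} (h : DiagRel c0 a) (hab : IsDInterval a b) : DiagRel c0 b :=
  Relation.EqvGen.trans _ _ _ h (Relation.EqvGen.rel _ _ hab)

lemma diag_step' {c0 a b : P} (h : DiagRel c0 b) (hab : IsDInterval a b) : DiagRel c0 a :=
  Relation.EqvGen.trans _ _ _ h (Relation.EqvGen.symm _ _ (Relation.EqvGen.rel _ _ hab))

lemma transfer_down [Finite P] (hP : IsDComplete P) {c0 c : P} (hc : DiagRel c0 c)
    (hminP : ∀ y : P, ¬ y < c) {x y : P} (hxy : IsDInterval x y)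
    (h : AdjC c0 y) : AdjC c0 x := by
  obtain ⟨k, w, z, hI⟩ := hxy
  obtain ⟨c', hc', hcov⟩ := h
  rcases hcov with hcy | hyc
  · have hmem : c' ∈ Set.Icc x y := hP.2.1 x y ⟨k, w, z, hI⟩ c' hcy
    by_cases hk : 4 ≤ k
    · obtain ⟨t, n, hxt, hny, hsub, _, hcovy, _⟩ := ivl_sub hI hk
      have e : c' = n := hcovy c' hmem hcy
      rw [e] at hc'
      exact ⟨t, diag_step' hc' ⟨k-1, w, z, hsub⟩, Or.inr hxt⟩
    · have hk3 : k = 3 := by have := ivl_k3 hI; omega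
      subst hk3
      obtain ⟨_, hxw, hxz, _, _⟩ := ivl_diamond hI
      rcases ivl3_covby_y hI c' hmem hcy with e | e <;> rw [e] at hc'
      · exact ⟨w, hc', Or.inr hxw⟩
      · exact ⟨z, hc', Or.inr hxz⟩
  · have hnec : c' ≠ c := fun e => hminP y (e ▸ hyc.1)
    obtain ⟨e, heC, ⟨l, w', z', hJ⟩⟩ := class_top hP hc hminP c' hc' hnec
    have hymem : y ∈ Set.Icc e c' := hP.2.1 e c' ⟨l, w', z', hJ⟩ y hyc
    by_cases hl : 4 ≤ l
    · obtain ⟨t', n', het', hn'c, hsub', _, hcovy', _⟩ := ivl_sub hJ hl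
      have ey : y = n' := hcovy' y hymem hyc
      rw [← ey] at hsub'
      have ext : x = t' := unique_bottom hP k (l-1) x t' y w z w' z' hI hsub'
      rw [← ext] at het'
      exact ⟨e, heC, Or.inl het'⟩
    · have hl3 : l = 3 := by have := ivl_k3 hJ; omega
      subst hl3
      obtain ⟨hIccJ, hew', hez', hw'c, hz'c⟩ := ivl_diamond hJ
      have hy' : y = w' ∨ y = z' := by
        rw [hIccJ] at hymem
        simp only [Set.mem_insert_iff, Set.mem_singleton_iff] at hymem
        rcases hymem with e2 | e2 | e2 | e2
        · exfalso; rw [e2] at hyc; exact hyc.2 hew'.1 hw'c.1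
        · exact Or.inl e2
        · exact Or.inr e2
        · exfalso; rw [e2] at hyc; exact lt_irrefl _ hyc.1
      have hey : e ⋖ y := by
        rcases hy' with e2 | e2 <;> rw [e2]
        · exact hew'
        · exact hez'
      have hememb : e ∈ Set.Icc x y := hP.2.1 x y ⟨k, w, z, hI⟩ e hey
      by_cases hk : 4 ≤ k
      · obtain ⟨t, n, hxt, hny, hsub, _, hcovy, _⟩ := ivl_sub hI hk
        have een : e = n := hcovy e hememb hey
        rw [een] at heC
        exact ⟨t, diag_step' heC ⟨k-1, w, z, hsub⟩, Or.inr hxt⟩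
      · have hk3 : k = 3 := by have := ivl_k3 hI; omega
        subst hk3
        obtain ⟨_, hxw, hxz, _, _⟩ := ivl_diamond hI
        rcases ivl3_covby_y hI e hememb hey with e2 | e2 <;> rw [e2] at heC
        · exact ⟨w, heC, Or.inr hxw⟩
        · exact ⟨z, heC, Or.inr hxz⟩

lemma transfer_up [Finite P] (hP : IsDComplete P) {c0 : P} {x y : P}
    (hxy : IsDInterval x y) (h : AdjC c0 x) : AdjC c0 y := by
  obtain ⟨k, w, z, hI⟩ := hxy
  obtain ⟨c', hc', hcov⟩ := h
  have hk3 := ivl_k3 hI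
  rcases hcov with hcx | hxc
  · -- c' ⋖ x
    by_cases hbad : ∃ u, c' ⋖ u ∧ u ≤ y ∧ u ≠ x
    · obtain ⟨u, hcu, huy, hux⟩ := hbad
      obtain ⟨r, hrI, hrIcc⟩ := complete_vee hP hcx hcu (Ne.symm hux)
      have hxr : x ⋖ r := (ivl_diamond hrI).2.2.2.1
      have hcr : DiagRel c0 r := diag_step hc' ⟨3, x, u, hrI⟩
      have hry : r ≤ y := no_escape hP k x y w z r hI hxr
      have hrmem : r ∈ Set.Icc x y := ⟨hxr.1.le, hry⟩
      by_cases hk : 4 ≤ k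
      · obtain ⟨t, n, hxt, hny, hsub, _, _, hcovx⟩ := ivl_sub hI hk
        have ert : r = t := hcovx r hrmem hxr
        rw [ert] at hcr
        exact ⟨n, diag_step hcr ⟨k-1, w, z, hsub⟩, Or.inl hny⟩
      · have hk3' : k = 3 := by omega
        subst hk3'
        obtain ⟨_, _, _, hwy, hzy⟩ := ivl_diamond hI
        rcases ivl3_covby_x hI r hrmem hxr with e | e <;> rw [e] at hcr
        · exact ⟨w, hcr, Or.inl hwy⟩
        · exact ⟨z, hcr, Or.inl hzy⟩
    · -- no bad cover: complete `insert c' (Icc x y)` upwards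
      push_neg at hbad
      have hc'x_le : c' ≤ x := hcx.1.le
      have hnotin : c' ∉ Set.Icc x y := fun hm => absurd hm.1 (not_le_of_gt hcx.1)
      set S : Set P := insert c' (Set.Icc x y) with hSdef
      have hconv : IsConvexSet S := by
        intro a ha b hb m h1 h2
        simp only [hSdef, Set.mem_insert_iff] at ha hb ⊢
        rcases ha with ea | ea
        · rcases eq_or_ne m c' with em | em
          · exact Or.inl em
          · rw [ea] at h1
            have hcm : c' < m := lt_of_le_of_ne h1 (Ne.symm em)
            have hmy : m ≤ y := by
              rcases hb with eb | eb
              · rw [eb] at h2; exact absurd (le_antisymm h2 h1) em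
              · exact h2.trans eb.2
            obtain ⟨u, hcu, hum⟩ := exists_covby_le hcm
            have hux : u = x := by
              by_contra hne2
              exact hne2 (hbad u hcu (hum.trans hmy))
            rw [hux] at hum
            exact Or.inr ⟨hum, hmy⟩
        · rcases hb with eb | eb
          · rw [eb] at h2
            exact absurd ((ea.1.trans h1).trans h2) (not_le_of_gt hcx.1)
          · exact Or.inr ⟨ea.1.trans h1, h2.trans eb.2⟩
      have hTS : {m ∈ S | m ≤ w ∧ m ≤ z}
          = insert c' {m ∈ Set.Icc x y | m ≤ w ∧ m ≤ z} := by
        ext m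
        simp only [hSdef, Set.mem_insert_iff, Set.mem_setOf_eq]
        constructor
        · rintro ⟨ea | ea, hb⟩
          · exact Or.inl ea
          · exact Or.inr ⟨ea, hb⟩
        · rintro (ea | ⟨ea, hb⟩)
          · subst ea
            exact ⟨Or.inl rfl, hc'x_le.trans (ivl_w_mem hI).1, hc'x_le.trans (ivl_z_mem hI).1⟩
          · exact ⟨Or.inr ea, hb⟩
      have hNS : {m ∈ S | w ≤ m ∧ z ≤ m} = {m ∈ Set.Icc x y | w ≤ m ∧ z ≤ m} := by
        ext m
        simp only [hSdef, Set.mem_insert_iff, Set.mem_setOf_eq]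
        constructor
        · rintro ⟨ea | ea, hb⟩
          · exfalso
            subst ea
            exact absurd ((ivl_w_mem hI).1.trans hb.1) (not_le_of_gt hcx.1)
          · exact ⟨ea, hb⟩
        · rintro ⟨ea, hb⟩
          exact ⟨Or.inr ea, hb⟩
      have hc'T : c' ∉ {m ∈ Set.Icc x y | m ≤ w ∧ m ≤ z} := fun hm => hnotin hm.1
      have hstruct : DkStruct (k+1) S w z := by
        refine ⟨by omega, Set.mem_insert_of_mem _ (ivl_w_mem hI),
          Set.mem_insert_of_mem _ (ivl_z_mem hI), ivl_nwz hI, ivl_nzw hI, ?_, ?_, ?_, ?_⟩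
        · intro m hm
          simp only [hSdef, Set.mem_insert_iff] at hm
          rcases hm with ea | ea
          · subst ea
            exact Or.inr (Or.inr (Or.inl ⟨hc'x_le.trans (ivl_w_mem hI).1,
              hc'x_le.trans (ivl_z_mem hI).1⟩))
          · exact ivl_class hI m ea
        · rw [hTS]
          exact (hI.2.1.2.2.2.2.2.2.1).insert (fun b hb _ => Or.inl (hc'x_le.trans hb.1.1))
        · rw [hNS]; exact hI.2.1.2.2.2.2.2.2.2.1
        · rw [hTS, Set.ncard_insert_of_notMem hc'T, ivl_tail_ncard hI]; omega
      have hDkm : IsDkMinusConvex (k+1) S :=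
        ⟨hconv, w, z, hstruct, by rw [hNS, ivl_neck_ncard hI]; omega⟩
      obtain ⟨Y, hYS, a', hIk, hIccY⟩ := hP.1 (k+1) S hDkm
      obtain ⟨w₂, z₂, h₂⟩ := hIk
      have hc'S : c' ∈ S := Set.mem_insert _ _
      have hc'mem : c' ∈ Set.Icc a' Y := by
        rw [hIccY]; exact Set.mem_insert_of_mem _ hc'S
      have ha' : a' = c' := by
        have h1 : a' ∈ Set.Icc a' Y := ⟨le_refl _, h₂.1⟩
        rw [hIccY, Set.mem_insert_iff] at h1
        rcases h1 with e | e
        · exfalso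
          rw [e] at hc'mem
          exact hYS ((le_antisymm hc'mem.2 hc'mem.1) ▸ hc'S)
        · simp only [hSdef, Set.mem_insert_iff] at e
          rcases e with e2 | e2
          · exact e2
          · exact absurd (e2.1.trans hc'mem.1) (not_le_of_gt hcx.1)
      rw [ha'] at h₂ hIccY
      have hymem : y ∈ S :=
        Set.mem_insert_of_mem _ (Set.right_mem_Icc.mpr (ivl_x_lt_y hI).le)
      have hyY : y ⋖ Y := by
        have hyIcc : y ∈ Set.Icc c' Y := by
          rw [hIccY]; exact Set.mem_insert_of_mem _ hymem
        refine ⟨lt_of_le_of_ne hyIcc.2 (fun e => hYS (e ▸ hymem)), ?_⟩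
        intro m hm1 hm2
        have hmmem : m ∈ Set.Icc c' Y := ⟨hyIcc.1.trans hm1.le, hm2.le⟩
        rw [hIccY, Set.mem_insert_iff] at hmmem
        rcases hmmem with e | e
        · rw [e] at hm2; exact lt_irrefl _ hm2
        · simp only [hSdef, Set.mem_insert_iff] at e
          rcases e with e2 | e2
          · rw [e2] at hm1
            exact lt_irrefl y (hm1.trans (lt_of_lt_of_le hcx.1 (ivl_x_lt_y hI).le))
          · exact absurd e2.2 (not_le_of_gt hm1)
      exact ⟨Y, diag_step hc' ⟨k+1, w₂, z₂, h₂⟩, Or.inr hyY⟩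
  · -- x ⋖ c'
    have hcy : c' ≤ y := no_escape hP k x y w z c' hI hxc
    have hmem : c' ∈ Set.Icc x y := ⟨hxc.1.le, hcy⟩
    by_cases hk : 4 ≤ k
    · obtain ⟨t, n, hxt, hny, hsub, _, _, hcovx⟩ := ivl_sub hI hk
      have ect : c' = t := hcovx c' hmem hxc
      rw [ect] at hc'
      exact ⟨n, diag_step hc' ⟨k-1, w, z, hsub⟩, Or.inl hny⟩
    · have hk3' : k = 3 := by omega
      subst hk3'
      obtain ⟨_, _, _, hwy, hzy⟩ := ivl_diamond hI
      rcases ivl3_covby_x hI c' hmem hxc with e | e <;> rw [e] at hc'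
      · exact ⟨w, hc', Or.inl hwy⟩
      · exact ⟨z, hc', Or.inl hzy⟩

end DCAux
end PartH


/-- If `C` and `D` are adjacent diagonals of a d-complete poset and the minimal
element of `C` is minimal in `P`, then every element of `D` is adjacent to some
element of `C`. -/
theorem adjacent_diagonal_all_adjacent {P : Type*} [PartialOrder P] [Fintype P]
    (hP : IsDComplete P) (c0 d0 : P)
    (hadj : ∃ c, DiagRel c0 c ∧ ∃ d, DiagRel d0 d ∧ (c ⋖ d ∨ d ⋖ c))
    (c : P) (hc : DiagRel c0 c) (hcmin : ∀ x, DiagRel c0 x → c ≤ x)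
    (hminP : ∀ y : P, ¬ y < c) :
    ∀ d, DiagRel d0 d → ∃ c', DiagRel c0 c' ∧ (c' ⋖ d ∨ d ⋖ c') := by 
  obtain ⟨c1, hc1, d1, hd1, hcd⟩ := hadj
  have hAdj1 : DCAux.AdjC c0 d1 := ⟨c1, hc1, hcd⟩
  have hiff : ∀ a b : P, DiagRel a b → (DCAux.AdjC c0 a ↔ DCAux.AdjC c0 b) := by
    intro a b h
    induction h with
    | rel p q hpq =>
      exact ⟨fun ha => DCAux.transfer_up hP hpq ha,
        fun hb => DCAux.transfer_down hP hc hminP hpq hb⟩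
    | refl p => exact Iff.rfl
    | symm p q _ ih => exact ih.symm
    | trans p q r _ _ ih1 ih2 => exact ih1.trans ih2
  intro d hd
  have hdd : DiagRel d1 d :=
    Relation.EqvGen.trans _ _ _ (Relation.EqvGen.symm _ _ hd1) hd
  exact (hiff d1 d hdd).mp hAdj1
end
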